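/- arXiv:2311.14664 — 11 statements merged into one kernel-verified Lean document; each statement's English description precedes it below -/
import Mathlib

section
/- Let Z_1, …, Z_k be mutually independent nonnegative random variables on a probability space. Let (Y_n)_{n∈ℕ} be nonnegative random variables, each independent of (Z_1, …, Z_k), with finite positive means μ_n := E[Y_n] such that (μ_n) is non-increasing, μ_n → 0 as n → ∞, and for some constant c ∈ (0,∞), limsup_{n→∞} E[exp((c/μ_n)·Y_n)] < ∞. Suppose further that for each n ∈ ℕ, A_n is a nonnegative random variable independent of (Z_1, …, Z_k) that is stochastically dominated by Y_n, i.e. P(A_n > a) ≤ P(Y_n > a) for every a ∈ ℝ. Then there exist n₀ ∈ ℕ and a constant C > 0 such that for all n ≥ n₀: P(Z_1 + ⋯ + Z_k ≤ A_n) ≤ P(Z_1 + ⋯ + Z_k ≤ Y_n) ≤ C · ∏_{i=1}^{k} E[exp(−(c/μ_n)·Z_i)]. -/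
open MeasureTheory ProbabilityTheory Filter

/-- Stochastic domination with strict tails implies domination with weak tails. -/
lemma aux_dom_ge {Ω : Type*} [MeasureSpace Ω] [IsProbabilityMeasure (ℙ : Measure Ω)]
    (A Y : Ω → ℝ) (hY : Measurable Y)
    (h : ∀ a : ℝ, ℙ {ω | a < A ω} ≤ ℙ {ω | a < Y ω}) (s : ℝ) :
    ℙ {ω | s ≤ A ω} ≤ ℙ {ω | s ≤ Y ω} := by
  have key : Tendsto (fun m : ℕ => ℙ {ω | s - 1/(m+1) < Y ω}) atTop
      (nhds (ℙ {ω | s ≤ Y ω})) := by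
    have hset : {ω | s ≤ Y ω} = ⋂ m : ℕ, {ω | s - 1/(m+1) < Y ω} := by
      ext ω
      simp only [Set.mem_setOf_eq, Set.mem_iInter]
      constructor
      · intro hs m
        have : (0:ℝ) < 1/(m+1) := by positivity
        linarith
      · intro hm
        by_contra hlt
        push_neg at hlt
        obtain ⟨m, hm'⟩ := exists_nat_one_div_lt (by linarith : (0:ℝ) < s - Y ω)
        have := hm m
        linarith
    rw [hset]
    apply tendsto_measure_iInter_atTop
    · intro m
      exact (measurableSet_lt measurable_const hY).nullMeasurableSet
    · intro m n hmn ω hω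
      simp only [Set.mem_setOf_eq] at hω ⊢
      have h1 : (1:ℝ)/(n+1) ≤ 1/(m+1) := by
        apply div_le_div_of_nonneg_left one_pos.le (by positivity)
        exact_mod_cast by omega
      linarith
    · exact ⟨0, measure_ne_top _ _⟩
  refine ge_of_tendsto key ?_
  filter_upwards with m
  refine le_trans (measure_mono ?_) (h _)
  intro ω hω
  simp only [Set.mem_setOf_eq] at hω ⊢
  have : (0:ℝ) < 1/(m+1) := by positivity
  linarith

/-- Exponential with nonpositive exponent is integrable. -/
lemma aux_int_exp {Ω : Type*} [MeasureSpace Ω] [IsProbabilityMeasure (ℙ : Measure Ω)]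
    (X : Ω → ℝ) (hX : Measurable X) (hXn : ∀ ω, 0 ≤ X ω) (t : ℝ) (ht : t ≤ 0) :
    Integrable (fun ω => Real.exp (t * X ω)) ℙ := by
  refine Integrable.mono' (integrable_const 1) ((hX.const_mul t).exp.aestronglyMeasurable) ?_
  filter_upwards with ω
  rw [Real.norm_eq_abs, abs_of_pos (Real.exp_pos _)]
  exact Real.exp_le_one_iff.mpr (by nlinarith [hXn ω])

/-- For independent random variables, `ℙ(S ≤ W)` disintegrates over the law of `S`. -/
lemma aux_prob_le {Ω : Type*} [MeasureSpace Ω] [IsProbabilityMeasure (ℙ : Measure Ω)]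
    (S W : Ω → ℝ) (hS : Measurable S) (hW : Measurable W) (hSW : IndepFun S W ℙ) :
    ℙ {ω | S ω ≤ W ω} = ∫⁻ s, ℙ {ω | s ≤ W ω} ∂(Measure.map S ℙ) := by
  haveI := Measure.isProbabilityMeasure_map (μ := ℙ) hW.aemeasurable
  have hmap := (ProbabilityTheory.indepFun_iff_map_prod_eq_prod_map_map
    hS.aemeasurable hW.aemeasurable).mp hSW
  have hmeasset : MeasurableSet {p : ℝ × ℝ | p.1 ≤ p.2} :=
    measurableSet_le measurable_fst measurable_snd
  calc ℙ {ω | S ω ≤ W ω}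
      = Measure.map (fun ω => (S ω, W ω)) ℙ {p | p.1 ≤ p.2} := by
        rw [Measure.map_apply (hS.prodMk hW) hmeasset]; rfl
    _ = ((Measure.map S ℙ).prod (Measure.map W ℙ)) {p | p.1 ≤ p.2} := by rw [hmap]
    _ = ∫⁻ s, (Measure.map W ℙ) {a | s ≤ a} ∂(Measure.map S ℙ) := by
        rw [Measure.prod_apply hmeasset]; rfl
    _ = ∫⁻ s, ℙ {ω | s ≤ W ω} ∂(Measure.map S ℙ) := by
        apply lintegral_congr
        intro s
        rw [Measure.map_apply hW (by exact measurableSet_Ici : MeasurableSet {a : ℝ | s ≤ a})]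
        rfl

/-- **Lemma 4.1.** Let `Z 1, …, Z k` be mutually independent nonnegative random variables,
`(Y n)` nonnegative random variables each independent of the vector `Z`, with finite positive
means `μ n` that are non-increasing and tend to `0`, and suppose the moment generating
functions `E[exp((c/μ n)·Y n)]` have finite limsup for some `c > 0`. If `A n` is nonnegative,
independent of `Z`, and stochastically dominated by `Y n`, then there are `n₀` and `C > 0`
such that for all `n ≥ n₀`,
`P(∑ Z ≤ A n) ≤ P(∑ Z ≤ Y n) ≤ C · ∏ i, E[exp(−(c/μ n)·Z i)]`. -/
theorem stmt_0
    {Ω : Type*} [MeasureSpace Ω] [IsProbabilityMeasure (ℙ : Measure Ω)]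
    (k : ℕ) (Z : Fin k → Ω → ℝ) (hZmeas : ∀ i, Measurable (Z i))
    (hZnonneg : ∀ i ω, 0 ≤ Z i ω)
    (hZindep : iIndepFun Z ℙ)
    (Y : ℕ → Ω → ℝ) (hYmeas : ∀ n, Measurable (Y n))
    (hYnonneg : ∀ n ω, 0 ≤ Y n ω)
    (hYindep : ∀ n, IndepFun (fun ω i => Z i ω) (Y n) ℙ)
    (hYint : ∀ n, Integrable (Y n) ℙ)
    (μ : ℕ → ℝ) (hμdef : ∀ n, μ n = ∫ ω, Y n ω ∂ℙ)
    (hμpos : ∀ n, 0 < μ n) (hμanti : Antitone μ)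
    (hμlim : Tendsto μ atTop (nhds 0))
    (c : ℝ) (hc : 0 < c)
    (hmgf : limsup (fun n => ∫⁻ ω, ENNReal.ofReal (Real.exp ((c / μ n) * Y n ω)) ∂ℙ) atTop
      < ⊤)
    (A : ℕ → Ω → ℝ) (hAmeas : ∀ n, Measurable (A n)) (hAnonneg : ∀ n ω, 0 ≤ A n ω)
    (hAindep : ∀ n, IndepFun (fun ω i => Z i ω) (A n) ℙ)
    (hdom : ∀ n, ∀ a : ℝ, ℙ {ω | a < A n ω} ≤ ℙ {ω | a < Y n ω}) :
    ∃ n₀ : ℕ, ∃ C : ℝ, 0 < C ∧ ∀ n, n₀ ≤ n →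
      ℙ {ω | ∑ i, Z i ω ≤ A n ω} ≤ ℙ {ω | ∑ i, Z i ω ≤ Y n ω} ∧
      ℙ {ω | ∑ i, Z i ω ≤ Y n ω} ≤
        ENNReal.ofReal C *
          ∏ i, ∫⁻ ω, ENNReal.ofReal (Real.exp (-(c / μ n) * Z i ω)) ∂ℙ := by
  classical
  set L := limsup (fun n => ∫⁻ ω, ENNReal.ofReal (Real.exp ((c / μ n) * Y n ω)) ∂ℙ) atTop
    with hLdef
  have hM : L + 1 < ⊤ := ENNReal.add_lt_top.mpr ⟨hmgf, ENNReal.one_lt_top⟩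
  have hev : ∀ᶠ n in atTop,
      (∫⁻ ω, ENNReal.ofReal (Real.exp ((c / μ n) * Y n ω)) ∂ℙ) < L + 1 :=
    eventually_lt_of_limsup_lt (ENNReal.lt_add_right hmgf.ne one_ne_zero)
  obtain ⟨n₀, hn₀⟩ := eventually_atTop.mp hev
  refine ⟨n₀, (L + 1).toReal, ?_, ?_⟩
  · refine ENNReal.toReal_pos ?_ hM.ne
    simp
  intro n hn
  have hE := hn₀ n hn
  set t := c / μ n with htdef
  have htpos : 0 < t := div_pos hc (hμpos n)
  set S : Ω → ℝ := fun ω => ∑ i, Z i ω with hSdef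
  have hS : Measurable S := Finset.measurable_sum _ (fun i _ => hZmeas i)
  have hSnonneg : ∀ ω, 0 ≤ S ω := fun ω => Finset.sum_nonneg fun i _ => hZnonneg i ω
  have hgmeas : Measurable (fun v : Fin k → ℝ => ∑ i, v i) :=
    Finset.measurable_sum _ (fun i _ => measurable_pi_apply i)
  have hSA : IndepFun S (A n) ℙ := (hAindep n).comp hgmeas measurable_id
  have hSY : IndepFun S (Y n) ℙ := (hYindep n).comp hgmeas measurable_id
  have first : ℙ {ω | S ω ≤ A n ω} ≤ ℙ {ω | S ω ≤ Y n ω} := by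
    rw [aux_prob_le S (A n) hS (hAmeas n) hSA, aux_prob_le S (Y n) hS (hYmeas n) hSY]
    exact lintegral_mono fun s => aux_dom_ge (A n) (Y n) (hYmeas n) (hdom n) s
  refine ⟨first, ?_⟩
  -- The Chernoff-type bound
  have hfY : Measurable (fun ω => ENNReal.ofReal (Real.exp (t * Y n ω))) :=
    ((hYmeas n).const_mul t).exp.ennreal_ofReal
  have hfS : Measurable (fun ω => ENNReal.ofReal (Real.exp (-t * S ω))) :=
    (hS.const_mul (-t)).exp.ennreal_ofReal
  have key1 : ℙ {ω | S ω ≤ Y n ω} ≤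
      ∫⁻ ω, ENNReal.ofReal (Real.exp (t * Y n ω)) * ENNReal.ofReal (Real.exp (-t * S ω)) ∂ℙ := by
    have hsub : {ω | S ω ≤ Y n ω} ⊆
        {ω | 1 ≤ ENNReal.ofReal (Real.exp (t * Y n ω)) * ENNReal.ofReal (Real.exp (-t * S ω))} := by
      intro ω hω
      simp only [Set.mem_setOf_eq] at hω ⊢
      rw [← ENNReal.ofReal_mul (Real.exp_nonneg _), ← Real.exp_add]
      refine ENNReal.one_le_ofReal.mpr (Real.one_le_exp ?_)
      nlinarith
    calc ℙ {ω | S ω ≤ Y n ω} ≤ ℙ {ω | 1 ≤ ENNReal.ofReal (Real.exp (t * Y n ω)) *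
          ENNReal.ofReal (Real.exp (-t * S ω))} := measure_mono hsub
      _ ≤ ∫⁻ ω, ENNReal.ofReal (Real.exp (t * Y n ω)) *
          ENNReal.ofReal (Real.exp (-t * S ω)) ∂ℙ := by
          simpa using mul_meas_ge_le_lintegral₀ (hfY.mul hfS).aemeasurable 1
  have hindep2 : IndepFun (fun ω => ENNReal.ofReal (Real.exp (t * Y n ω)))
      (fun ω => ENNReal.ofReal (Real.exp (-t * S ω))) ℙ := by
    have := (hSY.symm).comp
      (φ := fun y : ℝ => ENNReal.ofReal (Real.exp (t * y)))
      (ψ := fun s : ℝ => ENNReal.ofReal (Real.exp (-t * s)))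
      ((measurable_id.const_mul t).exp.ennreal_ofReal)
      ((measurable_id.const_mul (-t)).exp.ennreal_ofReal)
    exact this
  have key2 : ∫⁻ ω, ENNReal.ofReal (Real.exp (t * Y n ω)) *
        ENNReal.ofReal (Real.exp (-t * S ω)) ∂ℙ =
      (∫⁻ ω, ENNReal.ofReal (Real.exp (t * Y n ω)) ∂ℙ) *
        ∫⁻ ω, ENNReal.ofReal (Real.exp (-t * S ω)) ∂ℙ :=
    lintegral_mul_eq_lintegral_mul_lintegral_of_indepFun'' hfY.aemeasurable hfS.aemeasurable hindep2
  have hIntS : Integrable (fun ω => Real.exp (-t * S ω)) ℙ :=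
    aux_int_exp S hS hSnonneg (-t) (by linarith)
  have hIntZ : ∀ i, Integrable (fun ω => Real.exp (-t * Z i ω)) ℙ := fun i =>
    aux_int_exp (Z i) (hZmeas i) (hZnonneg i) (-t) (by linarith)
  have key3 : ∫⁻ ω, ENNReal.ofReal (Real.exp (-t * S ω)) ∂ℙ =
      ∏ i, ∫⁻ ω, ENNReal.ofReal (Real.exp (-t * Z i ω)) ∂ℙ := by
    have hmgfsum := hZindep.mgf_sum hZmeas Finset.univ (t := -t)
    calc ∫⁻ ω, ENNReal.ofReal (Real.exp (-t * S ω)) ∂ℙ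
        = ENNReal.ofReal (∫ ω, Real.exp (-t * S ω) ∂ℙ) :=
          (ofReal_integral_eq_lintegral_ofReal hIntS
            (Filter.Eventually.of_forall fun ω => (Real.exp_pos _).le)).symm
      _ = ENNReal.ofReal (mgf (∑ i ∈ Finset.univ, Z i) ℙ (-t)) := by
          congr 1
          simp [mgf, hSdef, Finset.sum_apply]
      _ = ENNReal.ofReal (∏ i, mgf (Z i) ℙ (-t)) := by rw [hmgfsum]
      _ = ∏ i, ENNReal.ofReal (mgf (Z i) ℙ (-t)) :=
          ENNReal.ofReal_prod_of_nonneg fun i _ => mgf_nonneg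
      _ = ∏ i, ∫⁻ ω, ENNReal.ofReal (Real.exp (-t * Z i ω)) ∂ℙ := by
          refine Finset.prod_congr rfl fun i _ => ?_
          exact ofReal_integral_eq_lintegral_ofReal (hIntZ i)
            (Filter.Eventually.of_forall fun ω => (Real.exp_pos _).le)
  calc ℙ {ω | S ω ≤ Y n ω}
      ≤ (∫⁻ ω, ENNReal.ofReal (Real.exp (t * Y n ω)) ∂ℙ) *
        ∫⁻ ω, ENNReal.ofReal (Real.exp (-t * S ω)) ∂ℙ := key1.trans key2.le
    _ ≤ (L + 1) * ∫⁻ ω, ENNReal.ofReal (Real.exp (-t * S ω)) ∂ℙ :=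
        mul_le_mul_left hE.le _
    _ = ENNReal.ofReal (L + 1).toReal * ∏ i, ∫⁻ ω, ENNReal.ofReal (Real.exp (-t * Z i ω)) ∂ℙ := by
        rw [key3, ENNReal.ofReal_toReal hM.ne]
end

section
/- Let (X_i)_{i∈ℕ} be mutually independent nonnegative random variables, fix ε > 0, let n ≥ 2 be an integer, and let b > 0. Then P(∑_{i=1}^∞ X_i < b) ≥ ∏_{i=1}^∞ E[exp(−((1+ε)·log(n)/b)·X_i)] − n^{−(1+ε)}, where the infinite sum ∑_{i=1}^∞ X_i is taken in [0,∞], and the infinite product is the limit of the partial products (each factor lies in (0,1], so the limit exists in [0,1] and equals E[exp(−((1+ε)·log(n)/b)·∑_{i=1}^∞ X_i)]). -/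
open MeasureTheory ProbabilityTheory Filter

/-- **Lemma 5.1.** For mutually independent nonnegative random variables `(X i)`, `ε > 0`,
`n ≥ 2` and `b > 0`,
`P(∑ X < b) ≥ ∏_{i} E[exp(−((1+ε)·log(n)/b)·X i)] − n^{−(1+ε)}`,
where the infinite sum is taken in `[0,∞]` and the infinite product is the limit (infimum)
of the partial products, each factor lying in `(0,1]`. -/
theorem stmt_1
    {Ω : Type*} [MeasureSpace Ω] [IsProbabilityMeasure (ℙ : Measure Ω)]
    (X : ℕ → Ω → ℝ) (hmeas : ∀ i, Measurable (X i)) (hnonneg : ∀ i ω, 0 ≤ X i ω)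
    (hindep : iIndepFun X ℙ)
    (ε : ℝ) (hε : 0 < ε) (n : ℕ) (hn : 2 ≤ n) (b : ℝ) (hb : 0 < b) :
    (ℙ {ω | (∑' i : ℕ, ENNReal.ofReal (X i ω)) < ENNReal.ofReal b}).toReal ≥
      (⨅ N : ℕ, ∏ i ∈ Finset.range N,
        ∫ ω, Real.exp (-((1 + ε) * Real.log n / b) * X i ω) ∂ℙ)
        - (n : ℝ) ^ (-(1 + ε)) := by
  have hn1 : (1 : ℝ) < n := by exact_mod_cast lt_of_lt_of_le one_lt_two hn
  have hlogn : 0 < Real.log n := Real.log_pos hn1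
  set lam : ℝ := (1 + ε) * Real.log n / b with hlam_def
  have hlam : 0 < lam := div_pos (mul_pos (by linarith) hlogn) hb
  set T : Ω → ENNReal := fun ω => ∑' i, ENNReal.ofReal (X i ω) with hT
  have hTmeas : Measurable T :=
    Measurable.ennreal_tsum fun i => (hmeas i).ennreal_ofReal
  set S : Set Ω := {ω | T ω < ENNReal.ofReal b} with hS
  have hSmeas : MeasurableSet S := measurableSet_lt hTmeas measurable_const
  set c : ℝ := Real.exp (-lam * b) with hc
  set a : ℕ → ℝ := fun N => ∏ i ∈ Finset.range N,
    ∫ ω, Real.exp (-lam * X i ω) ∂ℙ with ha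
  -- each factor lies in [0,1]
  have hint : ∀ i : ℕ, Integrable (fun ω => Real.exp (-lam * X i ω)) ℙ := by
    intro i
    refine Integrable.mono' (integrable_const 1)
      (((hmeas i).const_mul _).exp.aestronglyMeasurable) ?_
    filter_upwards with ω
    rw [Real.norm_eq_abs, abs_of_pos (Real.exp_pos _)]
    exact Real.exp_le_one_iff.2 (mul_nonpos_of_nonpos_of_nonneg (by linarith) (hnonneg i ω))
  have hfac_nonneg : ∀ i : ℕ, 0 ≤ ∫ ω, Real.exp (-lam * X i ω) ∂ℙ := fun i =>
    integral_nonneg fun ω => (Real.exp_pos _).le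
  have hfac_le_one : ∀ i : ℕ, ∫ ω, Real.exp (-lam * X i ω) ∂ℙ ≤ 1 := by
    intro i
    calc ∫ ω, Real.exp (-lam * X i ω) ∂ℙ
        ≤ ∫ _ω : Ω, (1 : ℝ) ∂ℙ := by
          refine integral_mono (hint i) (integrable_const 1) fun ω => ?_
          exact Real.exp_le_one_iff.2
            (mul_nonpos_of_nonpos_of_nonneg (by linarith) (hnonneg i ω))
      _ = 1 := by simp
  have ha_nonneg : ∀ N, 0 ≤ a N := fun N =>
    Finset.prod_nonneg fun i _ => hfac_nonneg i
  have ha_anti : Antitone a := by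
    refine antitone_nat_of_succ_le fun N => ?_
    have : a (N + 1) = a N * ∫ ω, Real.exp (-lam * X N ω) ∂ℙ := by
      simp [ha, Finset.prod_range_succ]
    rw [this]
    calc a N * ∫ ω, Real.exp (-lam * X N ω) ∂ℙ
        ≤ a N * 1 := mul_le_mul_of_nonneg_left (hfac_le_one N) (ha_nonneg N)
      _ = a N := mul_one _
  -- a N is the integral of exp of the partial sum, by independence
  have ha_eq : ∀ N : ℕ, a N = ∫ ω, Real.exp (-lam * ∑ i ∈ Finset.range N, X i ω) ∂ℙ := by
    intro N
    have := (hindep.mgf_sum hmeas (Finset.range N) (t := -lam)).symm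
    simp only [mgf, Finset.sum_apply] at this
    exact this
  -- the limit function g
  set g : Ω → ℝ := fun ω => if T ω = ⊤ then 0 else Real.exp (-lam * (T ω).toReal) with hg
  have hg_meas : Measurable g := by
    refine Measurable.ite (hTmeas (measurableSet_singleton ⊤)) measurable_const ?_
    exact Real.continuous_exp.measurable.comp
      ((ENNReal.measurable_toReal.comp hTmeas).const_mul _)
  have hg_nonneg : ∀ ω, 0 ≤ g ω := by
    intro ω; by_cases h : T ω = ⊤ <;> simp [hg, h, (Real.exp_pos _).le]
  -- pointwise convergence
  have h_tendsto : ∀ ω, Tendsto (fun N => Real.exp (-lam * ∑ i ∈ Finset.range N, X i ω))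
      atTop (nhds (g ω)) := by
    intro ω
    by_cases hfin : T ω = ⊤
    · -- partial sums tend to infinity
      have hns : ¬ Summable fun i => X i ω := by
        intro hsum
        have := ENNReal.ofReal_tsum_of_nonneg (fun i => hnonneg i ω) hsum
        rw [hT] at hfin
        simp only [← this] at hfin
        exact ENNReal.ofReal_ne_top hfin
      have hps : Tendsto (fun N => ∑ i ∈ Finset.range N, X i ω) atTop atTop :=
        (not_summable_iff_tendsto_nat_atTop_of_nonneg (fun i => hnonneg i ω)).1 hns
      have harg : Tendsto (fun N => -lam * ∑ i ∈ Finset.range N, X i ω) atTop atBot := by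
        have := hps.const_mul_atTop hlam
        have h2 : Tendsto (fun N => -(lam * ∑ i ∈ Finset.range N, X i ω)) atTop atBot :=
          tendsto_neg_atTop_atBot.comp this
        simpa [neg_mul] using h2
      have : Tendsto (fun N => Real.exp (-lam * ∑ i ∈ Finset.range N, X i ω))
          atTop (nhds 0) := Real.tendsto_exp_atBot.comp harg
      simpa [hg, hfin] using this
    · have hsum : Summable fun i => X i ω := by
        have := ENNReal.summable_toReal (f := fun i => ENNReal.ofReal (X i ω)) hfin
        simpa [ENNReal.toReal_ofReal (hnonneg _ ω)] using this
      have h1 : Tendsto (fun N => ∑ i ∈ Finset.range N, X i ω) atTop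
          (nhds (∑' i, X i ω)) := hsum.hasSum.tendsto_sum_nat
      have h2 : (T ω).toReal = ∑' i, X i ω := by
        rw [hT]
        rw [ENNReal.tsum_toReal_eq fun i => ENNReal.ofReal_ne_top]
        simp [ENNReal.toReal_ofReal (hnonneg _ ω)]
      have h3 : Tendsto (fun N => Real.exp (-lam * ∑ i ∈ Finset.range N, X i ω))
          atTop (nhds (Real.exp (-lam * ∑' i, X i ω))) :=
        (Real.continuous_exp.tendsto _).comp ((h1.const_mul (-lam)))
      simpa [hg, hfin, h2] using h3
  -- dominated convergence
  have h_int_tendsto : Tendsto a atTop (nhds (∫ ω, g ω ∂ℙ)) := by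
    have hdct : Tendsto (fun N => ∫ ω, Real.exp (-lam * ∑ i ∈ Finset.range N, X i ω) ∂ℙ)
        atTop (nhds (∫ ω, g ω ∂ℙ)) := by
      refine tendsto_integral_of_dominated_convergence (fun _ => (1 : ℝ)) ?_ (integrable_const 1)
        ?_ ?_
      · intro N
        exact (((Finset.measurable_sum _ fun i _ => hmeas i).const_mul
          (-lam)).exp).aestronglyMeasurable
      · intro N
        filter_upwards with ω
        rw [Real.norm_eq_abs, abs_of_pos (Real.exp_pos _)]
        exact Real.exp_le_one_iff.2 (mul_nonpos_of_nonpos_of_nonneg (by linarith)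
          (Finset.sum_nonneg fun i _ => hnonneg i ω))
      · filter_upwards with ω using h_tendsto ω
    have : a = fun N => ∫ ω, Real.exp (-lam * ∑ i ∈ Finset.range N, X i ω) ∂ℙ :=
      funext ha_eq
    rw [this]
    exact hdct
  -- the infimum equals the integral of g
  have h_iInf : (⨅ N : ℕ, a N) = ∫ ω, g ω ∂ℙ := by
    have h1 : Tendsto a atTop (nhds (⨅ N, a N)) :=
      tendsto_atTop_ciInf ha_anti ⟨0, fun x ⟨N, hN⟩ => hN ▸ ha_nonneg N⟩
    exact tendsto_nhds_unique h1 h_int_tendsto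
  -- bound ∫ g ≤ P(S) + c
  have hg_int : Integrable g ℙ := by
    refine Integrable.mono' (integrable_const 1) hg_meas.aestronglyMeasurable ?_
    filter_upwards with ω
    rw [Real.norm_eq_abs, abs_of_nonneg (hg_nonneg ω)]
    by_cases h : T ω = ⊤
    · simp [hg, h]
    · simp only [hg, h, if_false]
      exact Real.exp_le_one_iff.2
        (mul_nonpos_of_nonpos_of_nonneg (by linarith) ENNReal.toReal_nonneg)
  have h_bound : ∫ ω, g ω ∂ℙ ≤ (ℙ S).toReal + c := by
    have hrhs_int : Integrable (fun ω => S.indicator (fun _ => (1 : ℝ)) ω + c) ℙ :=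
      ((integrable_const (1 : ℝ)).indicator hSmeas).add (integrable_const c)
    have hptwise : ∀ ω, g ω ≤ S.indicator (fun _ => (1 : ℝ)) ω + c := by
      intro ω
      by_cases hfin : T ω = ⊤
      · have hnotS : ω ∉ S := by
          simp [hS, hfin]
        simp only [hg, hfin, if_true, Set.indicator_of_notMem hnotS, zero_add]
        exact (Real.exp_pos _).le
      · simp only [hg, hfin, if_false]
        by_cases hωS : ω ∈ S
        · rw [Set.indicator_of_mem hωS]
          have : Real.exp (-lam * (T ω).toReal) ≤ 1 :=
            Real.exp_le_one_iff.2
              (mul_nonpos_of_nonpos_of_nonneg (by linarith) ENNReal.toReal_nonneg)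
          have hc0 : 0 ≤ c := (Real.exp_pos _).le
          linarith
        · rw [Set.indicator_of_notMem hωS, zero_add]
          have hble : ENNReal.ofReal b ≤ T ω := not_lt.1 hωS
          have hb_le : b ≤ (T ω).toReal :=
            (ENNReal.ofReal_le_iff_le_toReal hfin).1 hble
          rw [hc]
          exact Real.exp_le_exp.2 (by nlinarith)
    calc ∫ ω, g ω ∂ℙ
        ≤ ∫ ω, (S.indicator (fun _ => (1 : ℝ)) ω + c) ∂ℙ :=
          integral_mono hg_int hrhs_int hptwise
      _ = (ℙ S).toReal + c := by
          rw [integral_add ((integrable_const (1 : ℝ)).indicator hSmeas) (integrable_const c),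
            integral_indicator_const _ hSmeas]
          simp [smul_eq_mul]
          rfl
  -- identify c with n ^ (-(1+ε))
  have hc_eq : c = (n : ℝ) ^ (-(1 + ε)) := by
    rw [hc, Real.rpow_def_of_pos (by positivity : (0 : ℝ) < (n : ℝ))]
    congr 1
    rw [hlam_def]
    field_simp
  rw [ge_iff_le, sub_le_iff_le_add, h_iInf, ← hc_eq]
  exact h_bound
end

section
/- Let k ∈ ℕ₀ and let Z_0, Z_1, …, Z_k be mutually independent random variables with Z_j exponentially distributed with rate r_j > 0 for each j ∈ {0, …, k}. Then for every λ > 0: P(Z_0 + Z_1 + ⋯ + Z_k ≤ λ) ≥ ∏_{j=0}^{k} r_j / (r_j + (k+1)/λ). -/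
open MeasureTheory ProbabilityTheory Filter

lemma aux_div_le_one_sub_exp {x : ℝ} (hx : 0 ≤ x) :
    x / (1 + x) ≤ 1 - Real.exp (-x) := by
  have h1x : 0 < 1 + x := by linarith
  have hle : Real.exp (-x) ≤ 1 / (1 + x) := by
    rw [Real.exp_neg, inv_eq_one_div]
    apply div_le_div_of_nonneg_left one_pos.le h1x
    have := Real.add_one_le_exp x
    linarith
  have : 1 - 1 / (1 + x) = x / (1 + x) := by field_simp; ring
  linarith

/-- **Lemma 5.2, first inequality.** For mutually independent exponential random variables
`Z 0, …, Z k` with rates `r 0, …, r k` and any `λ > 0`,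
`P(Z 0 + ⋯ + Z k ≤ λ) ≥ ∏_{j=0}^{k} r j / (r j + (k+1)/λ)`. -/
theorem stmt_2
    {Ω : Type*} [MeasureSpace Ω] [IsProbabilityMeasure (ℙ : Measure Ω)]
    (k : ℕ) (r : Fin (k + 1) → ℝ) (hr : ∀ j, 0 < r j)
    (Z : Fin (k + 1) → Ω → ℝ) (hmeas : ∀ j, Measurable (Z j))
    (hindep : iIndepFun Z ℙ)
    (hlaw : ∀ j, Measure.map (Z j) ℙ = expMeasure (r j))
    (lam : ℝ) (hlam : 0 < lam) :
    ENNReal.ofReal (∏ j, r j / (r j + (k + 1) / lam)) ≤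
      ℙ {ω | ∑ j, Z j ω ≤ lam} := by
  set c : ℝ := lam / (k + 1) with hc
  have hk1 : (0:ℝ) < (k : ℝ) + 1 := by positivity
  have hcpos : 0 < c := div_pos hlam hk1
  -- the intersection event
  have hsub : (⋂ j, Z j ⁻¹' Set.Iic c) ⊆ {ω | ∑ j, Z j ω ≤ lam} := by
    intro ω hω
    have h : ∀ j, Z j ω ≤ c := by
      intro j; exact Set.mem_iInter.mp hω j
    have : ∑ j, Z j ω ≤ ∑ _j : Fin (k+1), c := Finset.sum_le_sum fun j _ => h j
    simp only [Finset.sum_const, Finset.card_univ, Fintype.card_fin, nsmul_eq_mul] at this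
    have hcc : ((k:ℝ) + 1) * c = lam := by
      rw [hc]; field_simp
    simp only [Set.mem_setOf_eq]
    calc ∑ j, Z j ω ≤ ((k:ℝ) + 1) * c := by push_cast at this ⊢; linarith
      _ = lam := hcc
  have hmono : ℙ (⋂ j, Z j ⁻¹' Set.Iic c) ≤ ℙ {ω | ∑ j, Z j ω ≤ lam} := measure_mono hsub
  have hmeasj : ∀ j, ℙ (Z j ⁻¹' Set.Iic c) = ENNReal.ofReal (1 - Real.exp (-(r j * c))) := by
    intro j
    have : ℙ (Z j ⁻¹' Set.Iic c) = Measure.map (Z j) ℙ (Set.Iic c) := by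
      rw [Measure.map_apply (hmeas j) measurableSet_Iic]
    rw [this, hlaw j]
    have hprob : IsProbabilityMeasure (expMeasure (r j)) :=
      isProbabilityMeasure_expMeasure (hr j)
    rw [← ofReal_cdf (expMeasure (r j)) c]
    have : cdf (expMeasure (r j)) c = if 0 ≤ c then 1 - Real.exp (-(r j * c)) else 0 :=
      cdf_expMeasure_eq (hr j) c
    rw [this, if_pos hcpos.le]
  have hindep' : ℙ (⋂ j, Z j ⁻¹' Set.Iic c) = ∏ j, ℙ (Z j ⁻¹' Set.Iic c) :=
    hindep.meas_iInter fun j => ⟨Set.Iic c, measurableSet_Iic, rfl⟩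
  refine le_trans ?_ hmono
  rw [hindep']
  have hnn : ∀ j ∈ Finset.univ, (0:ℝ) ≤ r j / (r j + (k + 1) / lam) := by
    intro j _
    have := hr j
    positivity
  rw [ENNReal.ofReal_prod_of_nonneg hnn]
  apply Finset.prod_le_prod' 
  intro j _
  rw [hmeasj j]
  apply ENNReal.ofReal_le_ofReal
  have hx : 0 ≤ r j * c := mul_nonneg (hr j).le hcpos.le
  refine le_trans ?_ (aux_div_le_one_sub_exp hx)
  have h1c : ((k:ℝ) + 1) / lam = 1 / c := by
    rw [hc, one_div_div]
  have : r j / (r j + (k + 1) / lam) = (r j * c) / (1 + r j * c) := by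
    rw [h1c]
    rw [div_eq_div_iff (add_pos (hr j) (one_div_pos.mpr hcpos)).ne'
      (by nlinarith [hr j, hcpos] : (0:ℝ) < 1 + r j * c).ne']
    field_simp
    ring
  rw [this]
end

section
/- Let k ∈ ℕ₀, let Z_0, …, Z_k be random variables with Z_j exponentially distributed with rate r_j > 0, and let (X_j)_{j∈ℕ} be random variables with X_j exponentially distributed with rate q_j > 0, such that Z_0, …, Z_k, X_1, X_2, … are all mutually independent. Fix i ∈ ℕ and suppose μ_i := ∑_{j=i+1}^∞ 1/q_j < ∞. Then for every c ∈ (0,1): P(Z_0 + ⋯ + Z_k ≤ ∑_{j=i+1}^∞ X_j) ≤ (1/(1−c)) · ∏_{j=0}^{k} r_j / (r_j + c/μ_i). -/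
open MeasureTheory ProbabilityTheory Filter

section AuxStmt3
open Real Set

lemma aux_lintegral_exp_expMeasure {r t : ℝ} (hr : 0 < r) (ht : t < r) :
    ∫⁻ x, ENNReal.ofReal (Real.exp (t * x)) ∂(expMeasure r) = ENNReal.ofReal (r / (r - t)) := by
  have hb : 0 < r - t := by linarith
  have hmf : Measurable (exponentialPDF r) :=
    (measurable_exponentialPDFReal r).ennreal_ofReal
  have hg : Measurable (fun x : ℝ => ENNReal.ofReal (Real.exp (t * x))) :=
    (by fun_prop : Measurable fun x : ℝ => Real.exp (t*x)).ennreal_ofReal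
  rw [show expMeasure r = volume.withDensity (exponentialPDF r) from rfl,
    lintegral_withDensity_eq_lintegral_mul volume hmf hg]
  have heq : ∀ x, (exponentialPDF r * fun x => ENNReal.ofReal (Real.exp (t * x))) x
      = Set.indicator (Ici (0:ℝ)) (fun x => ENNReal.ofReal (r * Real.exp (-((r - t) * x)))) x := by
    intro x
    by_cases hx : 0 ≤ x
    · simp only [Pi.mul_apply, exponentialPDF_of_nonneg hx, Set.indicator_of_mem (mem_Ici.2 hx)]
      rw [← ENNReal.ofReal_mul (by positivity)]
      congr 1
      rw [mul_assoc, ← Real.exp_add]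
      ring_nf
    · simp only [Pi.mul_apply, exponentialPDF_of_neg (lt_of_not_ge hx), zero_mul,
        Set.indicator_of_notMem (show x ∉ Ici (0:ℝ) from hx)]
  rw [lintegral_congr heq, lintegral_indicator measurableSet_Ici _,
    setLIntegral_congr (Ioi_ae_eq_Ici (a := (0:ℝ))).symm]
  have hint : IntegrableOn (fun x => r * Real.exp (-((r - t) * x))) (Ioi (0:ℝ)) := by
    apply Integrable.const_mul
    simpa only [neg_mul, IntegrableOn] using exp_neg_integrableOn_Ioi 0 hb
  rw [← ofReal_integral_eq_lintegral_ofReal hint (ae_of_all _ (fun x => by positivity))]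
  congr 1
  rw [MeasureTheory.integral_const_mul]
  have := integral_rpow_mul_exp_neg_mul_Ioi (zero_lt_one) hb
  simp only [sub_self, Real.rpow_zero, one_mul, Real.Gamma_one, rpow_one, mul_one] at this
  rw [this]
  field_simp

lemma aux_integrable_exp_expMeasure {r t : ℝ} (hr : 0 < r) (ht : t < r) :
    Integrable (fun x => Real.exp (t * x)) (expMeasure r) := by
  have : IsProbabilityMeasure (expMeasure r) := isProbabilityMeasure_expMeasure hr
  constructor
  · exact (by fun_prop : Measurable fun x : ℝ => Real.exp (t*x)).aestronglyMeasurable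
  · rw [hasFiniteIntegral_iff_ofReal (ae_of_all _ (fun x => (Real.exp_pos _).le))]
    rw [aux_lintegral_exp_expMeasure hr ht]
    exact ENNReal.ofReal_lt_top

lemma aux_mgf_expMeasure {Ω : Type*} [MeasureSpace Ω] {W : Ω → ℝ} (hW : Measurable W)
    {r t : ℝ} (hr : 0 < r) (ht : t < r) (hlaw : Measure.map W ℙ = expMeasure r) :
    mgf W ℙ t = r / (r - t) := by
  have h1 : mgf W ℙ t = ∫ x, Real.exp (t * x) ∂(expMeasure r) := by
    rw [mgf, ← hlaw, integral_map hW.aemeasurable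
      (by fun_prop : Measurable fun x : ℝ => Real.exp (t*x)).aestronglyMeasurable]
  rw [h1, integral_eq_lintegral_of_nonneg_ae (ae_of_all _ (fun x => (Real.exp_pos _).le))
    (by fun_prop : Measurable fun x : ℝ => Real.exp (t*x)).aestronglyMeasurable,
    aux_lintegral_exp_expMeasure hr ht, ENNReal.toReal_ofReal (div_nonneg hr.le (by linarith))]

lemma aux_integrable_exp {Ω : Type*} [MeasureSpace Ω] {W : Ω → ℝ} (hW : Measurable W)
    {r t : ℝ} (hr : 0 < r) (ht : t < r) (hlaw : Measure.map W ℙ = expMeasure r) :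
    Integrable (fun ω => Real.exp (t * W ω)) ℙ := by
  have := aux_integrable_exp_expMeasure hr ht (r := r) (t := t)
  rw [← hlaw] at this
  exact (integrable_map_measure (by fun_prop : Measurable fun x : ℝ => Real.exp (t*x)).aestronglyMeasurable
    hW.aemeasurable).mp this

lemma aux_one_sub_sum_le_prod (n : ℕ) (a : ℕ → ℝ) (h0 : ∀ j, 0 ≤ a j) (h1 : ∀ j, a j ≤ 1) :
    1 - ∑ j ∈ Finset.range n, a j ≤ ∏ j ∈ Finset.range n, (1 - a j) := by
  induction n with
  | zero => simp
  | succ n ih =>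
    rw [Finset.sum_range_succ, Finset.prod_range_succ]
    have hs : 0 ≤ ∑ j ∈ Finset.range n, a j := Finset.sum_nonneg fun j _ => h0 j
    have hp : (0:ℝ) ≤ ∏ j ∈ Finset.range n, (1 - a j) :=
      Finset.prod_nonneg fun j _ => by simpa using sub_nonneg.2 (h1 j)
    nlinarith [h0 n, h1 n]

lemma aux_indepFun_sum {Ω : Type*} {ι : Type*} [MeasureSpace Ω]
    {Y : ι → Ω → ℝ} (hindep : iIndepFun Y ℙ)
    (hmeas : ∀ m, Measurable (Y m)) (A B : Finset ι) (hAB : Disjoint A B) :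
    IndepFun (∑ m ∈ A, Y m) (∑ m ∈ B, Y m) ℙ := by
  classical
  have h := hindep.indepFun_finset A B hAB hmeas
  have hφ : Measurable (fun v : (∀ _ : A, ℝ) => ∑ m, v m) :=
    Finset.measurable_sum Finset.univ fun m _ => measurable_pi_apply m
  have hψ : Measurable (fun v : (∀ _ : B, ℝ) => ∑ m, v m) :=
    Finset.measurable_sum Finset.univ fun m _ => measurable_pi_apply m
  have h2 := h.comp hφ hψ
  have e1 : (∑ m ∈ A, Y m) = (fun v : (∀ _ : A, ℝ) => ∑ m, v m) ∘ (fun ω (m : A) => Y m ω) := by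
    funext ω
    rw [Function.comp_apply, Finset.sum_apply]
    exact (Finset.sum_coe_sort A fun m => Y m ω).symm
  have e2 : (∑ m ∈ B, Y m) = (fun v : (∀ _ : B, ℝ) => ∑ m, v m) ∘ (fun ω (m : B) => Y m ω) := by
    funext ω
    rw [Function.comp_apply, Finset.sum_apply]
    exact (Finset.sum_coe_sort B fun m => Y m ω).symm
  rw [e1, e2]
  exact h2

lemma aux_expMeasure_Iio {r : ℝ} : expMeasure r (Set.Iio 0) = 0 := by
  rw [show expMeasure r = (volume : Measure ℝ).withDensity (exponentialPDF r) from rfl,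
    withDensity_apply _ measurableSet_Iio]
  exact lintegral_exponentialPDF_of_nonpos le_rfl

end AuxStmt3

/-- **Lemma 5.2, second inequality.** Let `Z 0, …, Z k` be exponential with rates `r j`,
`(X j)` exponential with rates `q j`, all mutually independent. Fix `i` with
`μ = ∑_{j=i+1}^∞ 1/q j < ∞`. Then for `c ∈ (0,1)`,
`P(Z 0 + ⋯ + Z k ≤ ∑_{j=i+1}^∞ X j) ≤ (1/(1−c)) · ∏_{j=0}^{k} r j/(r j + c/μ)`. -/
theorem stmt_3
    {Ω : Type*} [MeasureSpace Ω] [IsProbabilityMeasure (ℙ : Measure Ω)]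
    (k : ℕ) (r : Fin (k + 1) → ℝ) (hr : ∀ j, 0 < r j)
    (q : ℕ → ℝ) (hq : ∀ j, 0 < q j)
    (Z : Fin (k + 1) → Ω → ℝ) (X : ℕ → Ω → ℝ)
    (hZmeas : ∀ j, Measurable (Z j)) (hXmeas : ∀ j, Measurable (X j))
    (hindep : iIndepFun (Sum.elim Z X) ℙ)
    (hZlaw : ∀ j, Measure.map (Z j) ℙ = expMeasure (r j))
    (hXlaw : ∀ j, Measure.map (X j) ℙ = expMeasure (q j))
    (i : ℕ) (μ : ℝ) (hsum : Summable fun j : ℕ => 1 / q (i + 1 + j))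
    (hμ : μ = ∑' j : ℕ, 1 / q (i + 1 + j))
    (c : ℝ) (hc0 : 0 < c) (hc1 : c < 1) :
    ℙ {ω | ENNReal.ofReal (∑ j, Z j ω) ≤ ∑' j : ℕ, ENNReal.ofReal (X (i + 1 + j) ω)} ≤
      ENNReal.ofReal ((1 / (1 - c)) * ∏ j, r j / (r j + c / μ)) := by
  classical
  have hμ0 : 0 < μ := by
    rw [hμ]
    calc (0:ℝ) < 1 / q (i+1+0) := one_div_pos.2 (hq _)
    _ ≤ ∑' j, 1 / q (i+1+j) := Summable.le_tsum hsum 0 (fun j _ => (one_div_pos.2 (hq _)).le)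
  set θ : ℝ := c / μ with hθdef
  have hθ0 : 0 < θ := div_pos hc0 hμ0
  have hθq : ∀ j : ℕ, θ < q (i+1+j) := by
    intro j
    have h1 : 1 / q (i+1+j) ≤ μ := hμ ▸ Summable.le_tsum hsum j (fun m _ => (one_div_pos.2 (hq _)).le)
    have h2 : 1 / μ ≤ q (i+1+j) := (one_div_le (hq _) hμ0).mp h1
    have h3 : θ < 1 / μ := by
      rw [hθdef, div_lt_div_iff₀ hμ0 hμ0, one_mul]
      nlinarith
    linarith
  set Y : (Fin (k+1) ⊕ ℕ) → Ω → ℝ := Sum.elim Z X with hYdef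
  have hYmeas : ∀ m, Measurable (Y m) := by rintro (j|j); exacts [hZmeas j, hXmeas j]
  set eA : Fin (k+1) ↪ (Fin (k+1) ⊕ ℕ) := ⟨Sum.inl, Sum.inl_injective⟩ with heA
  set A : Finset (Fin (k+1) ⊕ ℕ) := Finset.univ.map eA with hA
  set eB : ℕ ↪ (Fin (k+1) ⊕ ℕ) :=
    ⟨fun j => Sum.inr (i+1+j), fun a b h => by simp only [Sum.inr.injEq] at h; omega⟩ with heB
  set B : ℕ → Finset (Fin (k+1) ⊕ ℕ) := fun n => (Finset.range n).map eB with hB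
  set S : Ω → ℝ := ∑ m ∈ A, Y m with hSdef
  set T : ℕ → Ω → ℝ := fun n => ∑ m ∈ B n, Y m with hTdef
  have hS : ∀ ω, S ω = ∑ j, Z j ω := by
    intro ω
    rw [hSdef, Finset.sum_apply, hA, Finset.sum_map]
    rfl
  have hT : ∀ n ω, T n ω = ∑ j ∈ Finset.range n, X (i+1+j) ω := by
    intro n ω
    rw [hTdef]
    dsimp only
    rw [Finset.sum_apply, hB, Finset.sum_map]
    rfl
  set K : ℝ := (1/(1-c)) * ∏ j, r j / (r j + θ) with hK
  have hprodnn : (0:ℝ) ≤ ∏ j, r j / (r j + θ) :=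
    Finset.prod_nonneg fun j _ => div_nonneg (hr j).le (by linarith [hr j, hθ0])
  -- integrability of each exponential moment
  have hintZ : ∀ j : Fin (k+1), Integrable (fun ω => Real.exp (-θ * Z j ω)) ℙ :=
    fun j => aux_integrable_exp (hZmeas j) (hr j) (by linarith [hr j]) (hZlaw j)
  have hintX : ∀ j : ℕ, Integrable (fun ω => Real.exp (θ * X (i+1+j) ω)) ℙ :=
    fun j => aux_integrable_exp (hXmeas _) (hq _) (hθq j) (hXlaw _)
  -- Chernoff bound for each truncation
  have key : ∀ (n : ℕ) (δ : ℝ), 0 < δ →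
      ℙ {ω | -δ ≤ T n ω - S ω} ≤ ENNReal.ofReal (Real.exp (θ * δ) * K) := by
    intro n δ hδ
    have hAB : Disjoint (B n) A := by
      rw [Finset.disjoint_left]
      rintro m hm hm'
      rw [hB, Finset.mem_map] at hm
      rw [hA, Finset.mem_map] at hm'
      obtain ⟨a, -, rfl⟩ := hm
      obtain ⟨b, -, hb⟩ := hm'
      exact Sum.inl_ne_inr hb
    have hindepTS : IndepFun (T n) S ℙ := aux_indepFun_sum hindep hYmeas (B n) A hAB
    have hindepD : IndepFun (T n) (-S) ℙ := hindepTS.comp measurable_id measurable_neg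
    have hintT : Integrable (fun ω => Real.exp (θ * T n ω)) ℙ := by
      refine hindep.integrable_exp_mul_sum hYmeas (fun m hm => ?_)
      rw [hB, Finset.mem_map] at hm
      obtain ⟨j, -, rfl⟩ := hm
      exact hintX j
    have hintnS : Integrable (fun ω => Real.exp (θ * (-S) ω)) ℙ := by
      have hint' : ∀ m ∈ A, Integrable (fun ω => Real.exp (-θ * Y m ω)) ℙ := by
        intro m hm
        rw [hA, Finset.mem_map] at hm
        obtain ⟨j, -, rfl⟩ := hm
        exact hintZ j
      have h := hindep.integrable_exp_mul_sum (t := -θ) hYmeas (s := A) hint'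
      refine h.congr ?_
      filter_upwards with ω
      congr 1
      simp only [Pi.neg_apply]
      ring
    have hintD : Integrable (fun ω => Real.exp (θ * (T n + (-S)) ω)) ℙ :=
      hindepD.integrable_exp_mul_add hintT hintnS
    have hch := measure_ge_le_exp_mul_mgf (X := T n + (-S)) (μ := ℙ) (-δ) hθ0.le hintD
    -- compute/bound the mgf
    have hmgfS : mgf (-S) ℙ θ = ∏ j, r j / (r j + θ) := by
      rw [mgf_neg, hSdef, hindep.mgf_sum hYmeas A, hA, Finset.prod_map]
      refine Finset.prod_congr rfl fun j _ => ?_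
      have : mgf (Z j) ℙ (-θ) = r j / (r j - (-θ)) :=
        aux_mgf_expMeasure (hZmeas j) (hr j) (by linarith [hr j]) (hZlaw j)
      rw [show Y (eA j) = Z j from rfl, this, sub_neg_eq_add]
    have hmgfT : mgf (T n) ℙ θ ≤ 1/(1-c) := by
      rw [hTdef]
      dsimp only
      rw [hindep.mgf_sum hYmeas (B n), hB, Finset.prod_map]
      have heq : ∀ j ∈ Finset.range n, mgf (Y (eB j)) ℙ θ = q (i+1+j) / (q (i+1+j) - θ) :=
        fun j _ => aux_mgf_expMeasure (hXmeas _) (hq _) (hθq j) (hXlaw _)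
      rw [Finset.prod_congr rfl heq]
      set a : ℕ → ℝ := fun j => θ / q (i+1+j) with ha
      have ha0 : ∀ j, 0 ≤ a j := fun j => div_nonneg hθ0.le (hq _).le
      have ha1 : ∀ j, a j ≤ 1 := fun j => (div_le_one (hq _)).mpr (hθq j).le
      have hsum_le : ∑ j ∈ Finset.range n, a j ≤ c := by
        have h1 : ∑ j ∈ Finset.range n, (1:ℝ) / q (i+1+j) ≤ μ :=
          hμ ▸ Summable.sum_le_tsum (Finset.range n) (fun j _ => (one_div_pos.2 (hq _)).le) hsum
        have : ∑ j ∈ Finset.range n, a j = θ * ∑ j ∈ Finset.range n, (1:ℝ) / q (i+1+j) := by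
          rw [Finset.mul_sum]
          exact Finset.sum_congr rfl fun j _ => by rw [ha]; field_simp
        rw [this, hθdef]
        calc c / μ * ∑ j ∈ Finset.range n, (1:ℝ) / q (i+1+j) ≤ c / μ * μ := by
              apply mul_le_mul_of_nonneg_left h1 (by positivity)
        _ = c := div_mul_cancel₀ c hμ0.ne'
      have hple : 1 - c ≤ ∏ j ∈ Finset.range n, (1 - a j) := by
        calc (1:ℝ) - c ≤ 1 - ∑ j ∈ Finset.range n, a j := by linarith
        _ ≤ ∏ j ∈ Finset.range n, (1 - a j) := aux_one_sub_sum_le_prod n a ha0 ha1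
      have hfac : ∀ j, q (i+1+j) / (q (i+1+j) - θ) = (1 - a j)⁻¹ := by
        intro j
        have hne : q (i+1+j) ≠ 0 := (hq _).ne'
        rw [ha]
        dsimp only
        rw [show (1:ℝ) - θ / q (i+1+j) = (q (i+1+j) - θ) / q (i+1+j) by field_simp, inv_div]
      rw [Finset.prod_congr rfl (fun j _ => hfac j), Finset.prod_inv_distrib, one_div]
      exact inv_anti₀ (by linarith) hple
    have hmgfD : mgf (T n + (-S)) ℙ θ ≤ K := by
      rw [hindepD.mgf_add hintT.aestronglyMeasurable hintnS.aestronglyMeasurable, hmgfS, hK]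
      exact mul_le_mul_of_nonneg_right hmgfT hprodnn
    have hev : {ω | -δ ≤ T n ω - S ω} = {ω | -δ ≤ (T n + (-S)) ω} := by
      ext ω; simp [sub_eq_add_neg]
    rw [hev, ← ENNReal.ofReal_toReal (measure_ne_top ℙ _)]
    apply ENNReal.ofReal_le_ofReal
    refine hch.trans ?_
    rw [neg_mul_neg]
    exact mul_le_mul_of_nonneg_left hmgfD (Real.exp_pos _).le
  -- almost sure nonnegativity of the tail variables
  set Ω₀ : Set Ω := ⋂ j : ℕ, {ω | 0 ≤ X (i+1+j) ω} with hΩ₀def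
  have hΩ₀null : ℙ Ω₀ᶜ = 0 := by
    rw [hΩ₀def, Set.compl_iInter]
    refine measure_iUnion_null fun j => ?_
    have : {ω | 0 ≤ X (i+1+j) ω}ᶜ = X (i+1+j) ⁻¹' Set.Iio 0 := by
      ext ω; simp [not_le]
    rw [this, ← Measure.map_apply (hXmeas _) measurableSet_Iio, hXlaw, aux_expMeasure_Iio]
  -- main bound for each δ
  have main : ∀ δ : ℝ, 0 < δ →
      ℙ {ω | ENNReal.ofReal (∑ j, Z j ω) ≤ ∑' j : ℕ, ENNReal.ofReal (X (i + 1 + j) ω)} ≤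
        ENNReal.ofReal (Real.exp (θ * δ) * K) := by
    intro δ hδ
    set G : ℕ → Set Ω := fun n => {ω | -δ ≤ T n ω - S ω} ∩ Ω₀ with hG
    have hGmono : Monotone G := by
      intro a b hab ω hω
      obtain ⟨h1, h2⟩ := hω
      refine ⟨?_, h2⟩
      have hTle : T a ω ≤ T b ω := by
        rw [hT, hT]
        refine Finset.sum_le_sum_of_subset_of_nonneg
          (Finset.range_subset_range.2 hab) (fun j _ _ => ?_)
        exact Set.mem_iInter.mp h2 j
      simp only [Set.mem_setOf_eq] at h1 ⊢
      linarith
    have hsub : {ω | ENNReal.ofReal (∑ j, Z j ω) ≤ ∑' j : ℕ, ENNReal.ofReal (X (i + 1 + j) ω)}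
        ∩ Ω₀ ⊆ ⋃ n, G n := by
      rintro ω ⟨hm, hω⟩
      have hXnn : ∀ j : ℕ, 0 ≤ X (i+1+j) ω := fun j => Set.mem_iInter.mp hω j
      simp only [Set.mem_setOf_eq] at hm
      set s : ℝ := ∑ j, Z j ω with hs
      have hmem : ∀ n : ℕ, s ≤ T n ω + δ → ω ∈ ⋃ m, G m := by
        intro n hn
        refine Set.mem_iUnion.2 ⟨n, ?_, hω⟩
        simp only [Set.mem_setOf_eq]
        have hSs : S ω = s := hS ω
        linarith
      by_cases hcase : s ≤ δ
      · refine hmem 0 ?_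
        rw [hT]
        simp only [Finset.range_zero, Finset.sum_empty, zero_add]
        exact hcase
      · push_neg at hcase
        have hs0 : 0 < s := lt_trans hδ hcase
        have hlt : ENNReal.ofReal (s - δ) < ∑' j : ℕ, ENNReal.ofReal (X (i + 1 + j) ω) :=
          lt_of_lt_of_le ((ENNReal.ofReal_lt_ofReal_iff hs0).2 (by linarith)) hm
        rw [ENNReal.tsum_eq_iSup_nat, lt_iSup_iff] at hlt
        obtain ⟨n, hn⟩ := hlt
        have hPn : ∑ j ∈ Finset.range n, ENNReal.ofReal (X (i+1+j) ω)
            = ENNReal.ofReal (T n ω) := by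
          rw [hT]
          exact (ENNReal.ofReal_sum_of_nonneg fun j _ => hXnn j).symm
        rw [hPn] at hn
        have : s - δ < T n ω := by
          by_contra hcon
          push_neg at hcon
          exact absurd (ENNReal.ofReal_le_ofReal hcon) hn.not_ge
        exact hmem n (by linarith)
    calc ℙ {ω | ENNReal.ofReal (∑ j, Z j ω) ≤ ∑' j : ℕ, ENNReal.ofReal (X (i + 1 + j) ω)}
        ≤ ℙ ({ω | ENNReal.ofReal (∑ j, Z j ω) ≤ ∑' j : ℕ, ENNReal.ofReal (X (i + 1 + j) ω)}
            ∩ Ω₀) + ℙ Ω₀ᶜ := by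
          conv_lhs => rw [← Set.inter_union_compl {ω | ENNReal.ofReal (∑ j, Z j ω) ≤
            ∑' j : ℕ, ENNReal.ofReal (X (i + 1 + j) ω)} Ω₀]
          exact (measure_union_le _ _).trans
            (add_le_add le_rfl (measure_mono Set.inter_subset_right))
    _ = ℙ ({ω | ENNReal.ofReal (∑ j, Z j ω) ≤ ∑' j : ℕ, ENNReal.ofReal (X (i + 1 + j) ω)}
            ∩ Ω₀) := by rw [hΩ₀null, add_zero]
    _ ≤ ℙ (⋃ n, G n) := measure_mono hsub
    _ = ⨆ n, ℙ (G n) := Directed.measure_iUnion hGmono.directed_le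
    _ ≤ ENNReal.ofReal (Real.exp (θ * δ) * K) :=
        iSup_le fun n => (measure_mono Set.inter_subset_left).trans (key n δ hδ)
  -- let δ → 0
  have hlim : Tendsto (fun m : ℕ => ENNReal.ofReal (Real.exp (θ * (1/(m+1))) * K)) atTop
      (nhds (ENNReal.ofReal K)) := by
    have h1 : Tendsto (fun m : ℕ => (1:ℝ)/(m+1)) atTop (nhds 0) :=
      tendsto_one_div_add_atTop_nhds_zero_nat
    have h2 : Tendsto (fun m : ℕ => Real.exp (θ * (1/(m+1))) * K) atTop (nhds K) := by
      have h3 := ((h1.const_mul θ).rexp).mul_const K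
      simpa using h3
    exact (ENNReal.continuous_ofReal.tendsto K).comp h2
  exact ge_of_tendsto' hlim fun m => main (1/(m+1)) (by positivity)
end

section
/- Let (X_j)_{j∈ℕ} be mutually independent random variables with X_j exponentially distributed with rate q_j > 0, and suppose μ := ∑_{j=1}^∞ 1/q_j < ∞. Then for every c ∈ (0,1): E[exp((c/μ)·∑_{j=1}^∞ X_j)] ≤ 1/(1−c). -/
open MeasureTheory ProbabilityTheory Filter Real Set

lemma weier (s : Finset ℕ) (f : ℕ → ℝ) (h0 : ∀ i ∈ s, 0 ≤ f i) (h1 : ∀ i ∈ s, f i ≤ 1) :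
    1 - ∑ i ∈ s, f i ≤ ∏ i ∈ s, (1 - f i) := by
  classical
  induction s using Finset.induction_on with
  | empty => simp
  | insert _ _ hnot ih =>
    rename_i a s
    rw [Finset.sum_insert hnot, Finset.prod_insert hnot]
    have hfa0 := h0 a (Finset.mem_insert_self a s)
    have hfa1 := h1 a (Finset.mem_insert_self a s)
    have ih' := ih (fun i hi => h0 i (Finset.mem_insert_of_mem hi))
      (fun i hi => h1 i (Finset.mem_insert_of_mem hi))
    have hsum0 : 0 ≤ ∑ i ∈ s, f i := Finset.sum_nonneg (fun i hi => h0 i (Finset.mem_insert_of_mem hi))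
    calc 1 - (f a + ∑ i ∈ s, f i) ≤ (1 - f a) * (1 - ∑ i ∈ s, f i) := by nlinarith
    _ ≤ (1 - f a) * ∏ i ∈ s, (1 - f i) := by
        apply mul_le_mul_of_nonneg_left ih' (by linarith)

lemma lint_exp {q t : ℝ} (hq : 0 < q) (ht : 0 ≤ t) (htq : t < q) :
    ∫⁻ x, ENNReal.ofReal (Real.exp (t * x)) ∂(expMeasure q) = ENNReal.ofReal (q / (q - t)) := by
  have hqt : 0 < q - t := by linarith
  have hmg : Measurable fun x : ℝ => ENNReal.ofReal (Real.exp (t * x)) := (measurable_id.const_mul t).exp.ennreal_ofReal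
  have h1 : expMeasure q = MeasureTheory.volume.withDensity (exponentialPDF q) := rfl
  have hm : Measurable (exponentialPDF q) := (measurable_exponentialPDFReal q).ennreal_ofReal
  rw [h1, lintegral_withDensity_eq_lintegral_mul _ hm hmg]
  have hpt : ∀ x : ℝ, (exponentialPDF q * fun x => ENNReal.ofReal (Real.exp (t * x))) x
      = ENNReal.ofReal (q / (q - t)) * exponentialPDF (q - t) x := by
    intro x
    rcases lt_or_ge x 0 with hx | hx
    · simp [exponentialPDF_of_neg hx]
    · rw [Pi.mul_apply, exponentialPDF_of_nonneg hx, exponentialPDF_of_nonneg hx,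
        ← ENNReal.ofReal_mul (by positivity), ← ENNReal.ofReal_mul (by positivity)]
      congr 1
      have h3 : rexp (t * x) * (q * rexp (-(q * x))) = q * rexp (t * x + -(q * x)) := by
        rw [Real.exp_add]; ring
      rw [mul_comm, h3, show t * x + -(q * x) = -((q - t) * x) by ring]
      field_simp
  simp_rw [hpt]
  have hm2 : Measurable (exponentialPDF (q - t)) := (measurable_exponentialPDFReal (q - t)).ennreal_ofReal
  rw [lintegral_const_mul _ hm2, lintegral_exponentialPDF_eq_one hqt, mul_one]

/-- **Exponential-moment bound from the proof of Lemma 5.2.** For mutually independent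
exponential random variables `(X j)` with rates `q j` and `μ = ∑_j 1/q j < ∞`,
`E[exp((c/μ)·∑_j X j)] ≤ 1/(1−c)` for every `c ∈ (0,1)`. -/
theorem stmt_4
    {Ω : Type*} [MeasureSpace Ω] [IsProbabilityMeasure (ℙ : Measure Ω)]
    (q : ℕ → ℝ) (hq : ∀ j, 0 < q j)
    (X : ℕ → Ω → ℝ) (hmeas : ∀ j, Measurable (X j))
    (hindep : iIndepFun X ℙ)
    (hlaw : ∀ j, Measure.map (X j) ℙ = expMeasure (q j))
    (μ : ℝ) (hsum : Summable fun j : ℕ => 1 / q j) (hμ : μ = ∑' j : ℕ, 1 / q j)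
    (c : ℝ) (hc0 : 0 < c) (hc1 : c < 1) :
    ∫⁻ ω, ENNReal.ofReal (Real.exp ((c / μ) * ∑' j : ℕ, X j ω)) ∂ℙ ≤
      ENNReal.ofReal (1 / (1 - c)) := by
  set t := c / μ with ht_def
  have hterm : ∀ j, (0:ℝ) < 1 / q j := fun j => by have := hq j; positivity
  have hle : ∀ j, 1 / q j ≤ μ := by
    intro j
    rw [hμ]
    exact Summable.le_tsum hsum j (fun i _ => (hterm i).le)
  have hμpos : 0 < μ := lt_of_lt_of_le (hterm 0) (hle 0)
  have ht0 : 0 < t := div_pos hc0 hμpos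
  have htq : ∀ j, t < q j := by
    intro j
    have h1 : 1 / μ ≤ q j := by
      rw [div_le_iff₀ hμpos]
      have hle' := hle j
      rw [one_div] at hle'
      calc (1:ℝ) = q j * (q j)⁻¹ := (mul_inv_cancel₀ (hq j).ne').symm
      _ ≤ q j * μ := mul_le_mul_of_nonneg_left hle' (hq j).le
    calc t < 1 / μ := by rw [ht_def, div_lt_div_iff₀ hμpos hμpos]; nlinarith
    _ ≤ q j := h1
  -- per-variable lintegral & integrability
  have hA : ∀ j, ∫⁻ ω, ENNReal.ofReal (Real.exp (t * X j ω)) ∂ℙ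
      = ENNReal.ofReal (q j / (q j - t)) := by
    intro j
    have hf : Measurable fun x : ℝ => ENNReal.ofReal (Real.exp (t * x)) :=
      (measurable_id.const_mul t).exp.ennreal_ofReal
    have := lintegral_map (μ := (ℙ : Measure Ω)) hf (hmeas j)
    rw [← this, hlaw j, lint_exp (hq j) ht0.le (htq j)]
  have hInt : ∀ j, Integrable (fun ω => Real.exp (t * X j ω)) ℙ := by
    intro j
    refine ⟨((hmeas j).const_mul t).exp.aestronglyMeasurable, ?_⟩
    rw [hasFiniteIntegral_iff_ofReal (Filter.Eventually.of_forall fun ω => (Real.exp_pos _).le)]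
    rw [hA j]
    exact ENNReal.ofReal_lt_top
  have hmgf : ∀ j, mgf (X j) ℙ t = q j / (q j - t) := by
    intro j
    have h1 := ofReal_integral_eq_lintegral_ofReal (hInt j)
      (Filter.Eventually.of_forall fun ω => (Real.exp_pos _).le)
    rw [hA j] at h1
    have h2 : 0 ≤ mgf (X j) ℙ t := mgf_nonneg
    have h3 : (0:ℝ) ≤ q j / (q j - t) := by
      have h4 := hq j
      have h5 : 0 < q j - t := by have := htq j; linarith
      positivity
    exact (ENNReal.ofReal_eq_ofReal_iff h2 h3).mp h1
  -- partial-sum bound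
  have hD : ∀ n : ℕ, ∫⁻ ω, ENNReal.ofReal (Real.exp (t * ∑ j ∈ Finset.range n, X j ω)) ∂ℙ
      ≤ ENNReal.ofReal (1 / (1 - c)) := by
    intro n
    have hIntS : Integrable (fun ω => Real.exp (t * (∑ j ∈ Finset.range n, X j) ω)) ℙ :=
      hindep.integrable_exp_mul_sum hmeas (fun i _ => hInt i)
    have happ : ∀ ω : Ω, (∑ j ∈ Finset.range n, X j) ω = ∑ j ∈ Finset.range n, X j ω :=
      fun ω => Finset.sum_apply ω _ _
    have h1 : ∫⁻ ω, ENNReal.ofReal (Real.exp (t * ∑ j ∈ Finset.range n, X j ω)) ∂ℙ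
        = ENNReal.ofReal (mgf (∑ j ∈ Finset.range n, X j) ℙ t) := by
      rw [mgf, ofReal_integral_eq_lintegral_ofReal hIntS
        (Filter.Eventually.of_forall fun ω => (Real.exp_pos _).le)]
      simp_rw [happ]
    rw [h1, hindep.mgf_sum hmeas]
    apply ENNReal.ofReal_le_ofReal
    simp_rw [hmgf]
    -- ∏ q/(q-t) ≤ 1/(1-c)
    have hfac : ∀ j, q j / (q j - t) = (1 - t / q j)⁻¹ := by
      intro j
      have h2 := htq j; have h3 := hq j
      have h5 : 1 - t / q j = (q j - t) / q j := by
        rw [sub_div, div_self h3.ne']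
      rw [h5, inv_div]
    simp_rw [hfac]
    rw [Finset.prod_inv_distrib]
    have hwei : 1 - c ≤ ∏ j ∈ Finset.range n, (1 - t / q j) := by
      have h0 : ∀ j ∈ Finset.range n, 0 ≤ t / q j := fun j _ => div_nonneg ht0.le (hq j).le
      have h1' : ∀ j ∈ Finset.range n, t / q j ≤ 1 := fun j _ => (div_le_one (hq j)).mpr (htq j).le
      refine le_trans ?_ (weier _ _ h0 h1')
      have hsum' : ∑ j ∈ Finset.range n, t / q j ≤ c := by
        have : ∑ j ∈ Finset.range n, t / q j = t * ∑ j ∈ Finset.range n, 1 / q j := by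
          rw [Finset.mul_sum]
          exact Finset.sum_congr rfl (fun j _ => by rw [mul_one_div])
        rw [this]
        calc t * ∑ j ∈ Finset.range n, 1 / q j ≤ t * μ := by
              apply mul_le_mul_of_nonneg_left _ ht0.le
              rw [hμ]; exact Summable.sum_le_tsum _ (fun i _ => (hterm i).le) hsum
        _ = c := by rw [ht_def, div_mul_cancel₀ _ hμpos.ne']
      linarith
    rw [one_div]
    exact inv_anti₀ (by linarith) hwei
  -- pointwise bound by sup over partial sums
  have hpt : ∀ ω, ENNReal.ofReal (Real.exp (t * ∑' j, X j ω))
      ≤ ⨆ n : ℕ, ENNReal.ofReal (Real.exp (t * ∑ j ∈ Finset.range n, X j ω)) := by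
    intro ω
    by_cases hS : Summable (fun j => X j ω)
    · have htd : Filter.Tendsto (fun n => ∑ j ∈ Finset.range n, X j ω) atTop
          (nhds (∑' j, X j ω)) := hS.hasSum.tendsto_sum_nat
      have htd2 : Filter.Tendsto
          (fun n => ENNReal.ofReal (Real.exp (t * ∑ j ∈ Finset.range n, X j ω))) atTop
          (nhds (ENNReal.ofReal (Real.exp (t * ∑' j, X j ω)))) := by
        exact (ENNReal.continuous_ofReal.tendsto _).comp
          ((Real.continuous_exp.tendsto _).comp (htd.const_mul t))
      exact le_of_tendsto' htd2 (fun n => le_iSup (fun m : ℕ => ENNReal.ofReal (Real.exp (t * ∑ j ∈ Finset.range m, X j ω))) n)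
    · rw [tsum_eq_zero_of_not_summable hS]
      refine le_trans ?_ (le_iSup _ 0)
      simp
  -- a.e. nonneg
  have hnn : ∀ᵐ ω ∂(ℙ : Measure Ω), ∀ j, 0 ≤ X j ω := by
    rw [ae_all_iff]
    intro j
    have h0 : (ℙ : Measure Ω) {ω | X j ω < 0} = 0 := by
      have h1 : {ω | X j ω < 0} = X j ⁻¹' (Iio 0) := rfl
      have h2 : (ℙ : Measure Ω) (X j ⁻¹' (Iio 0)) = Measure.map (X j) ℙ (Iio 0) := by
        rw [Measure.map_apply (hmeas j) measurableSet_Iio]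
      rw [h1, h2, hlaw j]
      have h3 : expMeasure (q j) = MeasureTheory.volume.withDensity (exponentialPDF (q j)) := rfl
      rw [h3, withDensity_apply _ measurableSet_Iio]
      exact lintegral_exponentialPDF_of_nonpos le_rfl
    filter_upwards [measure_eq_zero_iff_ae_notMem.mp h0] with ω hω
    simpa using hω
  -- combine
  calc ∫⁻ ω, ENNReal.ofReal (Real.exp (t * ∑' j, X j ω)) ∂ℙ
      ≤ ∫⁻ ω, ⨆ n : ℕ, ENNReal.ofReal (Real.exp (t * ∑ j ∈ Finset.range n, X j ω)) ∂ℙ :=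
        lintegral_mono hpt
    _ = ⨆ n : ℕ, ∫⁻ ω, ENNReal.ofReal (Real.exp (t * ∑ j ∈ Finset.range n, X j ω)) ∂ℙ := by
        apply lintegral_iSup'
        · intro n
          exact (((Finset.measurable_sum _ (fun j _ => hmeas j)).const_mul t).exp.ennreal_ofReal).aemeasurable
        · filter_upwards [hnn] with ω hω
          intro m n hmn
          apply ENNReal.ofReal_le_ofReal
          apply Real.exp_le_exp.mpr
          apply mul_le_mul_of_nonneg_left _ ht0.le
          exact Finset.sum_le_sum_of_subset_of_nonneg
            (Finset.range_subset_range.mpr hmn) (fun j _ _ => hω j)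
    _ ≤ ENNReal.ofReal (1 / (1 - c)) := iSup_le hD
end

section
/- Let S be a nonempty set and f : ℕ₀ × S → (0,∞) a function. Suppose there exists w* ∈ S such that f(i,w) ≥ f(i,w*) for all i ∈ ℕ₀ and all w ∈ S, and such that for a given n ∈ ℕ₀ the quantity μ_n := ∑_{i=n}^∞ 1/f(i,w*) is finite (and positive). Then for every w ∈ S and every c ∈ (0,1]: ∏_{i=n}^∞ f(i,w)/(f(i,w) + c·μ_n^{−1}) > e^{−3/2}, where the infinite product is the limit of the partial products (each factor lies in (0,1), so the limit exists in [0,1]). -/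
open Filter

/-- **Equation (eq:prodfromn).** Let `f : ℕ₀ × S → (0,∞)` admit a uniform minimiser `w*`
with `μ_n = ∑_{i=n}^∞ 1/f(i,w*) < ∞`. Then for every `w ∈ S` and `c ∈ (0,1]`,
`∏_{i=n}^∞ f(i,w)/(f(i,w) + c·μ_n⁻¹) > e^{−3/2}`, the infinite product being the
limit (infimum) of the partial products, each factor lying in `(0,1)`. -/
theorem stmt_5
    {S : Type*} [Nonempty S] (f : ℕ → S → ℝ) (hf : ∀ i w, 0 < f i w)
    (wstar : S) (hmin : ∀ i w, f i wstar ≤ f i w)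
    (n : ℕ) (hsum : Summable fun i : ℕ => 1 / f (n + i) wstar)
    (μ : ℝ) (hμ : μ = ∑' i : ℕ, 1 / f (n + i) wstar)
    (w : S) (c : ℝ) (hc0 : 0 < c) (hc1 : c ≤ 1) :
    Real.exp (-(3 / 2)) <
      ⨅ N : ℕ, ∏ i ∈ Finset.range N, f (n + i) w / (f (n + i) w + c / μ) := by
  have hμpos : 0 < μ := by
    rw [hμ]
    exact Summable.tsum_pos hsum (fun i => one_div_nonneg.mpr (hf _ _).le) 0 (one_div_pos.mpr (hf _ _))
  set a : ℝ := c / μ with ha_def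
  have ha : 0 < a := by positivity
  have key : ∀ N : ℕ, Real.exp (-1) ≤
      ∏ i ∈ Finset.range N, f (n + i) w / (f (n + i) w + a) := by
    intro N
    have step1 : ∀ i ∈ Finset.range N,
        Real.exp (-(a / f (n + i) wstar)) ≤ f (n + i) w / (f (n + i) w + a) := by
      intro i _
      have hfw : 0 < f (n + i) w := hf _ _
      have hfs : 0 < f (n + i) wstar := hf _ _
      have h1 : Real.exp (-(a / f (n + i) wstar)) ≤ Real.exp (-(a / f (n + i) w)) := by
        apply Real.exp_le_exp.mpr
        apply neg_le_neg
        exact div_le_div_of_nonneg_left ha.le hfs (hmin _ _)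
      refine h1.trans ?_
      rw [le_div_iff₀ (by positivity)]
      have h2 : f (n + i) w + a ≤ f (n + i) w * Real.exp (a / f (n + i) w) := by
        have h3 := Real.add_one_le_exp (a / f (n + i) w)
        have h4 := mul_le_mul_of_nonneg_left h3 hfw.le
        calc f (n + i) w + a = f (n + i) w * (a / f (n + i) w + 1) := by
              field_simp
              ring
          _ ≤ _ := h4
      calc Real.exp (-(a / f (n + i) w)) * (f (n + i) w + a)
          ≤ Real.exp (-(a / f (n + i) w)) * (f (n + i) w * Real.exp (a / f (n + i) w)) := by
            exact mul_le_mul_of_nonneg_left h2 (Real.exp_nonneg _)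
        _ = f (n + i) w * (Real.exp (-(a / f (n + i) w)) * Real.exp (a / f (n + i) w)) := by
            ring
        _ = f (n + i) w := by
            rw [← Real.exp_add]
            simp
    have step2 : ∏ i ∈ Finset.range N, Real.exp (-(a / f (n + i) wstar)) ≤
        ∏ i ∈ Finset.range N, f (n + i) w / (f (n + i) w + a) :=
      Finset.prod_le_prod (fun i _ => Real.exp_nonneg _) step1
    refine le_trans ?_ step2
    rw [← Real.exp_sum]
    apply Real.exp_le_exp.mpr
    have hpart : ∑ i ∈ Finset.range N, 1 / f (n + i) wstar ≤ μ := by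
      rw [hμ]
      exact Summable.sum_le_tsum _ (fun i _ => one_div_nonneg.mpr (hf _ _).le) hsum
    have : ∑ i ∈ Finset.range N, -(a / f (n + i) wstar) =
        -(a * ∑ i ∈ Finset.range N, 1 / f (n + i) wstar) := by
      rw [Finset.mul_sum, ← Finset.sum_neg_distrib]
      congr 1 with i
      rw [mul_one_div]
    rw [this]
    apply neg_le_neg
    calc a * ∑ i ∈ Finset.range N, 1 / f (n + i) wstar ≤ a * μ :=
          mul_le_mul_of_nonneg_left hpart ha.le
      _ = c := div_mul_cancel₀ c hμpos.ne'
      _ ≤ 1 := hc1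
  refine lt_of_lt_of_le ?_ (le_ciInf key)
  apply Real.exp_lt_exp.mpr
  norm_num
end

section
/- Let p > 1 and let s : ℕ₀ → (0,∞) satisfy s(n) = n^p·L(n) for all n ≥ 1, where L : (0,∞) → (0,∞) is measurable and slowly varying. Let G > 0 and H ≥ 0, and set f(i) := G·s(i) + H for i ∈ ℕ₀. Then ∑_{i=n}^∞ 1/f(i) < ∞ for every n, and lim_{n→∞} (∑_{i=n}^∞ 1/f(i)) · G·(p−1)·s(n)/n = 1; that is, ∑_{i=n}^∞ 1/f(i) = (1+o(1)) · n/(G·(p−1)·s(n)) as n → ∞. -/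
/-!
Write `1 / s i = i ^ (-p) / L i`. The uniform convergence theorem for slowly varying functions
(Egorov's theorem, plus the fact that two subsets of `[0, 3]` of total measure `> 3` meet) gives
Potter's bounds: for every `δ > 0` and all large `n ≤ i`,
`e^{-δ} (n / i)^δ ≤ L n / L i ≤ e^δ (i / n)^δ`. Since `n^{q-1} ∑_{i ≥ n} i^{-q}` lies between
`1 / (q - 1)` and `1 / n + 1 / (q - 1)` (telescope `i^{1-q}`), this squeezes
`(p - 1) n^{p-1} L n ∑_{i ≥ n} i^{-p} / L i` between `e^{-δ} (p - 1) / (p - 1 + δ)` and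
`e^δ (p - 1) (δ + 1 / (p - 1 - δ))`, and both bounds tend to `1` as `δ → 0`.
Finally `1 / f i ~ G⁻¹ / s i` because `1 / s i → 0`, and summable positive sequences with
asymptotically equivalent terms have asymptotically equivalent tails.
-/

open Filter MeasureTheory Set Topology

lemma tendsto_of_eventually_between {ι κ α : Type*} [LinearOrder α] [TopologicalSpace α]
    [OrderTopology α] {F : Filter ι} {G : Filter κ} [G.NeBot] {a : ι → α} {l u : κ → α} {c : α}
    (hl : Tendsto l G (𝓝 c)) (hu : Tendsto u G (𝓝 c))
    (h : ∀ᶠ δ in G, ∀ᶠ n in F, l δ ≤ a n ∧ a n ≤ u δ) : Tendsto a F (𝓝 c) := by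
  refine tendsto_order.2 ⟨fun b hb => ?_, fun b hb => ?_⟩
  · obtain ⟨δ, hδ, hbδ⟩ := (h.and (hl.eventually (lt_mem_nhds hb))).exists
    filter_upwards [hδ] with n hn using hbδ.trans_le hn.1
  · obtain ⟨δ, hδ, hbδ⟩ := (h.and (hu.eventually (gt_mem_nhds hb))).exists
    filter_upwards [hδ] with n hn using hn.2.trans_lt hbδ

lemma eventually_tsum_nat_add_le {u v : ℕ → ℝ} (hu : Summable u) (hv : Summable v)
    (h : ∀ᶠ i in atTop, u i ≤ v i) :
    ∀ᶠ n in atTop, ∑' j, u (n + j) ≤ ∑' j, v (n + j) := by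
  obtain ⟨N, hN⟩ := eventually_atTop.1 h
  filter_upwards [eventually_ge_atTop N] with n hn
  exact (hu.comp_injective (add_right_injective n)).tsum_le_tsum (fun j => hN _ (by omega))
    (hv.comp_injective (add_right_injective n))

theorem tendsto_tsum_nat_add_div_tsum_nat_add {a b : ℕ → ℝ} {c : ℝ} (ha : Summable a)
    (hb : Summable b) (hb₀ : ∀ i, 0 < b i) (hab : Tendsto (fun i => a i / b i) atTop (𝓝 c)) :
    Tendsto (fun n => (∑' j, a (n + j)) / ∑' j, b (n + j)) atTop (𝓝 c) := by
  have htail (n : ℕ) : 0 < ∑' j, b (n + j) :=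
    (hb.comp_injective (add_right_injective n)).tsum_pos (fun j => (hb₀ _).le) 0 (hb₀ _)
  refine tendsto_order.2 ⟨fun d hd => ?_, fun d hd => ?_⟩
  · obtain ⟨d', hdd', hd'⟩ := exists_between hd
    have hev : ∀ᶠ i in atTop, d' * b i ≤ a i :=
      (hab.eventually (lt_mem_nhds hd')).mono fun i hi => ((lt_div_iff₀ (hb₀ i)).1 hi).le
    filter_upwards [eventually_tsum_nat_add_le (hb.mul_left d') ha hev] with n hn
    rw [tsum_mul_left] at hn
    exact hdd'.trans_le ((le_div_iff₀ (htail n)).2 hn)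
  · obtain ⟨d', hd', hdd'⟩ := exists_between hd
    have hev : ∀ᶠ i in atTop, a i ≤ d' * b i :=
      (hab.eventually (gt_mem_nhds hd')).mono fun i hi => ((div_lt_iff₀ (hb₀ i)).1 hi).le
    filter_upwards [eventually_tsum_nat_add_le ha (hb.mul_left d') hev] with n hn
    rw [tsum_mul_left] at hn
    exact ((div_le_iff₀ (htail n)).2 hn).trans_lt hdd'

section TailSums

variable {q a : ℝ}

lemma rpow_sub_rpow_add_one_bounds (hq : 1 ≤ q) (ha : 0 < a) :
    (q - 1) * (a + 1) ^ (-q) ≤ a ^ (1 - q) - (a + 1) ^ (1 - q) ∧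
      a ^ (1 - q) - (a + 1) ^ (1 - q) ≤ (q - 1) * a ^ (-q) := by
  obtain ⟨c, ⟨hac, hca⟩, hc⟩ := exists_hasDerivAt_eq_slope (fun x : ℝ => x ^ (1 - q))
    (fun x => (1 - q) * x ^ (1 - q - 1)) (lt_add_one a)
    (continuousOn_id.rpow_const fun x hx => Or.inl (ha.trans_le hx.1).ne')
    (fun x hx => Real.hasDerivAt_rpow_const (Or.inl (ha.trans hx.1).ne'))
  have hc0 : 0 < c := ha.trans hac
  have hslope : a ^ (1 - q) - (a + 1) ^ (1 - q) = (q - 1) * c ^ (-q) := by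
    rw [add_sub_cancel_left, div_one, show 1 - q - 1 = -q by ring] at hc
    linarith
  rw [hslope]
  exact ⟨mul_le_mul_of_nonneg_left (Real.rpow_le_rpow_of_nonpos hc0 hca.le (by linarith))
      (by linarith),
    mul_le_mul_of_nonneg_left (Real.rpow_le_rpow_of_nonpos ha hac.le (by linarith)) (by linarith)⟩

lemma hasSum_rpow_sub_rpow_add_one (hq : 1 < q) (ha : 0 < a) :
    HasSum (fun j : ℕ => (a + j) ^ (1 - q) - (a + j + 1) ^ (1 - q)) (a ^ (1 - q)) := by
  have hnonneg (j : ℕ) : 0 ≤ (a + j) ^ (1 - q) - (a + j + 1) ^ (1 - q) :=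
    sub_nonneg.2 (Real.rpow_le_rpow_of_nonpos (by positivity) (by linarith) (by linarith))
  have hpartial (m : ℕ) : ∑ j ∈ Finset.range m, ((a + j) ^ (1 - q) - (a + j + 1) ^ (1 - q)) =
      a ^ (1 - q) - (a + m) ^ (1 - q) := by
    induction m with
    | zero => simp
    | succ m ih => rw [Finset.sum_range_succ, ih, Nat.cast_succ, ← add_assoc]; ring
  have hlim : Tendsto (fun m : ℕ => (a + m) ^ (1 - q)) atTop (𝓝 0) := by
    simpa only [Function.comp_def, neg_sub] using
      (tendsto_rpow_neg_atTop (by linarith : 0 < q - 1)).comp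
        (tendsto_atTop_add_const_left _ a tendsto_natCast_atTop_atTop)
  rw [hasSum_iff_tendsto_nat_of_nonneg hnonneg]
  simpa [hpartial] using tendsto_const_nhds.sub hlim

lemma summable_add_rpow_neg (hq : 1 < q) (ha : 0 < a) :
    Summable fun j : ℕ => (a + j) ^ (-q) := by
  refine ((Real.summable_one_div_nat_add_rpow a q).2 hq).congr fun j => ?_
  rw [abs_of_pos (by positivity), Real.rpow_neg (by positivity), one_div, add_comm]

lemma inv_sub_one_le_rpow_mul_tsum_add_rpow_neg (hq : 1 < q) (ha : 0 < a) :
    (q - 1)⁻¹ ≤ a ^ (q - 1) * ∑' j : ℕ, (a + j) ^ (-q) := by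
  have hsum : a ^ (1 - q) ≤ (q - 1) * ∑' j : ℕ, (a + j) ^ (-q) := by
    rw [← tsum_mul_left]
    exact hasSum_le (fun j => (rpow_sub_rpow_add_one_bounds hq.le (by positivity)).2)
      (hasSum_rpow_sub_rpow_add_one hq ha) ((summable_add_rpow_neg hq ha).mul_left _).hasSum
  have hpow : a ^ (q - 1) * a ^ (1 - q) = 1 := by
    rw [← Real.rpow_add ha]; simp
  calc (q - 1)⁻¹ = a ^ (q - 1) * (a ^ (1 - q) / (q - 1)) := by rw [← mul_div_assoc, hpow, one_div]
    _ ≤ a ^ (q - 1) * ∑' j : ℕ, (a + j) ^ (-q) := by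
        gcongr
        rw [div_le_iff₀' (by linarith)]
        exact hsum

lemma rpow_mul_tsum_add_rpow_neg_le (hq : 1 < q) (ha : 0 < a) :
    a ^ (q - 1) * ∑' j : ℕ, (a + j) ^ (-q) ≤ a⁻¹ + (q - 1)⁻¹ := by
  have hsummable := summable_add_rpow_neg hq ha
  have hsum : (q - 1) * ∑' j : ℕ, (a + (j + 1 : ℕ)) ^ (-q) ≤ a ^ (1 - q) := by
    rw [← tsum_mul_left]
    refine hasSum_le (fun j => ?_) (((summable_nat_add_iff 1).2 hsummable).mul_left (q - 1)).hasSum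
      (hasSum_rpow_sub_rpow_add_one hq ha)
    rw [Nat.cast_succ, ← add_assoc]
    exact (rpow_sub_rpow_add_one_bounds hq.le (by positivity)).1
  have hpow₁ : a ^ (q - 1) * a ^ (-q) = a⁻¹ := by
    rw [← Real.rpow_add ha, show q - 1 + -q = -1 by ring, Real.rpow_neg_one]
  have hpow₂ : a ^ (q - 1) * a ^ (1 - q) = 1 := by
    rw [← Real.rpow_add ha]; simp
  rw [hsummable.tsum_eq_zero_add, Nat.cast_zero, add_zero, mul_add, hpow₁]
  gcongr
  calc a ^ (q - 1) * ∑' j : ℕ, (a + (j + 1 : ℕ)) ^ (-q)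
      ≤ a ^ (q - 1) * (a ^ (1 - q) / (q - 1)) := by
        gcongr
        rw [le_div_iff₀' (by linarith)]
        exact hsum
    _ = (q - 1)⁻¹ := by rw [← mul_div_assoc, hpow₂, one_div]

end TailSums

section UniformConvergence

variable {h : ℝ → ℝ}

lemma exists_subset_Icc_uniform_of_tendsto_add_sub (hm : Measurable h)
    (hc : ∀ t, Tendsto (fun x => h (x + t) - h x) atTop (𝓝 0))
    {x : ℕ → ℝ} (hx : Tendsto x atTop atTop) {η : ℝ} (hη : 0 < η) :
    ∃ A ⊆ Icc (0 : ℝ) 2, MeasurableSet A ∧ ENNReal.ofReal (7 / 4) ≤ volume A ∧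
      ∀ᶠ n in atTop, ∀ u ∈ A, |h (x n + u) - h (x n)| < η := by
  obtain ⟨t, -, ht, htvol, hunif⟩ := tendstoUniformlyOn_of_ae_tendsto (μ := volume)
    (f := fun n u => h (x n + u) - h (x n)) (g := 0)
    (fun n => ((hm.comp (measurable_const_add _)).sub_const _).stronglyMeasurable)
    stronglyMeasurable_const measurableSet_Icc measure_Icc_lt_top.ne
    (ae_of_all _ fun u _ => (hc u).comp hx) (by norm_num : (0 : ℝ) < 1 / 4)
  refine ⟨Icc 0 2 \ t, sdiff_subset, measurableSet_Icc.diff ht, ?_, ?_⟩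
  · calc ENNReal.ofReal (7 / 4) = ENNReal.ofReal 2 - ENNReal.ofReal (1 / 4) := by
          rw [← ENNReal.ofReal_sub _ (by norm_num)]; norm_num
      _ ≤ volume (Icc (0 : ℝ) 2) - volume t := by
          rw [Real.volume_Icc, sub_zero]; exact tsub_le_tsub_left htvol _
      _ ≤ volume (Icc 0 2 \ t) := le_measure_sdiff
  · filter_upwards [Metric.tendstoUniformlyOn_iff.1 hunif η hη] with n hn u hu
    simpa [Real.dist_eq, abs_sub_comm] using hn u hu

theorem eventually_forall_Icc_abs_add_sub_le (hm : Measurable h)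
    (hc : ∀ t, Tendsto (fun x => h (x + t) - h x) atTop (𝓝 0)) {ε : ℝ} (hε : 0 < ε) :
    ∀ᶠ x in atTop, ∀ t ∈ Icc (0 : ℝ) 1, |h (x + t) - h x| ≤ ε := by
  by_contra hne
  simp only [not_eventually, not_forall, not_le, frequently_atTop] at hne
  choose y hy τ hτ hbad using fun n : ℕ => hne n
  have hyt : Tendsto y atTop atTop := tendsto_atTop_mono hy tendsto_natCast_atTop_atTop
  have hzt : Tendsto (fun n => y n + τ n) atTop atTop :=
    tendsto_atTop_mono (fun n => le_add_of_nonneg_right (hτ n).1) hyt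
  obtain ⟨A, hA, -, hAvol, hAev⟩ :=
    exists_subset_Icc_uniform_of_tendsto_add_sub hm hc hyt (half_pos hε)
  obtain ⟨B, hB, hBm, hBvol, hBev⟩ :=
    exists_subset_Icc_uniform_of_tendsto_add_sub hm hc hzt (half_pos hε)
  obtain ⟨n, hAn, hBn⟩ := (hAev.and hBev).exists
  -- `A` and `B + τ n` lie in `[0, 3]` and have total measure at least `7 / 2 > 3`
  obtain ⟨v, hvA, hvB⟩ : (A ∩ (· + -τ n) ⁻¹' B).Nonempty := by
    refine nonempty_inter_of_measure_lt_add volume (hBm.preimage (measurable_add_const _))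
      (u := Icc 0 3) (hA.trans (Icc_subset_Icc_right (by norm_num))) ?_ ?_
    · intro v hv
      have := hB hv
      have := hτ n
      constructor <;> simp only [mem_Icc] at * <;> linarith
    · rw [measure_preimage_add_right, Real.volume_Icc]
      calc ENNReal.ofReal (3 - 0) < ENNReal.ofReal (7 / 4) + ENNReal.ofReal (7 / 4) := by
            rw [← ENNReal.ofReal_add (by norm_num) (by norm_num)]
            exact ENNReal.ofReal_lt_ofReal_iff'.2 ⟨by norm_num, by norm_num⟩
        _ ≤ volume A + volume B := add_le_add hAvol hBvol
  have hA' := hAn v hvA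
  have hB' := hBn _ hvB
  rw [show y n + τ n + (v + -τ n) = y n + v by ring] at hB'
  have := abs_sub_le (h (y n + τ n)) (h (y n + v)) (h (y n))
  rw [abs_sub_comm] at hB'
  linarith [hbad n]

theorem eventually_abs_add_sub_le_mul (hm : Measurable h)
    (hc : ∀ t, Tendsto (fun x => h (x + t) - h x) atTop (𝓝 0)) {η : ℝ} (hη : 0 < η) :
    ∀ᶠ x in atTop, ∀ t, 0 ≤ t → |h (x + t) - h x| ≤ η * (t + 1) := by
  obtain ⟨X, hX⟩ := eventually_atTop.1 (eventually_forall_Icc_abs_add_sub_le hm hc hη)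
  have hunit : ∀ x ≥ X, ∀ t, 0 ≤ t → t ≤ 1 → |h (x + t) - h x| ≤ η * (t + 1) :=
    fun x hx t ht₀ ht₁ => (hX x hx t ⟨ht₀, ht₁⟩).trans (by nlinarith)
  suffices key : ∀ k : ℕ, ∀ x ≥ X, ∀ t : ℝ, 0 ≤ t → t < k + 1 → |h (x + t) - h x| ≤ η * (t + 1) from
    eventually_atTop.2 ⟨X, fun x hx t ht => key ⌊t⌋₊ x hx t ht (Nat.lt_floor_add_one t)⟩
  intro k
  induction k with
  | zero => exact fun x hx t ht₀ ht₁ => hunit x hx t ht₀ (by simp at ht₁; linarith)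
  | succ k ih =>
    intro x hx t ht₀ ht₁
    rcases le_or_gt t 1 with ht | ht
    · exact hunit x hx t ht₀ ht
    have hstep := ih (x + 1) (by linarith) (t - 1) (by linarith) (by push_cast at ht₁; linarith)
    rw [add_add_sub_cancel] at hstep
    calc |h (x + t) - h x| ≤ |h (x + t) - h (x + 1)| + |h (x + 1) - h x| := abs_sub_le _ _ _
      _ ≤ η * (t - 1 + 1) + η := add_le_add hstep (hX x hx 1 ⟨zero_le_one, le_rfl⟩)
      _ = η * (t + 1) := by ring

end UniformConvergence

lemma rpow_neg_mul_div_bounds {p δ x y a b : ℝ} (hx : 0 < x) (hy : 0 < y) (ha : 0 < a)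
    (hb : 0 < b) (h : |Real.log b - Real.log a| ≤ δ * (Real.log y - Real.log x + 1)) :
    Real.exp (-δ) * x ^ δ * y ^ (-(p + δ)) ≤ y ^ (-p) * (a / b) ∧
      y ^ (-p) * (a / b) ≤ Real.exp δ * x ^ (-δ) * y ^ (-(p - δ)) := by
  rw [abs_le] at h
  rw [← Real.exp_log (div_pos ha hb), Real.log_div ha.ne' hb.ne']
  simp only [Real.rpow_def_of_pos hx, Real.rpow_def_of_pos hy, ← Real.exp_add, Real.exp_le_exp]
  constructor <;> linarith [h.1, h.2]

lemma summable_and_rpow_mul_tsum_bounds {p δ a : ℝ} {w : ℕ → ℝ} (hδ : 0 < δ) (hδp : δ < p - 1)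
    (ha : 0 < a) (hlo : ∀ j : ℕ, Real.exp (-δ) * a ^ δ * (a + j) ^ (-(p + δ)) ≤ w j)
    (hup : ∀ j : ℕ, w j ≤ Real.exp δ * a ^ (-δ) * (a + j) ^ (-(p - δ))) :
    Summable w ∧ Real.exp (-δ) * (p - 1) / (p + δ - 1) ≤ (p - 1) * a ^ (p - 1) * ∑' j, w j ∧
      (p - 1) * a ^ (p - 1) * ∑' j, w j ≤ Real.exp δ * (p - 1) * (a⁻¹ + (p - δ - 1)⁻¹) := by
  have hsum_lo := summable_add_rpow_neg (q := p + δ) (by linarith) ha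
  have hsum_up := summable_add_rpow_neg (q := p - δ) (by linarith) ha
  have hw : Summable w :=
    Summable.of_nonneg_of_le (fun j => (by positivity : (0 : ℝ) ≤ _).trans (hlo j)) hup
      (hsum_up.mul_left _)
  have hp₁ : 0 ≤ p - 1 := by linarith
  have hp₀ : 0 ≤ (p - 1) * a ^ (p - 1) := mul_nonneg hp₁ (by positivity)
  have hpow (t : ℝ) : a ^ (p - 1) * a ^ t = a ^ (p + t - 1) := by
    rw [← Real.rpow_add ha]; ring_nf
  refine ⟨hw, ?_, ?_⟩
  · calc Real.exp (-δ) * (p - 1) / (p + δ - 1) = (p - 1) * Real.exp (-δ) * (p + δ - 1)⁻¹ := by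
          ring
      _ ≤ (p - 1) * Real.exp (-δ) * (a ^ (p + δ - 1) * ∑' j : ℕ, (a + j) ^ (-(p + δ))) :=
          mul_le_mul_of_nonneg_left
            (inv_sub_one_le_rpow_mul_tsum_add_rpow_neg (q := p + δ) (by linarith) ha)
            (mul_nonneg hp₁ (Real.exp_pos _).le)
      _ = (p - 1) * a ^ (p - 1) * ∑' j : ℕ, Real.exp (-δ) * a ^ δ * (a + j) ^ (-(p + δ)) := by
          rw [tsum_mul_left, ← hpow]; ring
      _ ≤ (p - 1) * a ^ (p - 1) * ∑' j, w j :=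
          mul_le_mul_of_nonneg_left ((hsum_lo.mul_left _).tsum_le_tsum hlo hw) hp₀
  · calc (p - 1) * a ^ (p - 1) * ∑' j, w j
        ≤ (p - 1) * a ^ (p - 1) * ∑' j : ℕ, Real.exp δ * a ^ (-δ) * (a + j) ^ (-(p - δ)) :=
          mul_le_mul_of_nonneg_left (hw.tsum_le_tsum hup (hsum_up.mul_left _)) hp₀
      _ = Real.exp δ * (p - 1) * (a ^ (p - δ - 1) * ∑' j : ℕ, (a + j) ^ (-(p - δ))) := by
          rw [tsum_mul_left, show p - δ - 1 = p + -δ - 1 by ring, ← hpow]; ring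
      _ ≤ Real.exp δ * (p - 1) * (a⁻¹ + (p - δ - 1)⁻¹) :=
          mul_le_mul_of_nonneg_left (rpow_mul_tsum_add_rpow_neg_le (q := p - δ) (by linarith) ha)
            (mul_nonneg (Real.exp_pos _).le hp₁)

section SlowlyVarying

variable {L : ℝ → ℝ}

lemma tendsto_log_comp_exp_add_sub (hLpos : ∀ x, 0 < x → 0 < L x)
    (hLslow : ∀ a, 0 < a → Tendsto (fun x => L (a * x) / L x) atTop (𝓝 1)) (t : ℝ) :
    Tendsto (fun x => Real.log (L (Real.exp (x + t))) - Real.log (L (Real.exp x))) atTop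
      (𝓝 0) := by
  have := (Real.continuousAt_log one_ne_zero).tendsto.comp
    ((hLslow _ (Real.exp_pos t)).comp Real.tendsto_exp_atTop)
  rw [Real.log_one] at this
  refine this.congr fun x => ?_
  rw [Function.comp_apply, Function.comp_apply, Real.exp_add, mul_comm]
  exact Real.log_div (hLpos _ (by positivity)).ne' (hLpos _ (Real.exp_pos x)).ne'

theorem eventually_abs_log_sub_log_le (hLmeas : Measurable L) (hLpos : ∀ x, 0 < x → 0 < L x)
    (hLslow : ∀ a, 0 < a → Tendsto (fun x => L (a * x) / L x) atTop (𝓝 1)) {δ : ℝ}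
    (hδ : 0 < δ) :
    ∀ᶠ x in atTop, ∀ y, x ≤ y →
      |Real.log (L y) - Real.log (L x)| ≤ δ * (Real.log y - Real.log x + 1) := by
  have hadd := eventually_abs_add_sub_le_mul (h := fun x => Real.log (L (Real.exp x)))
    (Real.measurable_log.comp (hLmeas.comp Real.measurable_exp))
    (tendsto_log_comp_exp_add_sub hLpos hLslow) hδ
  filter_upwards [Real.tendsto_log_atTop.eventually hadd, eventually_gt_atTop 0]
    with x hx hx₀ y hxy
  simpa [Real.exp_log hx₀, Real.exp_log (hx₀.trans_le hxy)] using
    hx (Real.log y - Real.log x) (sub_nonneg.2 (Real.log_le_log hx₀ hxy))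

lemma eventually_rpow_neg_mul_div_bounds (hLmeas : Measurable L)
    (hLpos : ∀ x, 0 < x → 0 < L x)
    (hLslow : ∀ a, 0 < a → Tendsto (fun x => L (a * x) / L x) atTop (𝓝 1)) (p : ℝ) {δ : ℝ}
    (hδ : 0 < δ) :
    ∀ᶠ n : ℕ in atTop, 0 < n ∧ ∀ j : ℕ,
      Real.exp (-δ) * (n : ℝ) ^ δ * ((n : ℝ) + j) ^ (-(p + δ)) ≤
          ((n : ℝ) + j) ^ (-p) * (L n / L (n + j)) ∧
        ((n : ℝ) + j) ^ (-p) * (L n / L (n + j)) ≤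
          Real.exp δ * (n : ℝ) ^ (-δ) * ((n : ℝ) + j) ^ (-(p - δ)) := by
  filter_upwards [tendsto_natCast_atTop_atTop.eventually
    (eventually_abs_log_sub_log_le hLmeas hLpos hLslow hδ), eventually_gt_atTop 0] with n hn hn₀
  have hn₀' : (0 : ℝ) < n := Nat.cast_pos.2 hn₀
  exact ⟨hn₀, fun j => rpow_neg_mul_div_bounds hn₀' (by positivity) (hLpos _ hn₀')
    (hLpos _ (by positivity)) (hn _ (le_add_of_nonneg_right j.cast_nonneg))⟩


theorem summable_rpow_neg_div (hLmeas : Measurable L) (hLpos : ∀ x, 0 < x → 0 < L x)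
    (hLslow : ∀ a, 0 < a → Tendsto (fun x => L (a * x) / L x) atTop (𝓝 1)) {p : ℝ}
    (hp : 1 < p) : Summable fun i : ℕ => (i : ℝ) ^ (-p) / L i := by
  obtain ⟨n, hn₀, hn⟩ := (eventually_rpow_neg_mul_div_bounds hLmeas hLpos hLslow p
    (δ := (p - 1) / 2) (by linarith)).exists
  have hn₀' : (0 : ℝ) < n := Nat.cast_pos.2 hn₀
  have hw := (summable_and_rpow_mul_tsum_bounds (by linarith) (by linarith) hn₀'
    (fun j => (hn j).1) (fun j => (hn j).2)).1
  rw [← summable_nat_add_iff n]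
  refine (hw.div_const (L n)).congr fun j => ?_
  have := hLpos n hn₀'
  rw [Nat.cast_add, add_comm (j : ℝ)]
  field_simp

theorem tendsto_mul_tsum_rpow_neg_div (hLmeas : Measurable L) (hLpos : ∀ x, 0 < x → 0 < L x)
    (hLslow : ∀ a, 0 < a → Tendsto (fun x => L (a * x) / L x) atTop (𝓝 1)) {p : ℝ}
    (hp : 1 < p) :
    Tendsto (fun n : ℕ => (p - 1) * (n : ℝ) ^ (p - 1) * L n *
      ∑' j : ℕ, ((n : ℝ) + j) ^ (-p) / L (n + j)) atTop (𝓝 1) := by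
  have hp₁ : p - 1 ≠ 0 := (sub_pos.2 hp).ne'
  refine tendsto_of_eventually_between (G := 𝓝[>] 0)
    (l := fun δ => Real.exp (-δ) * (p - 1) / (p + δ - 1))
    (u := fun δ => Real.exp δ * (p - 1) * (δ + (p - δ - 1)⁻¹)) ?_ ?_ ?_
  · have : ContinuousAt (fun δ => Real.exp (-δ) * (p - 1) / (p + δ - 1)) 0 := by
      fun_prop (disch := simpa using hp₁)
    simpa [hp₁] using this.tendsto.mono_left nhdsWithin_le_nhds
  · have : ContinuousAt (fun δ => Real.exp δ * (p - 1) * (δ + (p - δ - 1)⁻¹)) 0 := by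
      fun_prop (disch := simpa using hp₁)
    simpa [hp₁] using this.tendsto.mono_left nhdsWithin_le_nhds
  filter_upwards [Ioo_mem_nhdsGT (sub_pos.2 hp)] with δ ⟨hδ, hδp⟩
  filter_upwards [eventually_rpow_neg_mul_div_bounds hLmeas hLpos hLslow p hδ,
    (tendsto_inv_atTop_zero.comp tendsto_natCast_atTop_atTop).eventually (eventually_le_nhds hδ)]
    with n ⟨hn₀, hn⟩ hninv
  obtain ⟨-, hlo, hup⟩ := summable_and_rpow_mul_tsum_bounds hδ hδp (Nat.cast_pos.2 hn₀)
    (fun j => (hn j).1) (fun j => (hn j).2)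
  have hrw : (p - 1) * (n : ℝ) ^ (p - 1) * L n * ∑' j : ℕ, ((n : ℝ) + j) ^ (-p) / L (n + j) =
      (p - 1) * (n : ℝ) ^ (p - 1) * ∑' j : ℕ, ((n : ℝ) + j) ^ (-p) * (L n / L (n + j)) := by
    rw [mul_assoc _ (L n), ← tsum_mul_left]
    exact congrArg _ (tsum_congr fun j => by ring)
  rw [hrw]
  refine ⟨hlo, hup.trans ?_⟩
  gcongr
  exact hninv

end SlowlyVarying

section RegularlyVaryingSequence

variable {p : ℝ} {L : ℝ → ℝ} {s : ℕ → ℝ}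

lemma one_div_eq_rpow_neg_div (hs : ∀ n : ℕ, 1 ≤ n → s n = (n : ℝ) ^ p * L n) {i : ℕ}
    (hi : 0 < i) : 1 / s i = (i : ℝ) ^ (-p) / L i := by
  rw [hs i hi, Real.rpow_neg (Nat.cast_nonneg i), one_div, mul_inv, div_eq_mul_inv]

theorem summable_one_div_of_eq_rpow_mul (hLmeas : Measurable L) (hLpos : ∀ x, 0 < x → 0 < L x)
    (hLslow : ∀ a, 0 < a → Tendsto (fun x => L (a * x) / L x) atTop (𝓝 1)) (hp : 1 < p)
    (hs : ∀ n : ℕ, 1 ≤ n → s n = (n : ℝ) ^ p * L n) : Summable fun i => 1 / s i := by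
  refine (summable_nat_add_iff 1).1 <|
    ((summable_nat_add_iff 1).2 (summable_rpow_neg_div hLmeas hLpos hLslow hp)).congr fun i => ?_
  rw [one_div_eq_rpow_neg_div hs i.succ_pos]

theorem tendsto_tsum_one_div_nat_add_mul (hLmeas : Measurable L)
    (hLpos : ∀ x, 0 < x → 0 < L x)
    (hLslow : ∀ a, 0 < a → Tendsto (fun x => L (a * x) / L x) atTop (𝓝 1)) (hp : 1 < p)
    (hs : ∀ n : ℕ, 1 ≤ n → s n = (n : ℝ) ^ p * L n) :
    Tendsto (fun n : ℕ => (∑' j, 1 / s (n + j)) * ((p - 1) * s n / n)) atTop (𝓝 1) := by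
  refine (tendsto_mul_tsum_rpow_neg_div hLmeas hLpos hLslow hp).congr' ?_
  filter_upwards [eventually_gt_atTop 0] with n hn
  have hn' : (0 : ℝ) < n := Nat.cast_pos.2 hn
  have hterm (j : ℕ) : 1 / s (n + j) = ((n : ℝ) + j) ^ (-p) / L (n + j) := by
    rw [one_div_eq_rpow_neg_div hs (by omega), Nat.cast_add]
  rw [tsum_congr hterm, hs n hn, Real.rpow_sub_one hn'.ne']
  ring

theorem summable_and_tendsto_tsum_nat_add_div (hspos : ∀ n, 0 < s n)
    (hs_sum : Summable fun i => 1 / s i) {G H : ℝ} (hG : 0 < G) (hH : 0 ≤ H) :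
    Summable (fun i => 1 / (G * s i + H)) ∧
      Tendsto (fun n => (∑' j, 1 / (G * s (n + j) + H)) / ∑' j, 1 / s (n + j)) atTop
        (𝓝 G⁻¹) := by
  have hfs (i : ℕ) : 1 / (G * s i + H) = (G + H * (1 / s i))⁻¹ * (1 / s i) := by
    have := hspos i
    field_simp
  have hf_sum : Summable fun i => 1 / (G * s i + H) :=
    Summable.of_nonneg_of_le (fun i => by have := hspos i; positivity)
      (fun i => by have := hspos i; rw [hfs]; gcongr; exact le_add_of_nonneg_right (by positivity))
      (hs_sum.mul_left G⁻¹)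
  refine ⟨hf_sum, tendsto_tsum_nat_add_div_tsum_nat_add hf_sum hs_sum
    (fun i => one_div_pos.2 (hspos i)) ?_⟩
  have hden : Tendsto (fun i => G + H * (1 / s i)) atTop (𝓝 G) := by
    simpa using tendsto_const_nhds.add (hs_sum.tendsto_atTop_zero.const_mul H)
  refine (hden.inv₀ hG.ne').congr fun i => ?_
  rw [hfs, mul_div_assoc, div_self (one_div_pos.2 (hspos i)).ne', mul_one]

end RegularlyVaryingSequence

/-- **Lemma 6.2, super-linear case.** If `s n = n^p · L n` for `n ≥ 1` with `p > 1` and `L`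
slowly varying, `G > 0`, `H ≥ 0` and `f i = G·s i + H`, then every tail sum
`∑_{i=n}^∞ 1/f i` is finite and `∑_{i=n}^∞ 1/f i = (1+o(1)) · n/(G·(p−1)·s n)`
as `n → ∞`. -/
theorem stmt_7
    (p : ℝ) (hp : 1 < p)
    (L : ℝ → ℝ) (hLmeas : Measurable L) (hLpos : ∀ x : ℝ, 0 < x → 0 < L x)
    (hLslow : ∀ a : ℝ, 0 < a → Tendsto (fun x => L (a * x) / L x) atTop (nhds 1))
    (s : ℕ → ℝ) (hspos : ∀ n, 0 < s n)
    (hs : ∀ n : ℕ, 1 ≤ n → s n = (n : ℝ) ^ p * L n)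
    (G H : ℝ) (hG : 0 < G) (hH : 0 ≤ H)
    (f : ℕ → ℝ) (hf : ∀ i, f i = G * s i + H) :
    (∀ n : ℕ, Summable fun i : ℕ => 1 / f (n + i)) ∧
      Tendsto (fun n : ℕ => (∑' i : ℕ, 1 / f (n + i)) * (G * (p - 1) * s n / n))
        atTop (nhds 1) := by
  obtain rfl : f = fun i => G * s i + H := funext hf
  have hs_sum := summable_one_div_of_eq_rpow_mul hLmeas hLpos hLslow hp hs
  obtain ⟨hf_sum, hratio⟩ := summable_and_tendsto_tsum_nat_add_div hspos hs_sum hG hH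
  refine ⟨fun n => hf_sum.comp_injective (add_right_injective n), ?_⟩
  have hlim := (hratio.const_mul G).mul
    (tendsto_tsum_one_div_nat_add_mul hLmeas hLpos hLslow hp hs)
  rw [mul_inv_cancel₀ hG.ne', one_mul] at hlim
  refine hlim.congr fun n => ?_
  have : 0 < ∑' j, 1 / s (n + j) := (hs_sum.comp_injective (add_right_injective n)).tsum_pos
    (fun j => (one_div_pos.2 (hspos _)).le) 0 (one_div_pos.2 (hspos _))
  field_simp
end

section
/- Fix β ∈ (0,1) and define s(i) := (i+1)·exp((log(i+1))^β) for i ∈ ℕ₀. Then ∑_{i=n}^∞ 1/s(i) < ∞ for every n, and lim_{n→∞} (∑_{i=n}^∞ 1/s(i)) · β·(log n)^{β−1}·exp((log n)^β) = 1; that is, ∑_{i=n}^∞ 1/s(i) = (β^{−1}+o(1))·(log n)^{1−β}·exp(−(log n)^β) as n → ∞. -/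
open Filter Real Set Topology

/-! With `term β x = 1 / (x exp((log x)^β))` we have `1 / s i = term β (i + 1)`. The function
`tailApprox β` satisfies `-tailApprox' = term β * (1 - defect β)` with `defect β x → 0`, so by
the mean value theorem `tailApprox β k - tailApprox β (k + 1)` lies between
`(1 - defect β k) * term β (k + 1)` and `term β k`. Telescoping squeezes the tail
`∑_{k > n} term β k` between `tailApprox β n - term β n` and
`tailApprox β n / (1 - defect β n)`, and `term β n / tailApprox β n = β (log n)^(β-1) / n → 0`.
-/

lemma hasSum_sub_succ_of_antitone {g : ℕ → ℝ} (hg : Antitone g)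
    (hlim : Tendsto g atTop (𝓝 0)) : HasSum (fun i => g i - g (i + 1)) (g 0) := by
  rw [hasSum_iff_tendsto_nat_of_nonneg (fun i => sub_nonneg.2 (hg i.le_succ))]
  simp_rw [Finset.sum_range_sub']
  simpa using tendsto_const_nhds.sub hlim

noncomputable section

namespace LogStretched

def term (β x : ℝ) : ℝ := x⁻¹ * exp (-(log x ^ β))

/-- The leading term of `∫_x^∞ term β = β⁻¹ Γ(1/β, (log x)^β)`. -/
def tailApprox (β x : ℝ) : ℝ := β⁻¹ * log x ^ (1 - β) * exp (-(log x ^ β))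

def defect (β x : ℝ) : ℝ := (1 - β) / β * log x ^ (-β)

variable {β x : ℝ}

lemma term_nonneg (hx : 0 ≤ x) : 0 ≤ term β x := by
  unfold term; positivity

lemma term_antitoneOn (hβ : 0 ≤ β) : AntitoneOn (term β) (Ici 1) := by
  intro x hx y _ hxy
  have hx0 : 0 < x := zero_lt_one.trans_le hx
  have hlog : 0 ≤ log x := log_nonneg hx
  unfold term
  gcongr

lemma defect_antitoneOn (hβ0 : 0 < β) (hβ1 : β ≤ 1) : AntitoneOn (defect β) (Ioi 1) := by
  intro x hx y _ hxy
  have hx0 : 0 < x := zero_lt_one.trans hx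
  exact mul_le_mul_of_nonneg_left
    (rpow_le_rpow_of_nonpos (log_pos hx) (log_le_log hx0 hxy) (by linarith))
    (div_nonneg (sub_nonneg.2 hβ1) hβ0.le)

lemma defect_nonneg (hβ0 : 0 < β) (hβ1 : β ≤ 1) (hx : 1 ≤ x) : 0 ≤ defect β x :=
  mul_nonneg (div_nonneg (sub_nonneg.2 hβ1) hβ0.le) (rpow_nonneg (log_nonneg hx) _)

lemma tendsto_defect_atTop (hβ : 0 < β) : Tendsto (defect β) atTop (𝓝 0) := by
  have := ((tendsto_rpow_neg_atTop hβ).comp tendsto_log_atTop).const_mul ((1 - β) / β)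
  rwa [mul_zero] at this

lemma eventually_one_lt_and_defect_lt_one (hβ : 0 < β) :
    ∀ᶠ x in atTop, 1 < x ∧ defect β x < 1 :=
  (eventually_gt_atTop 1).and ((tendsto_defect_atTop hβ).eventually (gt_mem_nhds one_pos))

lemma tailApprox_pos (hβ : 0 < β) (hx : 1 < x) : 0 < tailApprox β x := by
  have := log_pos hx
  unfold tailApprox; positivity

lemma tailApprox_inv (hβ : β ≠ 0) (hx : 1 < x) :
    (tailApprox β x)⁻¹ = β * log x ^ (β - 1) * exp (log x ^ β) := by
  have hL := log_pos hx
  have hpow : log x ^ (1 - β) * log x ^ (β - 1) = 1 := by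
    rw [← rpow_add hL]; norm_num
  rw [inv_eq_of_mul_eq_one_right]
  unfold tailApprox
  rw [exp_neg]
  field_simp
  linear_combination hpow

lemma tendsto_tailApprox_atTop (hβ : 0 < β) : Tendsto (tailApprox β) atTop (𝓝 0) := by
  have hlim : Tendsto (fun t : ℝ => β⁻¹ * (t ^ ((1 - β) / β) * exp (-(1 * t)))) atTop (𝓝 0) := by
    simpa using
      (tendsto_rpow_mul_exp_neg_mul_atTop_nhds_zero ((1 - β) / β) 1 one_pos).const_mul β⁻¹
  refine (hlim.comp ((tendsto_rpow_atTop hβ).comp tendsto_log_atTop)).congr' ?_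
  filter_upwards [eventually_ge_atTop 1] with x hx
  simp only [Function.comp, tailApprox, one_mul]
  rw [← rpow_mul (log_nonneg hx), mul_div_cancel₀ _ hβ.ne', mul_assoc]

lemma tendsto_term_div_tailApprox_atTop (hβ : β ≠ 0) :
    Tendsto (fun x => term β x / tailApprox β x) atTop (𝓝 0) := by
  have hlim := ((isLittleO_log_rpow_rpow_atTop (β - 1) one_pos).tendsto_div_nhds_zero).const_mul β
  rw [mul_zero] at hlim
  refine hlim.congr' ?_
  filter_upwards [eventually_gt_atTop 1] with x hx
  rw [div_eq_mul_inv _ (tailApprox β x), tailApprox_inv hβ hx, term, rpow_one, exp_neg]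
  field_simp

lemma hasDerivAt_tailApprox (hβ : β ≠ 0) (hx : 1 < x) :
    HasDerivAt (tailApprox β) (-(term β x * (1 - defect β x))) x := by
  have hL := log_pos hx
  have hlog : HasDerivAt log x⁻¹ x := hasDerivAt_log (zero_lt_one.trans hx).ne'
  have hpow : log x ^ (1 - β) * log x ^ (β - 1) = 1 := by
    rw [← rpow_add hL]; norm_num
  refine (((hlog.rpow_const (p := 1 - β) (Or.inl hL.ne')).const_mul β⁻¹).mul
    (hlog.rpow_const (p := β) (Or.inl hL.ne')).neg.exp).congr_deriv ?_
  have hx0 : x ≠ 0 := (zero_lt_one.trans hx).ne'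
  rw [show 1 - β - 1 = -β by ring, term, defect, Pi.neg_apply]
  field_simp
  linear_combination -β * hpow

lemma exists_tailApprox_sub_eq (hβ : β ≠ 0) (hx : 1 < x) :
    ∃ ξ ∈ Ioo x (x + 1),
      tailApprox β x - tailApprox β (x + 1) = term β ξ * (1 - defect β ξ) := by
  have hderiv : ∀ y ∈ Icc x (x + 1),
      HasDerivAt (tailApprox β) (-(term β y * (1 - defect β y))) y :=
    fun y hy => hasDerivAt_tailApprox hβ (hx.trans_le hy.1)
  obtain ⟨ξ, hξ, hslope⟩ := exists_hasDerivAt_eq_slope (tailApprox β) _ (lt_add_one x)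
    (fun y hy => (hderiv y hy).continuousAt.continuousWithinAt)
    (fun y hy => hderiv y (Ioo_subset_Icc_self hy))
  refine ⟨ξ, hξ, ?_⟩
  rw [add_sub_cancel_left, div_one] at hslope
  linarith

lemma tailApprox_sub_le_term (hβ0 : 0 < β) (hβ1 : β ≤ 1) (hx : 1 < x) :
    tailApprox β x - tailApprox β (x + 1) ≤ term β x := by
  obtain ⟨ξ, hξ, heq⟩ := exists_tailApprox_sub_eq hβ0.ne' hx
  have hξ1 : 1 ≤ ξ := hx.le.trans hξ.1.le
  rw [heq]
  calc term β ξ * (1 - defect β ξ) ≤ term β ξ :=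
        mul_le_of_le_one_right (term_nonneg (by linarith))
          (by linarith [defect_nonneg hβ0 hβ1 hξ1])
    _ ≤ term β x := term_antitoneOn hβ0.le hx.le hξ1 hξ.1.le

lemma term_add_one_mul_le_tailApprox_sub (hβ0 : 0 < β) (hβ1 : β ≤ 1) (hx : 1 < x)
    (hd : defect β x ≤ 1) :
    term β (x + 1) * (1 - defect β x) ≤ tailApprox β x - tailApprox β (x + 1) := by
  obtain ⟨ξ, hξ, heq⟩ := exists_tailApprox_sub_eq hβ0.ne' hx
  have hξ1 : 1 < ξ := hx.trans hξ.1
  rw [heq]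
  exact mul_le_mul (term_antitoneOn hβ0.le hξ1.le (by simp; linarith) hξ.2.le)
    (by linarith [defect_antitoneOn hβ0 hβ1 hx hξ1 hξ.1.le]) (by linarith)
    (term_nonneg (by linarith))

variable {a : ℝ}

lemma hasSum_tailApprox_sub (hβ0 : 0 < β) (hβ1 : β ≤ 1) (ha : 1 < a)
    (hd : defect β a ≤ 1) :
    HasSum (fun i : ℕ => tailApprox β (a + i) - tailApprox β (a + i + 1)) (tailApprox β a) := by
  have hai : ∀ i : ℕ, 1 < a + i := fun i => by linarith [Nat.cast_nonneg (α := ℝ) i]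
  have hanti : Antitone fun i : ℕ => tailApprox β (a + i) := by
    refine antitone_nat_of_succ_le fun i => ?_
    have hdi : defect β (a + i) ≤ 1 :=
      (defect_antitoneOn hβ0 hβ1 ha (hai i) (by simp)).trans hd
    have := term_add_one_mul_le_tailApprox_sub hβ0 hβ1 (hai i) hdi
    have := mul_nonneg (term_nonneg (β := β) (x := a + i + 1) (by linarith [hai i]))
      (sub_nonneg.2 hdi)
    push_cast
    rw [← add_assoc]
    linarith
  simpa [add_assoc] using hasSum_sub_succ_of_antitone hanti <| (tendsto_tailApprox_atTop hβ0).comp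
    (tendsto_atTop_add_const_left atTop a tendsto_natCast_atTop_atTop)

lemma term_le_tailApprox_sub (hβ0 : 0 < β) (hβ1 : β ≤ 1) (ha : 1 < a) (hd : defect β a < 1)
    (i : ℕ) :
    term β (a + i + 1) ≤
      (1 - defect β a)⁻¹ * (tailApprox β (a + i) - tailApprox β (a + i + 1)) := by
  have hai : 1 < a + i := by linarith [Nat.cast_nonneg (α := ℝ) i]
  have hdi : defect β (a + i) ≤ defect β a := defect_antitoneOn hβ0 hβ1 ha hai (by simp)
  rw [le_inv_mul_iff₀ (by linarith)]
  calc (1 - defect β a) * term β (a + i + 1)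
        ≤ term β (a + i + 1) * (1 - defect β (a + i)) := by
        rw [mul_comm]
        exact mul_le_mul_of_nonneg_left (by linarith) (term_nonneg (by linarith))
    _ ≤ _ := term_add_one_mul_le_tailApprox_sub hβ0 hβ1 hai (by linarith)

lemma summable_term_add (hβ0 : 0 < β) (hβ1 : β ≤ 1) (ha : 1 < a) (hd : defect β a < 1) :
    Summable fun i : ℕ => term β (a + i + 1) :=
  .of_nonneg_of_le (fun i => term_nonneg (by positivity)) (term_le_tailApprox_sub hβ0 hβ1 ha hd)
    ((hasSum_tailApprox_sub hβ0 hβ1 ha hd.le).mul_left _).summable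

lemma tsum_term_add_le (hβ0 : 0 < β) (hβ1 : β ≤ 1) (ha : 1 < a) (hd : defect β a < 1) :
    ∑' i : ℕ, term β (a + i + 1) ≤ (1 - defect β a)⁻¹ * tailApprox β a :=
  hasSum_le (term_le_tailApprox_sub hβ0 hβ1 ha hd) (summable_term_add hβ0 hβ1 ha hd).hasSum
    ((hasSum_tailApprox_sub hβ0 hβ1 ha hd.le).mul_left _)

lemma tailApprox_add_one_le_tsum (hβ0 : 0 < β) (hβ1 : β ≤ 1) (ha : 1 < a)
    (hd : defect β a < 1) :
    tailApprox β (a + 1) ≤ ∑' i : ℕ, term β (a + i + 1) := by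
  have ha1 : 1 < a + 1 := by linarith
  have hd1 : defect β (a + 1) ≤ 1 := (defect_antitoneOn hβ0 hβ1 ha ha1 (by simp)).trans hd.le
  refine hasSum_le (fun i => ?_) (hasSum_tailApprox_sub hβ0 hβ1 ha1 hd1)
    (summable_term_add hβ0 hβ1 ha hd).hasSum
  rw [add_right_comm]
  exact tailApprox_sub_le_term hβ0 hβ1 (by linarith [Nat.cast_nonneg (α := ℝ) i])

lemma tendsto_tsum_term_div_tailApprox (hβ0 : 0 < β) (hβ1 : β ≤ 1) :
    Tendsto (fun a => (∑' i : ℕ, term β (a + i + 1)) / tailApprox β a) atTop (𝓝 1) := by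
  have hlower : Tendsto (fun a => 1 - term β a / tailApprox β a) atTop (𝓝 1) := by
    simpa using tendsto_const_nhds.sub (tendsto_term_div_tailApprox_atTop hβ0.ne')
  have hupper : Tendsto (fun a => (1 - defect β a)⁻¹) atTop (𝓝 1) := by
    simpa using
      (tendsto_const_nhds.sub (tendsto_defect_atTop hβ0)).inv₀ (by norm_num : (1 : ℝ) - 0 ≠ 0)
  refine tendsto_of_tendsto_of_tendsto_of_le_of_le' hlower hupper ?_ ?_
  · filter_upwards [eventually_one_lt_and_defect_lt_one hβ0] with a ⟨ha, hd⟩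
    have hG := tailApprox_pos hβ0 ha
    rw [one_sub_div hG.ne']
    refine div_le_div_of_nonneg_right ?_ hG.le
    linarith [tailApprox_sub_le_term hβ0 hβ1 ha, tailApprox_add_one_le_tsum hβ0 hβ1 ha hd]
  · filter_upwards [eventually_one_lt_and_defect_lt_one hβ0] with a ⟨ha, hd⟩
    rw [div_le_iff₀ (tailApprox_pos hβ0 ha)]
    exact tsum_term_add_le hβ0 hβ1 ha hd

lemma summable_term_natCast_add (hβ0 : 0 < β) (hβ1 : β ≤ 1) (n : ℕ) :
    Summable fun i : ℕ => term β (n + i + 1) := by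
  obtain ⟨m, hm⟩ := (tendsto_natCast_atTop_atTop.eventually
    (eventually_one_lt_and_defect_lt_one hβ0)).exists
  have hsum : Summable fun k : ℕ => term β (k + 1) :=
    (summable_nat_add_iff m).1 <| (summable_term_add hβ0 hβ1 hm.1 hm.2).congr fun i => by
      push_cast; ring_nf
  exact ((summable_nat_add_iff n).2 hsum).congr fun i => by push_cast; ring_nf

end LogStretched

end

open LogStretched

/-- **Lemma 6.2, barely super-linear log-stretched case.** For `β ∈ (0,1)` and
`s i = (i+1)·exp((log(i+1))^β)`, every tail sum `∑_{i=n}^∞ 1/s i` is finite and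
`∑_{i=n}^∞ 1/s i = (β⁻¹+o(1))·(log n)^{1−β}·exp(−(log n)^β)` as `n → ∞`. -/
theorem stmt_8
    (β : ℝ) (hβ0 : 0 < β) (hβ1 : β < 1)
    (s : ℕ → ℝ)
    (hs : ∀ i : ℕ, s i = ((i : ℝ) + 1) * Real.exp (Real.log ((i : ℝ) + 1) ^ β)) :
    (∀ n : ℕ, Summable fun i : ℕ => 1 / s (n + i)) ∧
      Tendsto (fun n : ℕ => (∑' i : ℕ, 1 / s (n + i)) *
          (β * Real.log n ^ (β - 1) * Real.exp (Real.log n ^ β)))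
        atTop (nhds 1) := by
  have hterm : ∀ n i : ℕ, 1 / s (n + i) = term β ((n : ℝ) + i + 1) := fun n i => by
    rw [hs, term, exp_neg, one_div, mul_inv]
    push_cast
    rfl
  simp_rw [hterm]
  refine ⟨summable_term_natCast_add hβ0 hβ1.le, ?_⟩
  refine ((tendsto_tsum_term_div_tailApprox hβ0 hβ1.le).comp
    tendsto_natCast_atTop_atTop).congr' ?_
  filter_upwards [eventually_gt_atTop 1] with n hn
  rw [Function.comp_apply, div_eq_mul_inv, tailApprox_inv hβ0.ne' (by exact_mod_cast hn)]
end

section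
/- Let a ≥ 1, b ∈ (0,1] and z > 0. Then ∫_0^1 e^{−zt}·t^{a−1}·(1−t)^{b−1} dt ≤ exp(−z/2 + z²) · ∫_0^1 t^{a−1}·(1−t)^{b−1} dt. Equivalently, if B is a Beta(a,b)-distributed random variable, then E[e^{−zB}] ≤ exp(−z/2 + z²). -/
open MeasureTheory

private lemma beta_meas (p q : ℝ) :
    Measurable (fun t : ℝ => t ^ (p - 1) * (1 - t) ^ (q - 1)) :=
  (measurable_id.pow_const _).mul ((measurable_const.sub measurable_id).pow_const _)

private lemma beta_integrable {p q : ℝ} (hp : 0 < p) (hq : 0 < q) :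
    IntegrableOn (fun t : ℝ => t ^ (p - 1) * (1 - t) ^ (q - 1)) (Set.Ioo 0 1) := by
  have hmeas := beta_meas p q
  have bound : ∀ r : ℝ, ∀ t : ℝ, 2⁻¹ ≤ t → t ≤ 1 →
      t ^ (r - 1) ≤ max ((2:ℝ)⁻¹ ^ (r - 1)) 1 := by
    intro r t ht1 ht2
    rcases le_or_gt r 1 with h | h
    · exact le_max_of_le_left (Real.rpow_le_rpow_of_nonpos (by norm_num) ht1 (by linarith))
    · exact le_max_of_le_right (Real.rpow_le_one (by linarith) ht2 (by linarith))
  have h1 : IntegrableOn (fun t : ℝ => t ^ (p - 1) * (1 - t) ^ (q - 1)) (Set.Ioc 0 2⁻¹) := by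
    have hbase : IntegrableOn (fun t : ℝ => t ^ (p - 1)) (Set.Ioc (0:ℝ) 2⁻¹) := by
      rw [← intervalIntegrable_iff_integrableOn_Ioc_of_le (by norm_num : (0:ℝ) ≤ 2⁻¹)]
      exact intervalIntegral.intervalIntegrable_rpow' (by linarith)
    refine Integrable.mono (hbase.const_mul (max ((2:ℝ)⁻¹ ^ (q - 1)) 1))
      hmeas.aestronglyMeasurable.restrict ?_
    filter_upwards [ae_restrict_mem measurableSet_Ioc] with t ht
    have ht0 : 0 < t := ht.1
    have hb := bound q (1 - t) (by linarith [ht.2]) (by linarith)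
    have h1t : (0:ℝ) ≤ (1 - t) ^ (q - 1) := Real.rpow_nonneg (by linarith [ht.2]) _
    have h2 : (0:ℝ) ≤ t ^ (p - 1) := Real.rpow_nonneg ht0.le _
    have hC : (0:ℝ) ≤ max ((2:ℝ)⁻¹ ^ (q - 1)) 1 := le_trans zero_le_one (le_max_right _ _)
    rw [Real.norm_of_nonneg (mul_nonneg h2 h1t), Real.norm_of_nonneg (mul_nonneg hC h2)]
    calc t ^ (p-1) * (1-t) ^ (q-1) ≤ t ^ (p-1) * max ((2:ℝ)⁻¹ ^ (q - 1)) 1 :=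
          mul_le_mul_of_nonneg_left hb h2
      _ = _ := mul_comm _ _
  have h2 : IntegrableOn (fun t : ℝ => t ^ (p - 1) * (1 - t) ^ (q - 1)) (Set.Ioc 2⁻¹ 1) := by
    have hbase : IntegrableOn (fun t : ℝ => (1 - t) ^ (q - 1)) (Set.Ioc (2⁻¹:ℝ) 1) := by
      rw [← intervalIntegrable_iff_integrableOn_Ioc_of_le (by norm_num : (2⁻¹:ℝ) ≤ 1)]
      have h := (intervalIntegral.intervalIntegrable_rpow' (a := 0) (b := 2⁻¹)
        (r := q - 1) (by linarith)).comp_sub_left 1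
      norm_num at h
      rw [show (2:ℝ)⁻¹ = 1/2 by norm_num]
      exact h.symm
    refine Integrable.mono (hbase.const_mul (max ((2:ℝ)⁻¹ ^ (p - 1)) 1))
      hmeas.aestronglyMeasurable.restrict ?_
    filter_upwards [ae_restrict_mem measurableSet_Ioc] with t ht
    have ht0 : 0 < t := lt_trans (by norm_num) ht.1
    have hb := bound p t ht.1.le ht.2
    have h1t : (0:ℝ) ≤ (1 - t) ^ (q - 1) := Real.rpow_nonneg (by linarith [ht.2]) _
    have h2 : (0:ℝ) ≤ t ^ (p - 1) := Real.rpow_nonneg ht0.le _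
    have hC : (0:ℝ) ≤ max ((2:ℝ)⁻¹ ^ (p - 1)) 1 := le_trans zero_le_one (le_max_right _ _)
    rw [Real.norm_of_nonneg (mul_nonneg h2 h1t), Real.norm_of_nonneg (mul_nonneg hC h1t)]
    exact mul_le_mul_of_nonneg_right hb h1t
  exact (h1.union h2).mono_set (fun t ht => by
    rcases le_or_gt t 2⁻¹ with h | h
    · exact Or.inl ⟨ht.1, h⟩
    · exact Or.inr ⟨h, ht.2.le⟩)

private lemma int_mul {w : ℝ → ℝ} (hw : IntegrableOn w (Set.Ioo 0 1))
    (hwm : Measurable w) {g : ℝ → ℝ} (hg : Measurable g) {c : ℝ}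
    (hgc : ∀ t ∈ Set.Ioo (0:ℝ) 1, |g t| ≤ c)
    (hwn : ∀ t ∈ Set.Ioo (0:ℝ) 1, 0 ≤ w t) :
    IntegrableOn (fun t => g t * w t) (Set.Ioo 0 1) := by
  refine Integrable.mono (hw.const_mul c) (hg.mul hwm).aestronglyMeasurable.restrict ?_
  filter_upwards [ae_restrict_mem measurableSet_Ioo] with t ht
  have h1 := hgc t ht; have h2 := hwn t ht
  have hc : 0 ≤ c := le_trans (abs_nonneg _) h1
  rw [Real.norm_eq_abs, Real.norm_eq_abs, abs_mul, abs_of_nonneg h2,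
    abs_of_nonneg (mul_nonneg hc h2)]
  exact mul_le_mul_of_nonneg_right h1 h2

/-- **Equation (eq:laplacebeta).** For `a ≥ 1`, `b ∈ (0,1]` and `z > 0`,
`∫_0^1 e^{−zt}·t^{a−1}·(1−t)^{b−1} dt ≤ exp(−z/2 + z²) · ∫_0^1 t^{a−1}·(1−t)^{b−1} dt`;
equivalently, a `Beta(a,b)` random variable `B` satisfies `E[e^{−zB}] ≤ exp(−z/2 + z²)`. -/
theorem stmt_12
    (a b z : ℝ) (ha : 1 ≤ a) (hb0 : 0 < b) (hb1 : b ≤ 1) (hz : 0 < z) :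
    ∫ t in Set.Ioo (0 : ℝ) 1, Real.exp (-z * t) * t ^ (a - 1) * (1 - t) ^ (b - 1) ≤
      Real.exp (-z / 2 + z ^ 2) *
        ∫ t in Set.Ioo (0 : ℝ) 1, t ^ (a - 1) * (1 - t) ^ (b - 1) := by
  have ha0 : 0 < a := lt_of_lt_of_le one_pos ha
  set w : ℝ → ℝ := fun t => t ^ (a - 1) * (1 - t) ^ (b - 1) with hw_def
  set w' : ℝ → ℝ := fun t => t ^ (b - 1) * (1 - t) ^ (a - 1) with hw'_def
  have hw : IntegrableOn w (Set.Ioo 0 1) := beta_integrable ha0 hb0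
  have hw' : IntegrableOn w' (Set.Ioo 0 1) := beta_integrable hb0 ha0
  have wnn : ∀ t ∈ Set.Ioo (0:ℝ) 1, 0 ≤ w t := fun t ht =>
    mul_nonneg (Real.rpow_nonneg ht.1.le _) (Real.rpow_nonneg (by linarith [ht.2]) _)
  have w'nn : ∀ t ∈ Set.Ioo (0:ℝ) 1, 0 ≤ w' t := fun t ht =>
    mul_nonneg (Real.rpow_nonneg ht.1.le _) (Real.rpow_nonneg (by linarith [ht.2]) _)
  have hwt : IntegrableOn (fun t => t * w t) (Set.Ioo 0 1) :=
    int_mul hw (beta_meas a b) measurable_id (c := 1)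
      (fun t ht => by rw [abs_of_nonneg ht.1.le]; exact ht.2.le) wnn
  have hJw : IntegrableOn (fun t => (2*t-1) * w t) (Set.Ioo 0 1) :=
    int_mul hw (beta_meas a b) (by fun_prop) (c := 1)
      (fun t ht => by rw [abs_le]; constructor <;> [linarith [ht.1]; linarith [ht.2]]) wnn
  have hJw' : IntegrableOn (fun t => (2*t-1) * w' t) (Set.Ioo 0 1) :=
    int_mul hw' (beta_meas b a) (by fun_prop) (c := 1)
      (fun t ht => by rw [abs_le]; constructor <;> [linarith [ht.1]; linarith [ht.2]]) w'nn
  have hwe : IntegrableOn (fun t => Real.exp (-z*t) * w t) (Set.Ioo 0 1) :=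
    int_mul hw (beta_meas a b) (by fun_prop) (c := 1)
      (fun t ht => by
        rw [abs_of_nonneg (Real.exp_pos _).le, ← Real.exp_zero]
        exact Real.exp_le_exp.2 (by nlinarith [ht.1])) wnn
  have hIoo : ∀ f : ℝ → ℝ, ∫ t in Set.Ioo (0:ℝ) 1, f t = ∫ t in (0:ℝ)..1, f t := by
    intro f
    rw [intervalIntegral.integral_of_le zero_le_one, integral_Ioc_eq_integral_Ioo]
  -- symmetry: ∫ (2t-1) w' = - ∫ (2t-1) w
  have key : ∫ x in (0:ℝ)..1, -((2*x-1) * w x) = ∫ x in (0:ℝ)..1, (2*x-1) * w' x := by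
    have h := intervalIntegral.integral_comp_sub_left (a := 0) (b := 1)
      (fun t : ℝ => (2*t-1) * w' t) 1
    norm_num at h
    rw [← h]
    apply intervalIntegral.integral_congr
    intro x _
    simp only [hw_def, hw'_def]
    rw [show (1:ℝ)-(1-x) = x by ring]
    ring
  -- positivity of ∫ (2t-1) (w - w')
  have hdiff : (0:ℝ) ≤ ∫ t in Set.Ioo (0:ℝ) 1, ((2*t-1) * w t - (2*t-1) * w' t) := by
    apply setIntegral_nonneg measurableSet_Ioo
    intro t ht
    obtain ⟨ht0, ht1'⟩ := ht
    have ht1 : (0:ℝ) < 1 - t := by linarith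
    simp only [hw_def, hw'_def]
    have e1 : t^(a-1) = t^(b-1) * t^(a-b) := by
      rw [← Real.rpow_add ht0]; congr 1; ring
    have e2 : (1-t)^(a-1) = (1-t)^(b-1) * (1-t)^(a-b) := by
      rw [← Real.rpow_add ht1]; congr 1; ring
    rw [e1, e2]
    have hP : (0:ℝ) ≤ t^(b-1) * (1-t)^(b-1) :=
      mul_nonneg (Real.rpow_nonneg ht0.le _) (Real.rpow_nonneg ht1.le _)
    rcases le_total t (1/2 : ℝ) with h | h
    · have h2 : t^(a-b) ≤ (1-t)^(a-b) := Real.rpow_le_rpow ht0.le (by linarith) (by linarith)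
      nlinarith [mul_nonneg (mul_nonneg hP (by linarith : (0:ℝ) ≤ 1 - 2*t)) (sub_nonneg.2 h2)]
    · have h2 : (1-t)^(a-b) ≤ t^(a-b) := Real.rpow_le_rpow ht1.le (by linarith) (by linarith)
      nlinarith [mul_nonneg (mul_nonneg hP (by linarith : (0:ℝ) ≤ 2*t - 1)) (sub_nonneg.2 h2)]
  rw [integral_sub hJw hJw'] at hdiff
  have hJ : 0 ≤ ∫ t in Set.Ioo (0:ℝ) 1, (2*t-1) * w t := by
    have h1 : ∫ t in Set.Ioo (0:ℝ) 1, (2*t-1) * w' t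
        = - ∫ t in Set.Ioo (0:ℝ) 1, (2*t-1) * w t := by
      rw [hIoo (fun t => (2*t-1) * w' t), hIoo (fun t => (2*t-1) * w t), ← key,
        intervalIntegral.integral_neg]
    rw [h1] at hdiff
    linarith
  -- J = 2 I1 - I0
  have hsplit : ∫ t in Set.Ioo (0:ℝ) 1, (2*t-1) * w t
      = 2 * (∫ t in Set.Ioo (0:ℝ) 1, t * w t) - ∫ t in Set.Ioo (0:ℝ) 1, w t := by
    rw [show (fun t : ℝ => (2*t-1) * w t) = fun t => 2 * (t * w t) - w t from
      funext fun t => by ring]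
    rw [integral_sub (hwt.const_mul 2) hw, integral_const_mul]
  -- convexity bound
  have conv : ∀ t ∈ Set.Ioo (0:ℝ) 1, Real.exp (-z*t) ≤ 1 - (1 - Real.exp (-z)) * t := by
    intro t ht
    have h := convexOn_exp.2 (Set.mem_univ (0:ℝ)) (Set.mem_univ (-z))
      (by linarith [ht.2] : (0:ℝ) ≤ 1 - t) ht.1.le (by ring)
    simp only [smul_eq_mul, mul_zero, zero_add, Real.exp_zero, mul_one] at h
    rw [show -z*t = t * -z by ring]
    nlinarith [h]
  have hfe : (fun t : ℝ => (1 - (1 - Real.exp (-z))*t) * w t)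
      = fun t => w t - (1 - Real.exp (-z)) * (t * w t) := funext fun t => by ring
  have hlin : IntegrableOn (fun t : ℝ => (1 - (1 - Real.exp (-z))*t) * w t) (Set.Ioo 0 1) := by
    rw [hfe]; exact hw.sub (hwt.const_mul _)
  have hmono : ∫ t in Set.Ioo (0:ℝ) 1, Real.exp (-z*t) * w t
      ≤ ∫ t in Set.Ioo (0:ℝ) 1, (1 - (1 - Real.exp (-z))*t) * w t :=
    setIntegral_mono_on hwe hlin measurableSet_Ioo
      (fun t ht => mul_le_mul_of_nonneg_right (conv t ht) (wnn t ht))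
  have hval : ∫ t in Set.Ioo (0:ℝ) 1, (1 - (1 - Real.exp (-z))*t) * w t
      = (∫ t in Set.Ioo (0:ℝ) 1, w t)
        - (1 - Real.exp (-z)) * ∫ t in Set.Ioo (0:ℝ) 1, t * w t := by
    rw [hfe, integral_sub hw (hwt.const_mul _), integral_const_mul]
  -- scalar inequality
  have scalar : (1 + Real.exp (-z))/2 ≤ Real.exp (-z/2 + z^2) := by
    have h1 : Real.exp (-z) ≤ 1 - z + z^2 := by
      rw [Real.exp_neg, inv_eq_one_div, div_le_iff₀ (Real.exp_pos z)]
      have hq : (0:ℝ) ≤ 1 - z + z^2 := by nlinarith [sq_nonneg (z-1)]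
      nlinarith [mul_le_mul_of_nonneg_left (Real.add_one_le_exp z) hq,
        mul_pos hz (mul_pos hz hz)]
    have h2 := Real.add_one_le_exp (-z/2 + z^2)
    nlinarith [sq_nonneg z]
  have hI0 : 0 ≤ ∫ t in Set.Ioo (0:ℝ) 1, w t := setIntegral_nonneg measurableSet_Ioo wnn
  have hez : Real.exp (-z) ≤ 1 := by
    rw [← Real.exp_zero]; exact Real.exp_le_exp.2 (by linarith)
  have hLHS : ∫ t in Set.Ioo (0:ℝ) 1, Real.exp (-z * t) * t ^ (a - 1) * (1 - t) ^ (b - 1)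
      = ∫ t in Set.Ioo (0:ℝ) 1, Real.exp (-z*t) * w t := by
    apply setIntegral_congr_fun measurableSet_Ioo
    intro t _
    simp only [hw_def]; ring
  rw [hLHS]
  have hc0 : (0:ℝ) ≤ 1 - Real.exp (-z) := by linarith
  set I0 := ∫ t in Set.Ioo (0:ℝ) 1, w t
  set I1 := ∫ t in Set.Ioo (0:ℝ) 1, t * w t
  rw [hval] at hmono
  have h2I : I0 ≤ 2 * I1 := by rw [hsplit] at hJ; linarith
  nlinarith [mul_le_mul_of_nonneg_left h2I hc0,
    mul_le_mul_of_nonneg_left scalar hI0,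
    mul_le_mul_of_nonneg_right hez hI0]
end

section
/- Let β ∈ (0,1), γ ≥ 0 and ν > 1 with β·ν < 1. Define s(i) := (i+1)·exp((log(i+1))^β) for i ∈ ℕ₀. Let g : [0,∞) → (0,∞) be continuous and regularly varying with exponent 1, let h : [0,∞) → [0,∞) be continuous and regularly varying with exponent γ, and suppose g(w) ≥ g(0) and h(w) ≥ h(0) for all w ≥ 0. Define f(i,w) := g(w)·s(i) + h(w) and, for w ≥ 0, μ_n^w := ∑_{i=n}^∞ 1/f(i,w) (which is finite). Let W be a nonnegative random variable whose tail satisfies: there exist c̲ > 0 and x̲ > 0 such that P(W ≥ x) ≥ exp(−c̲·(log x)^ν) for all x ≥ x̲. Let (E_j)_{j∈ℕ₀} be i.i.d. rate-one exponential random variables, independent of W, and define the explosion time 𝒫 := ∑_{j=0}^∞ E_j/f(j,W). Then for every w ≥ 0 and every d ∈ (0,1): ∑_{n=1}^∞ P(𝒫 < d·μ_n^w) = ∞. -/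
open MeasureTheory ProbabilityTheory Filter

lemma summable_exp_neg_rpow {c β : ℝ} (hc : 0 < c) (hβ : 0 < β) :
    Summable (fun k : ℕ => Real.exp (-(c * (k : ℝ) ^ β))) := by
  have hlo := isLittleO_log_rpow_atTop hβ
  have hev : ∀ᶠ x : ℝ in atTop, 2 * Real.log x ≤ c * x ^ β := by
    have hd := hlo.def (c := c / 2) (by positivity)
    filter_upwards [hd, eventually_ge_atTop (0:ℝ)] with x hx hx0
    have hrn : (0:ℝ) ≤ x ^ β := Real.rpow_nonneg hx0 _
    have : |Real.log x| ≤ c / 2 * |x ^ β| := by simpa [Real.norm_eq_abs] using hx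
    rw [abs_of_nonneg hrn] at this
    have h1 : Real.log x ≤ c / 2 * x ^ β := (le_abs_self _).trans this
    linarith
  have hevn : ∀ᶠ k : ℕ in atTop, Real.exp (-(c * (k : ℝ) ^ β)) ≤ ((k:ℝ) ^ (2:ℝ))⁻¹ := by
    have h2 := (tendsto_natCast_atTop_atTop (R := ℝ)).eventually hev
    filter_upwards [h2, eventually_ge_atTop 1] with k hk hk1
    have hkpos : (0:ℝ) < (k:ℝ) := by exact_mod_cast hk1
    rw [← Real.exp_log (x := ((k:ℝ) ^ (2:ℝ))⁻¹) (by positivity)]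
    apply Real.exp_le_exp.2
    rw [Real.log_inv, Real.log_rpow hkpos]
    linarith
  have hsum : Summable (fun k : ℕ => ((k:ℝ) ^ (2:ℝ))⁻¹) :=
    (Real.summable_nat_rpow_inv).2 (by norm_num)
  apply summable_of_isBigO_nat hsum
  apply Asymptotics.IsBigO.of_bound 1
  filter_upwards [hevn] with k hk
  have h1 : (0:ℝ) ≤ Real.exp (-(c * (k:ℝ) ^ β)) := (Real.exp_pos _).le
  have h2 : (0:ℝ) ≤ ((k:ℝ) ^ (2:ℝ))⁻¹ := by positivity
  simp only [Real.norm_eq_abs, abs_of_nonneg h1, abs_of_nonneg h2, one_mul]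
  exact hk

lemma summable_inv_s {β : ℝ} (hβ0 : 0 < β) :
    Summable (fun i : ℕ => 1 / (((i : ℝ) + 1) * Real.exp (Real.log ((i : ℝ) + 1) ^ β))) := by
  set a : ℕ → ℝ := fun i => 1 / (((i : ℝ) + 1) * Real.exp (Real.log ((i : ℝ) + 1) ^ β)) with ha
  have hpos : ∀ i : ℕ, 0 < ((i : ℝ) + 1) * Real.exp (Real.log ((i : ℝ) + 1) ^ β) := by
    intro i
    have h1 : (0:ℝ) < (i:ℝ) + 1 := by positivity
    positivity
  have hnonneg : ∀ i, 0 ≤ a i := fun i => le_of_lt (one_div_pos.2 (hpos i))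
  have hmono : ∀ ⦃m n : ℕ⦄, 0 < m → m ≤ n → a n ≤ a m := by
    intro m n _ hmn
    apply one_div_le_one_div_of_le (hpos m)
    have hm1 : (1:ℝ) ≤ (m:ℝ) + 1 := by have := Nat.cast_nonneg (α := ℝ) m; linarith
    have hmn' : (m:ℝ) + 1 ≤ (n:ℝ) + 1 := by
      have : (m:ℝ) ≤ n := by exact_mod_cast hmn
      linarith
    have hlog : Real.log ((m:ℝ)+1) ≤ Real.log ((n:ℝ)+1) :=
      Real.log_le_log (by linarith) hmn'
    have hlognn : 0 ≤ Real.log ((m:ℝ)+1) := Real.log_nonneg hm1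
    have hr : Real.log ((m:ℝ)+1) ^ β ≤ Real.log ((n:ℝ)+1) ^ β :=
      Real.rpow_le_rpow hlognn hlog hβ0.le
    have := Real.exp_le_exp.2 hr
    apply mul_le_mul hmn' this (Real.exp_pos _).le (by linarith)
  rw [← summable_condensed_iff_of_nonneg hnonneg hmono]
  have hbd : ∀ k : ℕ, (2:ℝ) ^ k * a (2 ^ k) ≤ Real.exp (-((Real.log 2) ^ β * (k:ℝ) ^ β)) := by
    intro k
    have h2k : (0:ℝ) < (2:ℝ) ^ k := by positivity
    have hcast : ((2 ^ k : ℕ) : ℝ) = (2:ℝ) ^ k := by push_cast; ring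
    have hb : (2:ℝ)^k * a (2^k) = (2:ℝ)^k / (((2:ℝ)^k + 1) * Real.exp (Real.log ((2:ℝ)^k + 1) ^ β)) := by
      rw [ha]; simp only [hcast, mul_one_div]
    rw [hb]
    have hlog2 : Real.log ((2:ℝ)^k) = (k:ℝ) * Real.log 2 := by
      simp [Real.log_pow, mul_comm]
    have hlogge : (k:ℝ) * Real.log 2 ≤ Real.log ((2:ℝ)^k + 1) := by
      rw [← hlog2]; exact Real.log_le_log h2k (by linarith)
    have hknn : (0:ℝ) ≤ (k:ℝ) * Real.log 2 := by
      have := Real.log_nonneg (by norm_num : (1:ℝ) ≤ 2)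
      positivity
    have hr : ((k:ℝ) * Real.log 2) ^ β ≤ Real.log ((2:ℝ)^k + 1) ^ β :=
      Real.rpow_le_rpow hknn hlogge hβ0.le
    have hmul : ((k:ℝ) * Real.log 2) ^ β = (k:ℝ)^β * (Real.log 2)^β :=
      Real.mul_rpow (by positivity) (Real.log_nonneg (by norm_num))
    have step1 : (2:ℝ)^k / (((2:ℝ)^k + 1) * Real.exp (Real.log ((2:ℝ)^k + 1) ^ β))
        ≤ Real.exp (-(Real.log ((2:ℝ)^k + 1) ^ β)) := by
      rw [Real.exp_neg, div_eq_mul_inv, mul_inv]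
      have : (2:ℝ)^k * ((2:ℝ)^k + 1)⁻¹ ≤ 1 := by
        rw [← div_eq_mul_inv]
        exact div_le_one_of_le₀ (by linarith) (by positivity)
      calc (2:ℝ)^k * (((2:ℝ)^k+1)⁻¹ * (Real.exp (Real.log ((2:ℝ)^k + 1) ^ β))⁻¹)
          = ((2:ℝ)^k * ((2:ℝ)^k+1)⁻¹) * (Real.exp (Real.log ((2:ℝ)^k + 1) ^ β))⁻¹ := by ring
        _ ≤ 1 * (Real.exp (Real.log ((2:ℝ)^k + 1) ^ β))⁻¹ := by
            apply mul_le_mul_of_nonneg_right this (by positivity)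
        _ = (Real.exp (Real.log ((2:ℝ)^k + 1) ^ β))⁻¹ := by ring
    refine step1.trans ?_
    apply Real.exp_le_exp.2
    rw [neg_le_neg_iff]
    calc (Real.log 2) ^ β * (k:ℝ) ^ β = ((k:ℝ) * Real.log 2) ^ β := by rw [hmul]; ring
      _ ≤ Real.log ((2:ℝ)^k + 1) ^ β := hr
  apply Summable.of_nonneg_of_le (fun k => by positivity) hbd
  exact summable_exp_neg_rpow (Real.rpow_pos_of_pos (Real.log_pos (by norm_num)) β) hβ0

lemma potter_step (g : ℝ → ℝ) (hgcont : Continuous g)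
    (hgpos : ∀ w : ℝ, 0 ≤ w → 0 < g w)
    (hgreg : ∀ a : ℝ, 0 < a → Tendsto (fun x => g (a * x) / g x) atTop (nhds a)) :
    ∃ ρ X1 : ℝ, 0 < ρ ∧ 1 ≤ X1 ∧
      ∀ b : ℝ, 1 ≤ b → b ≤ 1 + ρ → ∀ x : ℝ, X1 ≤ x → (4/9) * g x ≤ g (b * x) := by
  classical
  set H : ℕ → Set ℝ := fun k => {a : ℝ | ∀ x : ℝ, (k : ℝ) + 1 ≤ x →
      (2/3) * a * g x ≤ g (a * x) ∧ g (a * x) ≤ (3/2) * a * g x} with hH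
  have hHclosed : ∀ k, IsClosed (H k) := by
    intro k
    have he : H k = ⋂ (x : ℝ) (_ : (k : ℝ) + 1 ≤ x),
        ({a : ℝ | (2/3) * a * g x ≤ g (a * x)} ∩ {a : ℝ | g (a * x) ≤ (3/2) * a * g x}) := by
      ext a; simp only [hH, Set.mem_setOf_eq, Set.mem_iInter, Set.mem_inter_iff]
    rw [he]
    refine isClosed_iInter fun x => isClosed_iInter fun _ => IsClosed.inter ?_ ?_
    · exact isClosed_le (by fun_prop) (hgcont.comp (by fun_prop))
    · exact isClosed_le (hgcont.comp (by fun_prop)) (by fun_prop)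
  have hcover : ∀ a : ℝ, 1 ≤ a → ∃ k : ℕ, a ∈ H k := by
    intro a ha1
    have ha : (0:ℝ) < a := by linarith
    have h1 : ∀ᶠ x in atTop, (2/3) * a ≤ g (a * x) / g x :=
      (hgreg a ha).eventually_const_le (by linarith)
    have h2 : ∀ᶠ x in atTop, g (a * x) / g x ≤ (3/2) * a :=
      (hgreg a ha).eventually_le_const (by linarith)
    have h3 : ∀ᶠ x : ℝ in atTop, (1:ℝ) ≤ x := eventually_ge_atTop 1
    obtain ⟨X, hX⟩ := (h1.and (h2.and h3)).exists_forall_of_atTop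
    refine ⟨⌈X⌉₊, fun x hx => ?_⟩
    have hxX : X ≤ x := le_trans (Nat.le_ceil X) (by linarith)
    obtain ⟨hb1, hb2, hb3⟩ := hX x hxX
    have hgx : 0 < g x := hgpos x (by linarith)
    constructor
    · calc (2/3) * a * g x ≤ (g (a * x) / g x) * g x :=
            mul_le_mul_of_nonneg_right hb1 hgx.le
        _ = g (a * x) := by field_simp
    · calc g (a * x) = (g (a * x) / g x) * g x := by field_simp
        _ ≤ (3/2) * a * g x := mul_le_mul_of_nonneg_right hb2 hgx.le
  haveI : CompleteSpace (Set.Icc (1:ℝ) 4) := isClosed_Icc.completeSpace_coe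
  haveI : Nonempty (Set.Icc (1:ℝ) 4) := ⟨⟨1, by norm_num, by norm_num⟩⟩
  obtain ⟨K, hK⟩ := nonempty_interior_of_iUnion_of_closed
    (X := Set.Icc (1:ℝ) 4) (f := fun k : ℕ => Subtype.val ⁻¹' H k)
    (fun k => (hHclosed k).preimage continuous_subtype_val)
    (by
      rw [Set.eq_univ_iff_forall]
      intro a
      obtain ⟨k, hk⟩ := hcover (a : ℝ) a.2.1
      exact Set.mem_iUnion.2 ⟨k, hk⟩)
  obtain ⟨a0s, ha0s⟩ := hK
  obtain ⟨δ, hδ, hball⟩ := Metric.isOpen_iff.1 isOpen_interior a0s ha0s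
  set a0 : ℝ := (a0s : ℝ) with ha0
  have ha0mem : a0 ∈ Set.Icc (1:ℝ) 4 := a0s.2
  have hballH : ∀ b : ℝ, b ∈ Set.Icc (1:ℝ) 4 → |b - a0| < δ → b ∈ H K := by
    intro b hb hbd
    have hm : (⟨b, hb⟩ : Set.Icc (1:ℝ) 4) ∈ Metric.ball a0s δ := by
      rw [Metric.mem_ball, Subtype.dist_eq]
      simpa [Real.dist_eq] using hbd
    exact interior_subset (s := Subtype.val ⁻¹' H K) (hball hm)
  set δ₁ : ℝ := min δ 1 with hδ₁
  have hδ₁pos : 0 < δ₁ := lt_min hδ zero_lt_one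
  have hδ₁le : δ₁ ≤ δ := min_le_left _ _
  have hδ₁le1 : δ₁ ≤ 1 := min_le_right _ _
  set c : ℝ := min a0 (4 - δ₁/2) with hc
  have hc1 : 1 ≤ c := le_min ha0mem.1 (by linarith)
  have hca : c ≤ a0 := min_le_left _ _
  have hcb : c ≤ 4 - δ₁/2 := min_le_right _ _
  have hac : a0 - c ≤ δ₁/2 := by
    rcases le_total a0 (4 - δ₁/2) with h1 | h1
    · rw [hc, min_eq_left h1]; linarith
    · rw [hc, min_eq_right h1]; have := ha0mem.2; linarith
  have hcH : ∀ u : ℝ, c ≤ u → u ≤ c + δ₁/2 → u ∈ H K := by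
    intro u hu1 hu2
    apply hballH u ⟨by linarith, by linarith⟩
    rw [abs_lt]
    constructor <;> nlinarith
  refine ⟨δ₁/16, 4 * ((K:ℝ) + 1), by positivity, by nlinarith [Nat.cast_nonneg (α := ℝ) K], ?_⟩
  intro b hb1 hb2 x hx
  have hKnn : (0:ℝ) ≤ (K:ℝ) := Nat.cast_nonneg K
  have hcpos : (0:ℝ) < c := by linarith
  set u : ℝ := x / c with hu
  have hxpos : (0:ℝ) < x := by nlinarith
  have huK : (K:ℝ) + 1 ≤ u := by
    rw [hu, le_div_iff₀ hcpos]
    nlinarith [mul_le_mul_of_nonneg_left (show c ≤ 4 by linarith)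
      (show (0:ℝ) ≤ (K:ℝ) + 1 by positivity)]
  have hu0 : (0:ℝ) ≤ u := by positivity
  have hgu : 0 < g u := hgpos u hu0
  have hcmem : c ∈ H K := hcH c le_rfl (by linarith)
  have hcbmem : c * b ∈ H K := by
    apply hcH (c * b)
    · nlinarith
    · nlinarith [mul_le_mul_of_nonneg_left hb2 hcpos.le,
        mul_le_mul_of_nonneg_right (show c ≤ 4 by linarith) hδ₁pos.le]
  have h1 := (hcmem u huK).2
  have h2 := (hcbmem u huK).1
  have hcu : c * u = x := by rw [hu, mul_div_cancel₀ _ hcpos.ne']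
  have hcbu : c * b * u = b * x := by rw [hu]; field_simp
  rw [hcu] at h1
  rw [hcbu] at h2
  have e1 : (4/9) * g x ≤ (2/3) * c * g u := by linarith
  have e2 : (2/3) * c * g u ≤ (2/3) * (c * b) * g u := by
    nlinarith [mul_nonneg (mul_nonneg (show (0:ℝ) ≤ b - 1 by linarith) hcpos.le) hgu.le]
  linarith

lemma potter (g : ℝ → ℝ) (hgcont : Continuous g)
    (hgpos : ∀ w : ℝ, 0 ≤ w → 0 < g w)
    (hgreg : ∀ a : ℝ, 0 < a → Tendsto (fun x => g (a * x) / g x) atTop (nhds a)) :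
    ∃ X c : ℝ, 1 ≤ X ∧ 0 < c ∧ ∀ y : ℝ, X ≤ y → c * Real.sqrt y ≤ g y := by
  obtain ⟨ρ, X1, hρ, hX1, hstep⟩ := potter_step g hgcont hgpos hgreg
  -- uniform bound on [1,2]
  obtain ⟨m, hm⟩ := pow_unbounded_of_one_lt (2:ℝ) (show (1:ℝ) < 1 + ρ by linarith)
  have huni : ∀ j : ℕ, ∀ a : ℝ, 1 ≤ a → a ≤ (1+ρ)^j → ∀ x : ℝ, X1 ≤ x →
      (4/9)^j * g x ≤ g (a * x) := by
    intro j
    induction j with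
    | zero =>
      intro a ha1 ha2 x hx
      have : a = 1 := le_antisymm (by simpa using ha2) ha1
      simp [this]
    | succ j ih =>
      intro a ha1 ha2 x hx
      have hgx : 0 < g x := hgpos x (by linarith)
      by_cases hle : a ≤ 1 + ρ
      · have := hstep a ha1 hle x hx
        have hp : (4/9:ℝ)^(j+1) ≤ 4/9 := by
          calc (4/9:ℝ)^(j+1) ≤ (4/9:ℝ)^1 := by
                apply pow_le_pow_of_le_one (by norm_num) (by norm_num)
                omega
            _ = 4/9 := pow_one _
        nlinarith
      · push_neg at hle
        set a' : ℝ := a / (1+ρ) with ha'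
        have hρ0 : (0:ℝ) < 1 + ρ := by linarith
        have ha'1 : 1 ≤ a' := by
          rw [ha', le_div_iff₀ hρ0]; linarith
        have ha'2 : a' ≤ (1+ρ)^j := by
          rw [ha', div_le_iff₀ hρ0, ← pow_succ]; exact ha2
        have hx' : X1 ≤ a' * x := by nlinarith
        have e1 := ih a' ha'1 ha'2 x hx
        have e2 := hstep (1+ρ) (by linarith) le_rfl (a' * x) hx'
        have key : (1+ρ) * (a' * x) = a * x := by
          rw [ha']; field_simp
        rw [key] at e2
        calc (4/9:ℝ)^(j+1) * g x = (4/9) * ((4/9:ℝ)^j * g x) := by ring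
          _ ≤ (4/9) * g (a' * x) := by nlinarith
          _ ≤ g (a * x) := e2
  have huni2 : ∀ a : ℝ, 1 ≤ a → a ≤ 2 → ∀ x : ℝ, X1 ≤ x →
      (4/9)^m * g x ≤ g (a * x) := fun a h1 h2 x hx =>
    huni m a h1 (by nlinarith) x hx
  -- doubling
  have hd : ∀ᶠ x : ℝ in atTop, (3/2:ℝ) ≤ g (2 * x) / g x :=
    (hgreg 2 (by norm_num)).eventually_const_le (by norm_num)
  obtain ⟨X2', hX2'⟩ := (hd.and (eventually_ge_atTop (1:ℝ))).exists_forall_of_atTop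
  set X2 : ℝ := max X2' 1 with hX2def
  have hX2 : ∀ x : ℝ, X2 ≤ x → (3/2) * g x ≤ g (2 * x) := by
    intro x hx
    have h1 : X2' ≤ x := le_trans (le_max_left _ _) hx
    have h2 : (1:ℝ) ≤ x := le_trans (le_max_right _ _) hx
    obtain ⟨ha, _⟩ := hX2' x h1
    have hgx : 0 < g x := hgpos x (by linarith)
    calc (3/2) * g x ≤ (g (2*x) / g x) * g x := mul_le_mul_of_nonneg_right ha hgx.le
      _ = g (2*x) := by field_simp
  set X0 : ℝ := max X1 X2 with hX0def
  have hX0_1 : 1 ≤ X0 := le_trans hX1 (le_max_left _ _)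
  have hX0pos : (0:ℝ) < X0 := by linarith
  have hgX0 : 0 < g X0 := hgpos X0 (by linarith)
  have hdbl : ∀ k : ℕ, (3/2:ℝ)^k * g X0 ≤ g (2^k * X0) := by
    intro k
    induction k with
    | zero => simp
    | succ k ih =>
      have h2k : (1:ℝ) ≤ 2^k := one_le_pow₀ (by norm_num)
      have hge : X2 ≤ 2^k * X0 := by
        have : X2 ≤ X0 := le_max_right _ _
        nlinarith
      have := hX2 (2^k * X0) hge
      have hkey : 2 * (2^k * X0) = 2^(k+1) * X0 := by ring
      rw [hkey] at this
      calc (3/2:ℝ)^(k+1) * g X0 = (3/2) * ((3/2:ℝ)^k * g X0) := by ring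
        _ ≤ (3/2) * g (2^k * X0) := by nlinarith
        _ ≤ g (2^(k+1) * X0) := this
  -- conclusion
  refine ⟨X0, (4/9)^m * g X0 / Real.sqrt (2 * X0), hX0_1, by positivity, ?_⟩
  intro y hy
  have hypos : (0:ℝ) < y := by linarith
  set r : ℝ := y / X0 with hr
  have hr1 : (1:ℝ) ≤ r := (one_le_div hX0pos).2 hy
  have hrpos : (0:ℝ) < r := by linarith
  set k : ℕ := Nat.floor (Real.logb 2 r) with hk
  have hlognn : 0 ≤ Real.logb 2 r := Real.logb_nonneg (by norm_num) hr1
  have h2k_le : (2:ℝ)^k ≤ r := by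
    have h1 : ((k:ℝ)) ≤ Real.logb 2 r := Nat.floor_le hlognn
    calc (2:ℝ)^k = (2:ℝ)^((k:ℝ)) := by rw [Real.rpow_natCast]
      _ ≤ (2:ℝ)^(Real.logb 2 r) := (Real.rpow_le_rpow_left_iff (by norm_num)).2 h1
      _ = r := Real.rpow_logb (by norm_num) (by norm_num) hrpos
  have h2k_gt : r < (2:ℝ)^(k+1) := by
    have h1 : Real.logb 2 r < (k:ℝ) + 1 := Nat.lt_floor_add_one _
    calc r = (2:ℝ)^(Real.logb 2 r) := (Real.rpow_logb (by norm_num) (by norm_num) hrpos).symm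
      _ < (2:ℝ)^(((k:ℝ)+1)) := (Real.rpow_lt_rpow_left_iff (by norm_num)).2 h1
      _ = (2:ℝ)^(k+1) := by rw [← Real.rpow_natCast (2:ℝ) (k+1)]; push_cast; ring_nf
  have h2kpos : (0:ℝ) < 2^k := by positivity
  set a : ℝ := r / 2^k with ha
  have ha1 : 1 ≤ a := (one_le_div h2kpos).2 h2k_le
  have ha2 : a ≤ 2 := by
    rw [ha, div_le_iff₀ h2kpos]
    have : (2:ℝ)^(k+1) = 2 * 2^k := by ring
    linarith [h2k_gt.le, this ▸ h2k_gt.le]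
  have hX1le : X1 ≤ 2^k * X0 := by
    have h1 : X1 ≤ X0 := le_max_left _ _
    nlinarith [one_le_pow₀ (show (1:ℝ) ≤ 2 by norm_num) (n := k)]
  have hmain := huni2 a ha1 ha2 (2^k * X0) hX1le
  have hay : a * (2^k * X0) = y := by
    rw [ha, hr]; field_simp
  rw [hay] at hmain
  have hchain : (4/9:ℝ)^m * ((3/2:ℝ)^k * g X0) ≤ g y := by
    have := hdbl k
    nlinarith [pow_pos (show (0:ℝ) < 4/9 by norm_num) m]
  have hsq : Real.sqrt (y / (2 * X0)) ≤ (3/2:ℝ)^k := by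
    rw [Real.sqrt_le_iff]
    constructor
    · positivity
    · have : ((3/2:ℝ)^k)^2 = (9/4:ℝ)^k := by
        rw [← pow_mul, mul_comm]
        norm_num [pow_mul]
      rw [this]
      have h94 : (2:ℝ)^k ≤ (9/4:ℝ)^k := pow_le_pow_left₀ (by norm_num) (by norm_num) k
      have hyr : y / (2 * X0) = r / 2 := by rw [hr, div_div, mul_comm]
      rw [hyr]
      have : r / 2 < (2:ℝ)^k := by
        have : (2:ℝ)^(k+1) = 2 * 2^k := by ring
        linarith [this ▸ h2k_gt]
      linarith
  have hsqd : Real.sqrt (y / (2 * X0)) = Real.sqrt y / Real.sqrt (2 * X0) :=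
    Real.sqrt_div hypos.le _
  have hsqX0 : 0 < Real.sqrt (2 * X0) := Real.sqrt_pos.2 (by linarith)
  have hsy : Real.sqrt y = Real.sqrt (y/(2*X0)) * Real.sqrt (2*X0) := by
    rw [hsqd, div_mul_cancel₀]; exact hsqX0.ne'
  rw [div_mul_eq_mul_div, div_le_iff₀ hsqX0, hsy]
  calc (4/9:ℝ)^m * g X0 * (Real.sqrt (y/(2*X0)) * Real.sqrt (2*X0))
      = ((4/9)^m * g X0 * Real.sqrt (y/(2*X0))) * Real.sqrt (2*X0) := by ring
    _ ≤ ((4/9)^m * g X0 * (3/2:ℝ)^k) * Real.sqrt (2*X0) := by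
        apply mul_le_mul_of_nonneg_right _ hsqX0.le
        exact mul_le_mul_of_nonneg_left hsq (by positivity)
    _ ≤ g y * Real.sqrt (2*X0) := by
        apply mul_le_mul_of_nonneg_right _ hsqX0.le
        calc (4/9:ℝ)^m * g X0 * (3/2)^k = (4/9:ℝ)^m * ((3/2:ℝ)^k * g X0) := by ring
          _ ≤ g y := hchain

lemma tsum_eq_top_of_harmonic_le (p : ℕ → ENNReal) (N : ℕ)
    (hp : ∀ n, N ≤ n → ENNReal.ofReal (1 / (2 * ((n:ℝ) + 2))) ≤ p n) :
    ∑' n, p n = ⊤ := by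
  by_contra hne
  have h1 : ∑' n, p (n + N) ≤ ∑' n, p n :=
    ENNReal.tsum_comp_le_tsum_of_injective (add_left_injective N) p
  have h2 : ∑' n, p (n + N) ≠ ⊤ := by
    intro h; rw [h] at h1; exact hne (top_le_iff.1 h1)
  have h3 : ∑' n : ℕ, ENNReal.ofReal (1 / (2 * (((n + N : ℕ):ℝ) + 2))) ≤ ∑' n, p (n + N) :=
    ENNReal.tsum_le_tsum (fun n => hp (n + N) (by omega))
  have h4 : ∑' n : ℕ, ENNReal.ofReal (1 / (2 * (((n + N : ℕ):ℝ) + 2))) ≠ ⊤ := by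
    intro h; rw [h] at h3; exact h2 (top_le_iff.1 h3)
  have h5 := ENNReal.summable_toReal h4
  have h6 : Summable (fun n : ℕ => 1 / (2 * (((n + N : ℕ):ℝ) + 2))) := by
    apply h5.congr
    intro n
    rw [ENNReal.toReal_ofReal (by positivity)]
  have h7 : Summable (fun n : ℕ => 1 / (((n + N : ℕ):ℝ) + 2)) := by
    have := h6.mul_left 2
    apply this.congr
    intro n
    have hpos : (0:ℝ) < ((n + N : ℕ):ℝ) + 2 := by positivity
    field_simp
  have h8 : Summable (fun n : ℕ => 1 / ((n:ℝ) + (N:ℝ) + 2)) := by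
    apply h7.congr; intro n; push_cast; ring_nf
  have h9 : Summable (fun n : ℕ => 1 / (((n + (N + 2) : ℕ)):ℝ)) := by
    apply h8.congr; intro n; push_cast; ring_nf
  have h10 : Summable (fun n : ℕ => 1 / (n:ℝ)) :=
    (summable_nat_add_iff (N + 2)).1 h9
  exact Real.not_summable_one_div_natCast h10

section
open Real Set

lemma expMeasure_one_mean : ∫⁻ x : ℝ, ENNReal.ofReal x ∂(expMeasure 1) = 1 := by
  have hm : Measurable (gammaPDF 1 1) := (measurable_gammaPDFReal 1 1).ennreal_ofReal
  rw [expMeasure, gammaMeasure,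
    lintegral_withDensity_eq_lintegral_mul _ hm ENNReal.measurable_ofReal]
  have hsplit : ∫⁻ x : ℝ, (gammaPDF 1 1 * fun x => ENNReal.ofReal x) x ∂volume
      = ∫⁻ x in Ioi (0:ℝ), ENNReal.ofReal (x * Real.exp (-x)) ∂volume := by
    rw [← lintegral_add_compl _ (measurableSet_Ioi (a := (0:ℝ)))]
    have h1 : ∫⁻ x in Ioi (0:ℝ), (gammaPDF 1 1 * fun x => ENNReal.ofReal x) x ∂volume
        = ∫⁻ x in Ioi (0:ℝ), ENNReal.ofReal (x * Real.exp (-x)) ∂volume := by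
      apply setLIntegral_congr_fun measurableSet_Ioi
      intro x hx
      have hx0 : (0:ℝ) ≤ x := le_of_lt hx
      simp only [Pi.mul_apply, gammaPDF_of_nonneg hx0]
      rw [← ENNReal.ofReal_mul (by positivity)]
      congr 1
      simp [hx0, Real.Gamma_one]
      ring
    have h2 : ∫⁻ x in (Ioi (0:ℝ))ᶜ, (gammaPDF 1 1 * fun x => ENNReal.ofReal x) x ∂volume = 0 := by
      rw [compl_Ioi]
      have hz : ∀ x ∈ Iic (0:ℝ), (gammaPDF 1 1 * fun x => ENNReal.ofReal x) x = 0 := by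
        intro x hx
        simp only [Pi.mul_apply]
        rw [ENNReal.ofReal_of_nonpos hx, mul_zero]
      rw [setLIntegral_congr_fun measurableSet_Iic hz, lintegral_zero]
    rw [h1, h2, add_zero]
  rw [hsplit]
  have hint : IntegrableOn (fun x : ℝ => x * Real.exp (-x)) (Ioi 0) volume := by
    have hc := Real.GammaIntegral_convergent (show (0:ℝ) < 2 by norm_num)
    apply hc.congr_fun ?_ measurableSet_Ioi
    intro x hx
    norm_num [Real.rpow_one, mul_comm]
  have hnn : 0 ≤ᵐ[volume.restrict (Ioi (0:ℝ))] fun x : ℝ => x * Real.exp (-x) := by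
    rw [EventuallyLE, ae_restrict_iff' measurableSet_Ioi]
    apply ae_of_all
    intro x hx
    have : (0:ℝ) < x := hx
    positivity
  rw [← ofReal_integral_eq_lintegral_ofReal hint hnn]
  have hval : ∫ x in Ioi (0:ℝ), x * Real.exp (-x) = Real.Gamma 2 := by
    rw [Real.Gamma_eq_integral (show (0:ℝ) < 2 by norm_num)]
    apply setIntegral_congr_fun measurableSet_Ioi
    intro x hx
    norm_num [Real.rpow_one, mul_comm]
  rw [hval]
  have : Real.Gamma 2 = 1 := by
    have := Real.Gamma_nat_eq_factorial 1
    norm_num at this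
    convert this using 2
    norm_num
  rw [this]
  simp

end

lemma markov_bound {Ω : Type*} [MeasureSpace Ω] [IsProbabilityMeasure (ℙ : Measure Ω)]
    (W : Ω → ℝ) (hWmeas : Measurable W)
    (E : ℕ → Ω → ℝ) (hEmeas : ∀ j, Measurable (E j))
    (hElaw : ∀ j, Measure.map (E j) ℙ = expMeasure 1)
    (hindep : iIndepFun (fun j : Option ℕ => Option.elim j W E) ℙ)
    (q : ℕ → ℝ → ℝ) (hqmeas : ∀ j, Measurable (q j))
    (v t : ℝ) (ht : 0 < t)
    (hqnonneg : ∀ j y, v ≤ y → 0 ≤ q j y)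
    (hqnonneg' : ∀ j ω, 0 ≤ q j (W ω))
    (hqsum : ∀ y, v ≤ y → Summable (fun j => q j y))
    (hqbound : ∀ y, v ≤ y → (∑' j, q j y) ≤ t / 2)
    (P : Ω → ℝ) (hP : ∀ ω, P ω = ∑' j : ℕ, E j ω * q j (W ω)) :
    ℙ {ω | v ≤ W ω} / 2 ≤ ℙ {ω | P ω < t} := by
  have hAset : {ω | v ≤ W ω} = W ⁻¹' (Set.Ici v) := rfl
  set A : Set Ω := W ⁻¹' (Set.Ici v) with hA
  rw [hAset]
  have hAmeas : MeasurableSet A := hWmeas measurableSet_Ici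
  set Q : Ω → ENNReal := fun ω => ∑' j, ENNReal.ofReal (E j ω) * ENNReal.ofReal (q j (W ω))
    with hQ
  have hterm_meas : ∀ j, Measurable
      (fun ω => ENNReal.ofReal (E j ω) * ENNReal.ofReal (q j (W ω))) :=
    fun j => ((hEmeas j).ennreal_ofReal).mul (((hqmeas j).comp hWmeas).ennreal_ofReal)
  have hQmeas : Measurable Q := Measurable.ennreal_tsum hterm_meas
  have hEnonneg : ∀ᵐ ω ∂(ℙ : Measure Ω), ∀ j, 0 ≤ E j ω := by
    rw [MeasureTheory.ae_all_iff]
    intro j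
    have hexp : (expMeasure 1) (Set.Iio 0) = 0 := by
      rw [expMeasure, gammaMeasure, withDensity_apply _ measurableSet_Iio]
      exact lintegral_gammaPDF_of_nonpos le_rfl
    have hmap : (ℙ : Measure Ω) {ω | E j ω < 0} = (Measure.map (E j) ℙ) (Set.Iio 0) := by
      rw [Measure.map_apply (hEmeas j) measurableSet_Iio]; rfl
    rw [ae_iff]
    have : {ω | ¬ 0 ≤ E j ω} = {ω | E j ω < 0} := by ext ω; simp [not_le]
    rw [this, hmap, hElaw j, hexp]
  have hPQ : ∀ᵐ ω ∂(ℙ : Measure Ω), ENNReal.ofReal (P ω) ≤ Q ω := by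
    filter_upwards [hEnonneg] with ω hω
    by_cases hsummable : Summable (fun j => E j ω * q j (W ω))
    · rw [hP ω, hQ]
      rw [ENNReal.ofReal_tsum_of_nonneg (fun j => mul_nonneg (hω j) (hqnonneg' j ω)) hsummable]
      apply le_of_eq
      exact tsum_congr (fun j => ENNReal.ofReal_mul (hω j))
    · rw [hP ω, tsum_eq_zero_of_not_summable hsummable]
      simp
  have hEmean : ∀ j, ∫⁻ ω, ENNReal.ofReal (E j ω) ∂(ℙ : Measure Ω) = 1 := by
    intro j
    rw [← lintegral_map ENNReal.measurable_ofReal (hEmeas j), hElaw j, expMeasure_one_mean]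
  set ψ : ℕ → ℝ → ENNReal :=
    fun j => (Set.Ici v).indicator (fun y => ENNReal.ofReal (q j y)) with hψ
  have hψmeas : ∀ j, Measurable (ψ j) :=
    fun j => ((hqmeas j).ennreal_ofReal).indicator measurableSet_Ici
  have hIndep : ∀ j, IndepFun (fun ω => ENNReal.ofReal (E j ω)) (fun ω => ψ j (W ω)) ℙ := by
    intro j
    have h0 : IndepFun (E j) W ℙ := by
      have h1 := hindep.indepFun (i := some j) (j := none) (by simp)
      simpa using h1
    exact h0.comp ENNReal.measurable_ofReal (hψmeas j)
  have hint : ∫⁻ ω in A, Q ω ∂ℙ ≤ ENNReal.ofReal (t/2) * ℙ A := by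
    have e0 : ∫⁻ ω in A, Q ω ∂ℙ
        = ∑' j, ∫⁻ ω in A, ENNReal.ofReal (E j ω) * ENNReal.ofReal (q j (W ω)) ∂ℙ := by
      rw [hQ]; exact lintegral_tsum (fun j => (hterm_meas j).aemeasurable)
    have e1 : ∀ j, ∫⁻ ω in A, ENNReal.ofReal (E j ω) * ENNReal.ofReal (q j (W ω)) ∂ℙ
        = ∫⁻ ω, ENNReal.ofReal (E j ω) * ψ j (W ω) ∂ℙ := by
      intro j
      rw [← lintegral_indicator hAmeas]
      congr 1
      ext ω
      by_cases hω : ω ∈ A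
      · rw [Set.indicator_of_mem hω]
        have hWm : W ω ∈ Set.Ici v := hω
        rw [hψ]; simp only [Set.indicator_of_mem hWm]
      · rw [Set.indicator_of_notMem hω]
        have hWm : W ω ∉ Set.Ici v := hω
        rw [hψ]; simp only [Set.indicator_of_notMem hWm, mul_zero]
    have e2 : ∀ j, ∫⁻ ω, ENNReal.ofReal (E j ω) * ψ j (W ω) ∂ℙ
        = ∫⁻ ω, ψ j (W ω) ∂(ℙ : Measure Ω) := by
      intro j
      rw [lintegral_mul_eq_lintegral_mul_lintegral_of_indepFun''
        (f := fun ω => ENNReal.ofReal (E j ω)) (g := fun ω => ψ j (W ω))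
        ((hEmeas j).ennreal_ofReal).aemeasurable
        (Measurable.aemeasurable (by exact (hψmeas j).comp hWmeas)) (hIndep j), hEmean j, one_mul]
    have e3 : ∑' j, ∫⁻ ω, ψ j (W ω) ∂(ℙ : Measure Ω) = ∫⁻ ω, ∑' j, ψ j (W ω) ∂(ℙ : Measure Ω) :=
      (lintegral_tsum (fun j => ((hψmeas j).comp hWmeas).aemeasurable)).symm
    have e4 : ∫⁻ ω, ∑' j, ψ j (W ω) ∂(ℙ : Measure Ω) ≤ ENNReal.ofReal (t/2) * ℙ A := by
      have hptw : ∀ ω, (∑' j, ψ j (W ω)) ≤ A.indicator (fun _ => ENNReal.ofReal (t/2)) ω := by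
        intro ω
        by_cases hω : ω ∈ A
        · have hWv : v ≤ W ω := hω
          rw [Set.indicator_of_mem hω]
          have hc : ∀ j, ψ j (W ω) = ENNReal.ofReal (q j (W ω)) :=
            fun j => Set.indicator_of_mem hWv _
          rw [tsum_congr hc,
            ← ENNReal.ofReal_tsum_of_nonneg (fun j => hqnonneg j _ hWv) (hqsum _ hWv)]
          exact ENNReal.ofReal_le_ofReal (hqbound _ hWv)
        · have hWv : W ω ∉ Set.Ici v := hω
          rw [Set.indicator_of_notMem hω]
          have hc : ∀ j, ψ j (W ω) = 0 := fun j => Set.indicator_of_notMem hWv _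
          rw [tsum_congr hc]; simp
      calc ∫⁻ ω, ∑' j, ψ j (W ω) ∂(ℙ : Measure Ω)
          ≤ ∫⁻ ω, A.indicator (fun _ => ENNReal.ofReal (t/2)) ω ∂(ℙ : Measure Ω) :=
            lintegral_mono hptw
        _ = ENNReal.ofReal (t/2) * ℙ A := lintegral_indicator_const hAmeas _
    calc ∫⁻ ω in A, Q ω ∂ℙ = ∑' j, ∫⁻ ω, ψ j (W ω) ∂(ℙ : Measure Ω) := by
          rw [e0]; exact tsum_congr (fun j => (e1 j).trans (e2 j))
      _ = ∫⁻ ω, ∑' j, ψ j (W ω) ∂(ℙ : Measure Ω) := e3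
      _ ≤ ENNReal.ofReal (t/2) * ℙ A := e4
  have hQsetmeas : MeasurableSet {ω | ENNReal.ofReal t ≤ Q ω} := hQmeas measurableSet_Ici
  have hMarkov : ℙ ({ω | ENNReal.ofReal t ≤ Q ω} ∩ A) ≤ ℙ A / 2 := by
    have h1 : ENNReal.ofReal t * (Measure.restrict ℙ A) {ω | ENNReal.ofReal t ≤ Q ω}
        ≤ ∫⁻ ω in A, Q ω ∂ℙ :=
      mul_meas_ge_le_lintegral₀ hQmeas.aemeasurable (ENNReal.ofReal t)
    rw [Measure.restrict_apply hQsetmeas] at h1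
    have h2 : ENNReal.ofReal t * ℙ ({ω | ENNReal.ofReal t ≤ Q ω} ∩ A)
        ≤ ENNReal.ofReal t * (ℙ A / 2) := by
      apply le_trans h1
      apply le_trans hint
      rw [ENNReal.ofReal_div_of_pos (by norm_num), ENNReal.ofReal_ofNat]
      apply le_of_eq
      simp [div_eq_mul_inv, mul_comm, mul_assoc, mul_left_comm]
    have htne : ENNReal.ofReal t ≠ 0 := by
      simp [ENNReal.ofReal_eq_zero, not_le, ht]
    exact (ENNReal.mul_le_mul_iff_right htne ENNReal.ofReal_ne_top).1 h2
  have hsplit : ℙ A ≤ ℙ {ω | P ω < t} + ℙ A / 2 := by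
    have hsub : A ⊆ {ω | P ω < t} ∪ (A ∩ {ω | t ≤ P ω}) := by
      intro ω hω
      by_cases hp : P ω < t
      · exact Or.inl hp
      · exact Or.inr ⟨hω, not_lt.1 hp⟩
    have h2 : ℙ (A ∩ {ω | t ≤ P ω}) ≤ ℙ ({ω | ENNReal.ofReal t ≤ Q ω} ∩ A) := by
      apply measure_mono_ae
      filter_upwards [hPQ] with ω hω hmem
      exact ⟨le_trans (ENNReal.ofReal_le_ofReal hmem.2) hω, hmem.1⟩
    calc ℙ A ≤ ℙ ({ω | P ω < t} ∪ (A ∩ {ω | t ≤ P ω})) := measure_mono hsub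
      _ ≤ ℙ {ω | P ω < t} + ℙ (A ∩ {ω | t ≤ P ω}) := measure_union_le _ _
      _ ≤ ℙ {ω | P ω < t} + ℙ A / 2 := add_le_add le_rfl (le_trans h2 hMarkov)
  have hAfin : ℙ A / 2 ≠ ⊤ := by
    apply ne_top_of_le_ne_top (measure_ne_top ℙ A)
    exact ENNReal.half_le_self
  have hfinal : ℙ A / 2 + ℙ A / 2 ≤ ℙ {ω | P ω < t} + ℙ A / 2 := by
    rw [ENNReal.add_halves]; exact hsplit
  exact (ENNReal.add_le_add_iff_right hAfin).1 hfinal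

set_option maxHeartbeats 2000000 in
/-- **Lemma 6.4, mixed-weight barely super-linear log-stretched case.** With
`s i = (i+1)·exp((log(i+1))^β)`, mixed weights, `β·ν < 1` and a log-stretched exponential
lower tail for `W`, with `(E j)` i.i.d. rate-one exponentials independent of `W` and
explosion time `𝒫 = ∑_j E j / f(j,W)`, for every `w ≥ 0` and `d ∈ (0,1)` one has
`∑_{n=1}^∞ P(𝒫 < d·μ_n^w) = ∞`. -/
theorem stmt_18
    {Ω : Type*} [MeasureSpace Ω] [IsProbabilityMeasure (ℙ : Measure Ω)]
    (β γ ν : ℝ) (hβ0 : 0 < β) (hβ1 : β < 1) (hγ : 0 ≤ γ) (hν : 1 < ν)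
    (hcond : β * ν < 1)
    (s : ℕ → ℝ)
    (hs : ∀ i : ℕ, s i = ((i : ℝ) + 1) * Real.exp (Real.log ((i : ℝ) + 1) ^ β))
    (g : ℝ → ℝ) (hgcont : Continuous g) (hgpos : ∀ w : ℝ, 0 ≤ w → 0 < g w)
    (hgreg : ∀ a : ℝ, 0 < a → Tendsto (fun x => g (a * x) / g x) atTop (nhds a))
    (hgmin : ∀ w : ℝ, 0 ≤ w → g 0 ≤ g w)
    (h : ℝ → ℝ) (hhcont : Continuous h) (hhnonneg : ∀ w : ℝ, 0 ≤ w → 0 ≤ h w)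
    (hhpos : ∀ᶠ x in atTop, 0 < h x)
    (hhreg : ∀ a : ℝ, 0 < a → Tendsto (fun x => h (a * x) / h x) atTop (nhds (a ^ γ)))
    (hhmin : ∀ w : ℝ, 0 ≤ w → h 0 ≤ h w)
    (f : ℕ → ℝ → ℝ) (hf : ∀ i w, f i w = g w * s i + h w)
    (μ : ℕ → ℝ → ℝ) (hμ : ∀ n w, μ n w = ∑' i : ℕ, 1 / f (n + i) w)
    (W : Ω → ℝ) (hWmeas : Measurable W) (hWnonneg : ∀ ω, 0 ≤ W ω)
    (cunder x₀ : ℝ) (hcunder : 0 < cunder) (hx₀ : 0 < x₀)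
    (htail : ∀ x : ℝ, x₀ ≤ x →
      Real.exp (-cunder * Real.log x ^ ν) ≤ (ℙ {ω | x ≤ W ω}).toReal)
    (E : ℕ → Ω → ℝ) (hEmeas : ∀ j, Measurable (E j))
    (hElaw : ∀ j, Measure.map (E j) ℙ = expMeasure 1)
    (hindep : iIndepFun
      (fun j : Option ℕ => Option.elim j W E) ℙ)
    (P : Ω → ℝ) (hP : ∀ ω, P ω = ∑' j : ℕ, E j ω / f j (W ω)) :
    ∀ w : ℝ, 0 ≤ w → ∀ d : ℝ, 0 < d → d < 1 →
      ∑' n : ℕ, ℙ {ω | P ω < d * μ (n + 1) w} = ⊤ := by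
  intro w hw d hd0 hd1
  -- basic positivity facts
  have hspos : ∀ i : ℕ, 0 < s i := by
    intro i; rw [hs]
    have : (0:ℝ) < (i:ℝ) + 1 := by positivity
    positivity
  have hgw : 0 < g w := hgpos w hw
  have hhw : 0 ≤ h w := hhnonneg w hw
  have hfpos : ∀ (i : ℕ) (v : ℝ), 0 ≤ v → 0 < f i v := by
    intro i v hv
    rw [hf]
    have h1 := hgpos v hv
    have h2 := hhnonneg v hv
    have h3 := hspos i
    have h4 := mul_pos h1 h3
    linarith
  have hsmono : ∀ i j : ℕ, i ≤ j → s i ≤ s j := by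
    intro i j hij
    rw [hs, hs]
    have hi0 : (0:ℝ) ≤ (i:ℝ) := Nat.cast_nonneg i
    have h1 : ((i:ℝ)+1) ≤ (j:ℝ)+1 := by
      have : (i:ℝ) ≤ (j:ℝ) := by exact_mod_cast hij
      linarith
    have h2 : Real.log ((i:ℝ)+1) ^ β ≤ Real.log ((j:ℝ)+1) ^ β :=
      Real.rpow_le_rpow (Real.log_nonneg (by linarith))
        (Real.log_le_log (by linarith) h1) hβ0.le
    have h3 := Real.exp_le_exp.2 h2
    have h4 : (0:ℝ) < Real.exp (Real.log ((i:ℝ)+1) ^ β) := Real.exp_pos _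
    exact mul_le_mul h1 h3 h4.le (by linarith)
  -- summability of 1/s
  have hsum_inv_s : Summable (fun i : ℕ => 1 / s i) := by
    apply (summable_inv_s hβ0).congr
    intro i; rw [hs]
  obtain ⟨Cs, hCsdef⟩ : ∃ x : ℝ, x = ∑' i : ℕ, 1 / s i := ⟨_, rfl⟩
  have hCs_pos : 0 < Cs := by
    rw [hCsdef]
    exact Summable.tsum_pos hsum_inv_s (fun i => le_of_lt (one_div_pos.2 (hspos i))) 0
      (one_div_pos.2 (hspos 0))
  -- summability of 1/f
  have hfsum : ∀ v : ℝ, 0 ≤ v → Summable (fun j : ℕ => 1 / f j v) := by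
    intro v hv
    apply Summable.of_nonneg_of_le (fun j => le_of_lt (one_div_pos.2 (hfpos j v hv)))
      (fun j => ?_) (hsum_inv_s.mul_left (1 / g v))
    have hgv := hgpos v hv
    have h1 : g v * s j ≤ f j v := by rw [hf]; linarith [hhnonneg v hv]
    calc 1 / f j v ≤ 1 / (g v * s j) :=
          one_div_le_one_div_of_le (mul_pos hgv (hspos j)) h1
      _ = 1 / g v * (1 / s j) := by rw [div_mul_div_comm, one_mul]
  -- tsum bound
  have hμ0_bound : ∀ v : ℝ, 0 ≤ v → (∑' j : ℕ, 1 / f j v) ≤ 1 / g v * Cs := by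
    intro v hv
    rw [hCsdef, ← tsum_mul_left]
    apply Summable.tsum_le_tsum _ (hfsum v hv) (hsum_inv_s.mul_left (1 / g v))
    intro j
    have hgv := hgpos v hv
    have h1 : g v * s j ≤ f j v := by rw [hf]; linarith [hhnonneg v hv]
    calc 1 / f j v ≤ 1 / (g v * s j) :=
          one_div_le_one_div_of_le (mul_pos hgv (hspos j)) h1
      _ = 1 / g v * (1 / s j) := by rw [div_mul_div_comm, one_mul]
  -- shifted summability
  have hμsum : ∀ n : ℕ, Summable (fun i : ℕ => 1 / f (n + i) w) :=
    fun n => (hfsum w hw).comp_injective (add_right_injective n)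
  have hμpos : ∀ n : ℕ, 0 < μ n w := by
    intro n
    rw [hμ]
    exact Summable.tsum_pos (hμsum n) (fun i => le_of_lt (one_div_pos.2 (hfpos _ w hw))) 0
      (one_div_pos.2 (hfpos _ w hw))
  -- lower bound on μ (n+1) w
  obtain ⟨Cw, hCwdef⟩ : ∃ x : ℝ, x = 4 * g w + h w + 1 := ⟨_, rfl⟩
  have hCwpos : 0 < Cw := by rw [hCwdef]; linarith
  have hμlow : ∀ n : ℕ,
      Real.exp (-(Real.log (2*(n:ℝ)+2) ^ β)) / Cw ≤ μ (n+1) w := by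
    intro n
    have hLnn : 0 ≤ Real.log (2*(n:ℝ)+2) ^ β := by
      apply Real.rpow_nonneg
      apply Real.log_nonneg
      have : (0:ℝ) ≤ (n:ℝ) := Nat.cast_nonneg n
      linarith
    have hexpL : (1:ℝ) ≤ Real.exp (Real.log (2*(n:ℝ)+2) ^ β) := Real.one_le_exp hLnn
    have hexpLpos : (0:ℝ) < Real.exp (Real.log (2*(n:ℝ)+2) ^ β) := Real.exp_pos _
    have hfupper : f (2*n+1) w ≤ ((n:ℝ)+1) * Cw * Real.exp (Real.log (2*(n:ℝ)+2) ^ β) := by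
      rw [hf, hs]
      have hcast : ((2*n+1 : ℕ):ℝ) + 1 = 2*(n:ℝ)+2 := by push_cast; ring
      rw [hcast]
      have hn1 : (1:ℝ) ≤ (n:ℝ)+1 := by
        have : (0:ℝ) ≤ (n:ℝ) := Nat.cast_nonneg n
        linarith
      rw [hCwdef]
      have hnn : (0:ℝ) ≤ (n:ℝ) := Nat.cast_nonneg n
      set Eξ : ℝ := Real.exp (Real.log (2*(n:ℝ)+2) ^ β) with hEξ
      have e1 : h w ≤ ((n:ℝ)+1) * h w := le_mul_of_one_le_left hhw hn1
      have e2 : ((n:ℝ)+1) * h w ≤ ((n:ℝ)+1) * h w * Eξ :=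
        le_mul_of_one_le_right (by positivity) hexpL
      have e3 : g w * ((2*(n:ℝ)+2) * Eξ) ≤ ((n:ℝ)+1) * (4 * g w) * Eξ := by
        have h0 : (0:ℝ) ≤ g w * Eξ := by positivity
        have hh1 : (2*(n:ℝ)+2) ≤ 4*((n:ℝ)+1) := by linarith
        calc g w * ((2*(n:ℝ)+2) * Eξ) = (2*(n:ℝ)+2) * (g w * Eξ) := by ring
          _ ≤ 4*((n:ℝ)+1) * (g w * Eξ) := mul_le_mul_of_nonneg_right hh1 h0
          _ = ((n:ℝ)+1) * (4*g w) * Eξ := by ring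
      have e4 : (0:ℝ) ≤ ((n:ℝ)+1) * Eξ := by positivity
      have eexp : ((n:ℝ)+1) * (4 * g w + h w + 1) * Eξ
          = ((n:ℝ)+1) * (4*g w) * Eξ + ((n:ℝ)+1) * h w * Eξ + ((n:ℝ)+1) * Eξ := by ring
      linarith [e1, e2, e3, e4, eexp]
    have hfpos2 : 0 < f (2*n+1) w := hfpos _ w hw
    have hterm : ∀ i ∈ Finset.range (n+1), 1 / f (2*n+1) w ≤ 1 / f (n+1+i) w := by
      intro i hi
      apply one_div_le_one_div_of_le (hfpos _ w hw)
      rw [hf, hf]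
      have hidx : n+1+i ≤ 2*n+1 := by
        simp only [Finset.mem_range] at hi
        omega
      have h5 := mul_le_mul_of_nonneg_left (hsmono _ _ hidx) hgw.le
      linarith
    have hsum_ge : ((n:ℝ)+1) * (1 / f (2*n+1) w)
        ≤ ∑ i ∈ Finset.range (n+1), 1 / f (n+1+i) w := by
      calc ((n:ℝ)+1) * (1 / f (2*n+1) w)
          = ∑ _i ∈ Finset.range (n+1), 1 / f (2*n+1) w := by
            rw [Finset.sum_const, Finset.card_range, nsmul_eq_mul]; push_cast; ring
        _ ≤ _ := Finset.sum_le_sum hterm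
    have htsum_ge : ∑ i ∈ Finset.range (n+1), 1 / f (n+1+i) w ≤ μ (n+1) w := by
      rw [hμ]
      exact Summable.sum_le_tsum _ (fun i _ => le_of_lt (one_div_pos.2 (hfpos _ w hw))) (hμsum (n+1))
    have hb : Real.exp (-(Real.log (2*(n:ℝ)+2) ^ β)) / Cw ≤ ((n:ℝ)+1) * (1 / f (2*n+1) w) := by
      rw [Real.exp_neg]
      have hn1 : (0:ℝ) < (n:ℝ)+1 := by positivity
      have h2 : ((n:ℝ)+1) * (1 / f (2*n+1) w) = ((n:ℝ)+1) / f (2*n+1) w := by ring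
      rw [h2, div_le_div_iff₀ (by positivity) hfpos2]
      calc (Real.exp (Real.log (2*(n:ℝ)+2) ^ β))⁻¹ * f (2*n+1) w
          ≤ (Real.exp (Real.log (2*(n:ℝ)+2) ^ β))⁻¹
              * (((n:ℝ)+1) * Cw * Real.exp (Real.log (2*(n:ℝ)+2) ^ β)) :=
            mul_le_mul_of_nonneg_left hfupper (inv_nonneg.2 hexpLpos.le)
        _ = ((n:ℝ)+1) * Cw
              * ((Real.exp (Real.log (2*(n:ℝ)+2) ^ β))⁻¹ * Real.exp (Real.log (2*(n:ℝ)+2) ^ β)) := by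
            ring
        _ = ((n:ℝ)+1) * Cw := by rw [inv_mul_cancel₀ hexpLpos.ne']; ring
    linarith
  -- Potter bound
  obtain ⟨X, c, hX1, hcpos, hpot⟩ := potter g hgcont hgpos hgreg
  obtain ⟨B, hBdef⟩ : ∃ x : ℝ, x = max X x₀ := ⟨_, rfl⟩
  have hB1 : 1 ≤ B := by rw [hBdef]; exact le_trans hX1 (le_max_left _ _)
  -- measurability of q
  have hqmeas : ∀ j : ℕ, Measurable (fun y => 1 / f j y) := by
    intro j
    have he : (fun y => 1 / f j y) = fun y => (g y * s j + h y)⁻¹ := by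
      funext y; rw [hf, one_div]
    rw [he]
    exact ((hgcont.measurable.mul_const (s j)).add hhcont.measurable).inv
  have hP' : ∀ ω, P ω = ∑' j : ℕ, E j ω * (1 / f j (W ω)) := by
    intro ω
    rw [hP]
    exact tsum_congr (fun j => div_eq_mul_one_div _ _)
  -- constants for the log bounds
  obtain ⟨A3, hA3def⟩ : ∃ x : ℝ, x = 2*(Real.log (2*Cs) - Real.log d + Real.log Cw - Real.log c) := ⟨_, rfl⟩
  obtain ⟨A5, hA5def⟩ : ∃ x : ℝ, x = max (Real.log B) A3 := ⟨_, rfl⟩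
  have hlog2pos : (0:ℝ) < Real.log 2 := Real.log_pos (by norm_num)
  have hlog2b : (0:ℝ) < Real.log 2 ^ β := Real.rpow_pos_of_pos hlog2pos β
  obtain ⟨K, hKdef⟩ : ∃ x : ℝ, x = max A5 0 / Real.log 2 ^ β + 4 := ⟨_, rfl⟩
  have hKpos : 0 < K := by
    rw [hKdef]
    have : 0 ≤ max A5 0 / Real.log 2 ^ β := div_nonneg (le_max_right _ _) hlog2b.le
    linarith
  obtain ⟨σ, hσdef⟩ : ∃ x : ℝ, x = β * ν := ⟨_, rfl⟩
  have hσ0 : 0 < σ := by rw [hσdef]; positivity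
  have hσ1 : σ < 1 := by rw [hσdef]; exact hcond
  obtain ⟨C1, hC1def⟩ : ∃ x : ℝ, x = cunder * K ^ ν := ⟨_, rfl⟩
  have hC1pos : 0 < C1 := by
    rw [hC1def]
    exact mul_pos hcunder (Real.rpow_pos_of_pos hKpos ν)
  -- choice of N
  have htendsto : Tendsto (fun n : ℕ => Real.log ((n:ℝ)+2) ^ (1-σ)) atTop atTop := by
    apply (tendsto_rpow_atTop (by linarith : (0:ℝ) < 1 - σ)).comp
    exact Real.tendsto_log_atTop.comp
      (tendsto_atTop_add_const_right _ 2 (tendsto_natCast_atTop_atTop))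
  obtain ⟨N, hN⟩ := (htendsto.eventually_ge_atTop C1).exists_forall_of_atTop
  -- main estimate
  have key : ∀ n : ℕ, N ≤ n →
      ENNReal.ofReal (1 / (2 * ((n:ℝ) + 2))) ≤ ℙ {ω | P ω < d * μ (n + 1) w} := by
    intro n hn
    obtain ⟨t, htdef⟩ : ∃ x : ℝ, x = d * μ (n + 1) w := ⟨_, rfl⟩
    rw [← htdef]
    have htpos : 0 < t := by rw [htdef]; exact mul_pos hd0 (hμpos (n+1))
    obtain ⟨M, hMdef⟩ : ∃ x : ℝ, x = 2 * Cs / t := ⟨_, rfl⟩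
    have hMpos : 0 < M := by rw [hMdef]; exact div_pos (by linarith) htpos
    obtain ⟨v, hvdef⟩ : ∃ x : ℝ, x = max B ((M/c)^2) := ⟨_, rfl⟩
    have hvB : B ≤ v := by rw [hvdef]; exact le_max_left _ _
    have hvX : X ≤ v := le_trans (by rw [hBdef]; exact le_max_left _ _) hvB
    have hvx₀ : x₀ ≤ v := le_trans (by rw [hBdef]; exact le_max_right _ _) hvB
    have hv1 : 1 ≤ v := le_trans hB1 hvB
    have hv0 : 0 < v := by linarith
    -- g is at least M beyond v
    have hgy : ∀ y : ℝ, v ≤ y → M ≤ g y := by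
      intro y hy
      have hXy : X ≤ y := le_trans hvX hy
      have h1 := hpot y hXy
      have h2 : (M/c)^2 ≤ y := le_trans (by rw [hvdef]; exact le_max_right _ _) hy
      have h3 : M/c ≤ Real.sqrt y := by
        have hle := Real.sqrt_le_sqrt h2
        rwa [Real.sqrt_sq (div_nonneg hMpos.le hcpos.le)] at hle
      have h4 : c * (M/c) ≤ c * Real.sqrt y := mul_le_mul_of_nonneg_left h3 hcpos.le
      rw [mul_div_cancel₀ _ hcpos.ne'] at h4
      linarith
    -- sum bound
    have hqb : ∀ y : ℝ, v ≤ y → (∑' j : ℕ, 1 / f j y) ≤ t / 2 := by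
      intro y hy
      have hy0 : (0:ℝ) ≤ y := by linarith
      have hgyM := hgy y hy
      have hgypos := hgpos y hy0
      calc (∑' j : ℕ, 1 / f j y) ≤ 1 / g y * Cs := hμ0_bound y hy0
        _ ≤ 1 / M * Cs := by
            apply mul_le_mul_of_nonneg_right _ hCs_pos.le
            exact one_div_le_one_div_of_le hMpos hgyM
        _ = t / 2 := by
            rw [hMdef, one_div_div]
            field_simp [hCs_pos.ne']
    -- Markov bound
    have hmk := markov_bound W hWmeas E hEmeas hElaw hindep
      (fun j y => 1 / f j y) hqmeas v t htpos
      (fun j y hy => le_of_lt (one_div_pos.2 (hfpos j y (by linarith))))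
      (fun j ω => le_of_lt (one_div_pos.2 (hfpos j (W ω) (hWnonneg ω))))
      (fun y hy => hfsum y (by linarith))
      hqb P hP'
    -- tail bound
    have htailv : ENNReal.ofReal (Real.exp (-cunder * Real.log v ^ ν)) ≤ ℙ {ω | v ≤ W ω} := by
      have h1 := htail v hvx₀
      calc ENNReal.ofReal (Real.exp (-cunder * Real.log v ^ ν))
          ≤ ENNReal.ofReal ((ℙ {ω | v ≤ W ω}).toReal) := ENNReal.ofReal_le_ofReal h1
        _ = ℙ {ω | v ≤ W ω} := ENNReal.ofReal_toReal (measure_ne_top _ _)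
    -- numeric estimate
    obtain ⟨u, hudef⟩ : ∃ x : ℝ, x = Real.log ((n:ℝ)+2) := ⟨_, rfl⟩
    have hu2 : Real.log 2 ≤ u := by
      rw [hudef]
      apply Real.log_le_log (by norm_num)
      have : (0:ℝ) ≤ (n:ℝ) := Nat.cast_nonneg n
      linarith
    have hupos : 0 < u := lt_of_lt_of_le hlog2pos hu2
    have hubnn : 0 ≤ u ^ β := Real.rpow_nonneg hupos.le β
    have hL2 : Real.log (2*(n:ℝ)+2) ^ β ≤ 2 * u ^ β := by
      have hnn : (0:ℝ) ≤ (n:ℝ) := Nat.cast_nonneg n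
      have h1 : 2*(n:ℝ)+2 ≤ ((n:ℝ)+2)^2 := by nlinarith
      have h2 : Real.log (2*(n:ℝ)+2) ≤ 2 * u := by
        calc Real.log (2*(n:ℝ)+2) ≤ Real.log (((n:ℝ)+2)^2) :=
              Real.log_le_log (by linarith) h1
          _ = 2 * u := by rw [Real.log_pow, hudef]; push_cast; ring
      calc Real.log (2*(n:ℝ)+2) ^ β ≤ (2*u) ^ β := by
            apply Real.rpow_le_rpow _ h2 hβ0.le
            apply Real.log_nonneg; linarith
        _ = 2 ^ β * u ^ β := Real.mul_rpow (by norm_num) hupos.le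
        _ ≤ 2 * u ^ β := by
            apply mul_le_mul_of_nonneg_right _ hubnn
            calc (2:ℝ) ^ β ≤ 2 ^ (1:ℝ) :=
                  Real.rpow_le_rpow_of_exponent_le (by norm_num) hβ1.le
              _ = 2 := Real.rpow_one 2
    have hμlogup : -Real.log (μ (n+1) w) ≤ Real.log (2*(n:ℝ)+2) ^ β + Real.log Cw := by
      have h1 := hμlow n
      have h2 : 0 < Real.exp (-(Real.log (2*(n:ℝ)+2) ^ β)) / Cw := by positivity
      have h3 := Real.log_le_log h2 h1
      rw [Real.log_div (Real.exp_pos _).ne' hCwpos.ne', Real.log_exp] at h3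
      linarith
    have hlogM : Real.log M ≤ Real.log (2*Cs) - Real.log d + Real.log Cw
        + Real.log (2*(n:ℝ)+2) ^ β := by
      have h2Cs : (2*Cs) ≠ 0 := by positivity
      rw [hMdef, Real.log_div h2Cs htpos.ne', htdef,
        Real.log_mul hd0.ne' (hμpos (n+1)).ne']
      linarith [hμlogup]
    have hlogv : Real.log v ≤ K * u ^ β := by
      have hub2 : Real.log 2 ^ β ≤ u ^ β :=
        Real.rpow_le_rpow hlog2pos.le hu2 hβ0.le
      have hmax0 : max A5 0 ≤ max A5 0 / Real.log 2 ^ β * u ^ β := by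
        calc max A5 0 = max A5 0 / Real.log 2 ^ β * Real.log 2 ^ β := by
              rw [div_mul_cancel₀ _ hlog2b.ne']
          _ ≤ max A5 0 / Real.log 2 ^ β * u ^ β := by
              apply mul_le_mul_of_nonneg_left hub2
              exact div_nonneg (le_max_right _ _) hlog2b.le
      have hKexp : K * u ^ β = max A5 0 / Real.log 2 ^ β * u ^ β + 4 * u ^ β := by
        rw [hKdef]; ring
      rcases max_cases B ((M/c)^2) with ⟨h1, _⟩ | ⟨h1, _⟩
      · rw [hvdef, h1, hKexp]
        have hBA : Real.log B ≤ max A5 0 := by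
          rw [hA5def]
          exact le_trans (le_max_left _ _) (le_max_left _ _)
        linarith [hubnn, hmax0, hBA]
      · rw [hvdef, h1, hKexp]
        have hlogsq : Real.log ((M/c)^2) = 2 * (Real.log M - Real.log c) := by
          rw [Real.log_pow, Real.log_div hMpos.ne' hcpos.ne']
          push_cast; ring
        rw [hlogsq]
        have hA3le : A3 ≤ max A5 0 := by
          rw [hA5def]
          exact le_trans (le_max_right _ _) (le_max_left _ _)
        linarith [hlogM, hL2, hmax0, hA3le, hubnn, hA3def.le, hA3def.ge]
    have hlogv0 : 0 ≤ Real.log v := Real.log_nonneg hv1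
    have hrp : Real.log v ^ ν ≤ K ^ ν * u ^ σ := by
      calc Real.log v ^ ν ≤ (K * u ^ β) ^ ν :=
            Real.rpow_le_rpow hlogv0 hlogv (by linarith)
        _ = K ^ ν * (u ^ β) ^ ν := Real.mul_rpow hKpos.le hubnn
        _ = K ^ ν * u ^ σ := by rw [hσdef, ← Real.rpow_mul hupos.le]
    have hfin : cunder * Real.log v ^ ν ≤ u := by
      have h1 : cunder * Real.log v ^ ν ≤ C1 * u ^ σ := by
        rw [hC1def]
        calc cunder * Real.log v ^ ν ≤ cunder * (K ^ ν * u ^ σ) :=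
              mul_le_mul_of_nonneg_left hrp hcunder.le
          _ = cunder * K ^ ν * u ^ σ := by ring
      have hNn : C1 ≤ u ^ (1-σ) := by rw [hudef]; exact hN n hn
      have h2 : C1 * u ^ σ ≤ u ^ (1-σ) * u ^ σ :=
        mul_le_mul_of_nonneg_right hNn (Real.rpow_nonneg hupos.le σ)
      have h3 : u ^ (1-σ) * u ^ σ = u := by
        rw [← Real.rpow_add hupos, sub_add_cancel, Real.rpow_one]
      linarith
    have hnum : ((n:ℝ)+2)⁻¹ ≤ Real.exp (-cunder * Real.log v ^ ν) := by
      have h1 : -u ≤ -cunder * Real.log v ^ ν := by rw [neg_mul]; linarith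
      calc ((n:ℝ)+2)⁻¹ = Real.exp (-u) := by
            rw [Real.exp_neg, hudef, Real.exp_log (by positivity)]
        _ ≤ Real.exp (-cunder * Real.log v ^ ν) := Real.exp_le_exp.2 h1
    -- final chain
    calc ENNReal.ofReal (1 / (2 * ((n:ℝ) + 2)))
        = ENNReal.ofReal (((n:ℝ)+2)⁻¹) / 2 := by
          rw [show (1:ℝ) / (2 * ((n:ℝ)+2)) = ((n:ℝ)+2)⁻¹ / 2 by
            rw [one_div, mul_inv]; ring]
          rw [ENNReal.ofReal_div_of_pos (by norm_num), ENNReal.ofReal_ofNat]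
      _ ≤ ENNReal.ofReal (Real.exp (-cunder * Real.log v ^ ν)) / 2 :=
          ENNReal.div_le_div_right (ENNReal.ofReal_le_ofReal hnum) 2
      _ ≤ ℙ {ω | v ≤ W ω} / 2 := ENNReal.div_le_div_right htailv 2
      _ ≤ ℙ {ω | P ω < t} := hmk
  exact tsum_eq_top_of_harmonic_le _ N key
end

section
/- Let α > 1 and p > 1 satisfy (α−1)(p−1) < 1, fix r > 0, d ∈ (0,1) and ε > 0, and for n ∈ ℕ set ν_n := d·∑_{j=n+1}^∞ 1/(r·j^p). Let R be a nonnegative random variable with P(R ≥ x) ≥ x^{−(α−1)} for all x ≥ 1. Then ∑_{n=2}^∞ E[∏_{j=1}^∞ (R·j^p)/(R·j^p + (1+ε)·ν_n^{−1}·log n)] = ∞, where the infinite product inside the expectation is the limit of the partial products (each factor lies in [0,1), so the limit exists in [0,1]). -/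
/-!
On the event `R ≥ T n`, where `T n = max 1 (L n)` and `L n = (1 + ε) * (ν (n + 2))⁻¹ * log (n + 2)`,
every factor `R j^p / (R j^p + L n)` is at least `j^p / (j^p + 1) ≥ exp (-j^(-p))`, so the infinite
product is at least `c = exp (-∑ j^(-p)) > 0` and the `n`-th expectation is at least
`c * ℙ (R ≥ T n) ≥ c * (T n)^(-(α-1))`. Since `(ν m)⁻¹ = O(m^(p-1))`, we get `T n = O(n^γ)` for
every `γ > p - 1`; choosing `γ (α - 1) < 1` makes `∑ (T n)^(-(α-1))` diverge.
-/

open MeasureTheory ProbabilityTheory Real Finset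

lemma exp_neg_inv_le_mul_div_mul_add {J x L : ℝ} (hJ : 0 < J) (hx : 0 < x) (hL : 0 ≤ L)
    (hLx : L ≤ x) : exp (-J⁻¹) ≤ x * J / (x * J + L) := by
  calc exp (-J⁻¹) ≤ J / (J + 1) := by
        rw [exp_neg, show J / (J + 1) = (1 + J⁻¹)⁻¹ by field_simp]
        exact inv_anti₀ (by positivity) (by linarith [add_one_le_exp J⁻¹])
    _ = x * J / (x * J + x) := by rw [← mul_add_one, mul_div_mul_left _ _ hx.ne']
    _ ≤ x * J / (x * J + L) :=
        div_le_div_of_nonneg_left (by positivity) (by positivity) (by linarith)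

lemma exp_neg_tsum_inv_le_iInf_prod {a : ℕ → ℝ} (ha : ∀ j, 0 < a j)
    (hsum : Summable fun j => (a j)⁻¹) {x L : ℝ} (hx : 0 < x) (hL : 0 ≤ L) (hLx : L ≤ x) :
    exp (-∑' j, (a j)⁻¹) ≤ ⨅ N : ℕ, ∏ j ∈ range N, x * a j / (x * a j + L) := by
  refine le_ciInf fun N => ?_
  calc exp (-∑' j, (a j)⁻¹) ≤ exp (-∑ j ∈ range N, (a j)⁻¹) :=
        exp_le_exp.mpr <| neg_le_neg <|
          hsum.sum_le_tsum _ fun j _ => (inv_pos.mpr (ha j)).le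
    _ = ∏ j ∈ range N, exp (-(a j)⁻¹) := by rw [← sum_neg_distrib, exp_sum]
    _ ≤ ∏ j ∈ range N, x * a j / (x * a j + L) :=
        prod_le_prod (fun _ _ => (exp_pos _).le)
          fun j _ => exp_neg_inv_le_mul_div_mul_add (ha j) hx hL hLx

lemma inv_tsum_one_div_mul_rpow_tail_le {p r : ℝ} (hp : 1 < p) (hr : 0 < r) {m : ℕ}
    (hm : 1 ≤ m) :
    (∑' j : ℕ, 1 / (r * ((m + 1 + j : ℕ) : ℝ) ^ p))⁻¹ ≤ r * 2 ^ p * (m : ℝ) ^ (p - 1) := by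
  have hm0 : (0 : ℝ) < m := by exact_mod_cast hm
  have hsum : Summable fun j : ℕ => 1 / (r * ((m + 1 + j : ℕ) : ℝ) ^ p) := by
    refine (((summable_nat_add_iff (m + 1)).mpr (summable_nat_rpow_inv.mpr hp)).mul_left r⁻¹).congr
      fun j => ?_
    rw [add_comm j, one_div, mul_inv]
  have hterm : ∀ j ∈ range m,
      1 / (r * (2 * (m : ℝ)) ^ p) ≤ 1 / (r * ((m + 1 + j : ℕ) : ℝ) ^ p) := by
    intro j hj
    have hjm : ((m + 1 + j : ℕ) : ℝ) ≤ 2 * m := by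
      have := mem_range.mp hj
      exact_mod_cast (by omega : m + 1 + j ≤ 2 * m)
    gcongr
  have hlow : (r * 2 ^ p * (m : ℝ) ^ (p - 1))⁻¹ ≤ ∑' j : ℕ, 1 / (r * ((m + 1 + j : ℕ) : ℝ) ^ p) :=
    calc (r * 2 ^ p * (m : ℝ) ^ (p - 1))⁻¹ = ∑ _j ∈ range m, 1 / (r * (2 * (m : ℝ)) ^ p) := by
          rw [sum_const, card_range, nsmul_eq_mul, mul_rpow (by norm_num) hm0.le,
            rpow_sub_one hm0.ne']
          field_simp
      _ ≤ ∑ j ∈ range m, 1 / (r * ((m + 1 + j : ℕ) : ℝ) ^ p) := sum_le_sum hterm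
      _ ≤ _ := hsum.sum_le_tsum _ fun j _ => by positivity
  exact inv_le_of_inv_le₀ (by positivity) hlow

lemma not_summable_rpow_neg_of_le_mul_rpow {T : ℕ → ℝ} {β γ C : ℝ} (hβ : 0 < β)
    (hγβ : γ * β ≤ 1) (hT : ∀ n, 0 < T n) (hTC : ∀ n, T n ≤ C * ((n : ℝ) + 2) ^ γ) :
    ¬Summable fun n => T n ^ (-β) := by
  have hC : 0 < C := pos_of_mul_pos_left ((hT 0).trans_le (hTC 0)) (by positivity)
  intro hsum
  have hshift : Summable fun n : ℕ => ((n : ℝ) + 2) ^ (-(γ * β)) := by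
    refine (hsum.mul_left (C ^ β)).of_nonneg_of_le (fun n => by positivity) fun n => ?_
    have hn : (0 : ℝ) < n + 2 := by positivity
    calc ((n : ℝ) + 2) ^ (-(γ * β)) = C ^ β * (C * ((n : ℝ) + 2) ^ γ) ^ (-β) := by
          rw [mul_rpow hC.le (by positivity), ← rpow_mul hn.le, rpow_neg hC.le, ← mul_assoc,
            mul_inv_cancel₀ (by positivity), one_mul, mul_neg]
      _ ≤ C ^ β * T n ^ (-β) := mul_le_mul_of_nonneg_left
          (rpow_le_rpow_of_nonpos (hT n) (hTC n) (neg_nonpos.mpr hβ.le)) (by positivity)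
  have := summable_nat_rpow.mp ((summable_nat_add_iff 2).mp (by exact_mod_cast hshift))
  linarith

lemma ENNReal.tsum_ofReal_eq_top_of_not_summable {f : ℕ → ℝ} (hf : ∀ n, 0 ≤ f n)
    (h : ¬Summable f) : ∑' n, ENNReal.ofReal (f n) = ⊤ := by
  by_contra hne
  exact h <| (ENNReal.summable_toReal hne).congr fun n => ENNReal.toReal_ofReal (hf n)

lemma ofReal_mul_measure_le_lintegral_ofReal {Ω : Type*} [MeasurableSpace Ω] {μ : Measure Ω}
    {A : Set Ω} (hA : MeasurableSet A) {c : ℝ} {f : Ω → ℝ} (hf : ∀ ω ∈ A, c ≤ f ω) :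
    ENNReal.ofReal c * μ A ≤ ∫⁻ ω, ENNReal.ofReal (f ω) ∂μ :=
  calc ENNReal.ofReal c * μ A = ∫⁻ ω, A.indicator (fun _ => ENNReal.ofReal c) ω ∂μ :=
        (lintegral_indicator_const hA _).symm
    _ ≤ ∫⁻ ω, ENNReal.ofReal (f ω) ∂μ := lintegral_mono fun ω => by
        by_cases hω : ω ∈ A
        · simpa [hω] using ENNReal.ofReal_le_ofReal (hf ω hω)
        · simp [hω]

lemma ofReal_exp_mul_measure_le_lintegral_iInf_prod {Ω : Type*} [MeasurableSpace Ω]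
    {μ : Measure Ω} {R : Ω → ℝ} (hR : Measurable R) {a : ℕ → ℝ} (ha : ∀ j, 0 < a j)
    (hsum : Summable fun j => (a j)⁻¹) {L : ℝ} (hL : 0 ≤ L) :
    ENNReal.ofReal (exp (-∑' j, (a j)⁻¹)) * μ {ω | max 1 L ≤ R ω} ≤
      ∫⁻ ω, ENNReal.ofReal (⨅ N : ℕ, ∏ j ∈ range N, R ω * a j / (R ω * a j + L)) ∂μ :=
  ofReal_mul_measure_le_lintegral_ofReal (hR measurableSet_Ici) fun _ hω =>
    exp_neg_tsum_inv_le_iInf_prod ha hsum (one_pos.trans_le ((le_max_left _ _).trans hω)) hL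
      ((le_max_right _ _).trans hω)

-- `ν_m⁻¹ = O(m^(p-1))` and `log x ≤ x^s / s` with `s = γ - (p - 1)`.
lemma inv_mul_tsum_tail_mul_log_le {p r d γ : ℝ} (hp : 1 < p) (hr : 0 < r) (hd : 0 < d)
    (hγ : p - 1 < γ) (n : ℕ) :
    (d * ∑' j : ℕ, 1 / (r * ((n + 2 + 1 + j : ℕ) : ℝ) ^ p))⁻¹ * log (n + 2) ≤
      r * 2 ^ p / d / (γ - (p - 1)) * ((n : ℝ) + 2) ^ γ := by
  have hn : (0 : ℝ) < n + 2 := by positivity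
  calc (d * ∑' j : ℕ, 1 / (r * ((n + 2 + 1 + j : ℕ) : ℝ) ^ p))⁻¹ * log (n + 2)
      ≤ d⁻¹ * (r * 2 ^ p * ((n : ℝ) + 2) ^ (p - 1))
          * (((n : ℝ) + 2) ^ (γ - (p - 1)) / (γ - (p - 1))) := by
        rw [mul_inv]
        gcongr
        · exact log_nonneg (by linarith)
        · exact_mod_cast inv_tsum_one_div_mul_rpow_tail_le hp hr (m := n + 2) (by omega)
        · exact log_le_rpow_div hn.le (by linarith)
    _ = r * 2 ^ p / d / (γ - (p - 1)) * ((n : ℝ) + 2) ^ γ := by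
        rw [show γ = p - 1 + (γ - (p - 1)) by ring, rpow_add hn, add_sub_cancel_left]
        ring

theorem stmt_19_general
    {Ω : Type*} [MeasureSpace Ω] [IsProbabilityMeasure (ℙ : Measure Ω)]
    (α p : ℝ) (hα : 1 < α) (hp : 1 < p) (hcond : (α - 1) * (p - 1) < 1)
    (r d ε : ℝ) (hr : 0 < r) (hd0 : 0 < d) (hε : 0 < ε)
    (ν : ℕ → ℝ)
    (hν : ∀ n : ℕ, ν n = d * ∑' j : ℕ, 1 / (r * ((n + 1 + j : ℕ) : ℝ) ^ p))
    (R : Ω → ℝ) (hRmeas : Measurable R)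
    (htail : ∀ x : ℝ, 1 ≤ x → x ^ (-(α - 1)) ≤ (ℙ {ω | x ≤ R ω}).toReal) :
    ∑' n : ℕ, ∫⁻ ω,
        ENNReal.ofReal (⨅ N : ℕ, ∏ j ∈ Finset.range N,
          R ω * ((j + 1 : ℕ) : ℝ) ^ p /
            (R ω * ((j + 1 : ℕ) : ℝ) ^ p + (1 + ε) * (ν (n + 2))⁻¹ * Real.log (n + 2)))
        ∂ℙ = ⊤ := by
  set L : ℕ → ℝ := fun n => (1 + ε) * (ν (n + 2))⁻¹ * log (n + 2)
  set T : ℕ → ℝ := fun n => max 1 (L n)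
  obtain ⟨γ, hpγ, hγα⟩ : ∃ γ, p - 1 < γ ∧ γ * (α - 1) < 1 := by
    obtain ⟨γ, h₁, h₂⟩ := exists_between ((lt_div_iff₀' (by linarith)).mpr hcond)
    exact ⟨γ, h₁, (lt_div_iff₀ (by linarith)).mp h₂⟩
  set K := (1 + ε) * (r * 2 ^ p / d / (γ - (p - 1)))
  have hTK (n : ℕ) : T n ≤ max 1 K * ((n : ℝ) + 2) ^ γ := by
    have h₁ : 1 ≤ ((n : ℝ) + 2) ^ γ :=
      one_le_rpow (by linarith [n.cast_nonneg (α := ℝ)]) (by linarith)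
    have h₂ : L n ≤ K * ((n : ℝ) + 2) ^ γ := by
      simp only [L, K, mul_assoc, hν]
      exact mul_le_mul_of_nonneg_left (inv_mul_tsum_tail_mul_log_le hp hr hd0 hpγ n) (by linarith)
    refine max_le ?_ (h₂.trans ?_) <;> nlinarith [le_max_left 1 K, le_max_right 1 K]
  have hdiv : ¬Summable fun n => T n ^ (-(α - 1)) :=
    not_summable_rpow_neg_of_le_mul_rpow (by linarith) hγα.le
      (fun _ => lt_max_of_lt_left one_pos) hTK
  have hL0 (n : ℕ) : 0 ≤ L n := by
    have : 0 ≤ ν (n + 2) := hν _ ▸ mul_nonneg hd0.le (tsum_nonneg fun j => by positivity)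
    have : 0 ≤ log ((n : ℝ) + 2) := log_nonneg (by linarith [n.cast_nonneg (α := ℝ)])
    positivity
  set c := exp (-∑' j : ℕ, (((j + 1 : ℕ) : ℝ) ^ p)⁻¹)
  have hterm (n : ℕ) : ENNReal.ofReal (c * T n ^ (-(α - 1))) ≤ ∫⁻ ω,
      ENNReal.ofReal (⨅ N : ℕ, ∏ j ∈ range N,
        R ω * ((j + 1 : ℕ) : ℝ) ^ p / (R ω * ((j + 1 : ℕ) : ℝ) ^ p + L n)) ∂ℙ := by
    rw [ENNReal.ofReal_mul (exp_pos _).le]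
    refine le_trans ?_ (ofReal_exp_mul_measure_le_lintegral_iInf_prod hRmeas
      (fun j => by positivity) ((summable_nat_add_iff 1).mpr (summable_nat_rpow_inv.mpr hp)) (hL0 n))
    gcongr
    exact ENNReal.ofReal_le_of_le_toReal (htail _ (le_max_left _ _))
  have htop : ∑' n, ENNReal.ofReal (c * T n ^ (-(α - 1))) = ⊤ :=
    ENNReal.tsum_ofReal_eq_top_of_not_summable (fun n => by positivity)
      ((summable_mul_left_iff (exp_pos _).ne').not.mpr hdiv)
  exact top_le_iff.mp (htop ▸ ENNReal.tsum_le_tsum hterm)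

/-- **Equation (eq:counter-divergence-cond)** from the proof of Claim 5.4 (underlying
Theorem 2.8). Let `(α−1)(p−1) < 1`, `r > 0`, `d ∈ (0,1)`, `ε > 0`, and set
`ν n = d·∑_{j=n+1}^∞ 1/(r·j^p)`. If `R ≥ 0` satisfies `P(R ≥ x) ≥ x^{−(α−1)}` for `x ≥ 1`,
then `∑_{n=2}^∞ E[∏_{j=1}^∞ (R·j^p)/(R·j^p + (1+ε)·(ν n)⁻¹·log n)] = ∞`, the infinite
product being the limit (infimum) of the partial products, each factor in `[0,1)`. -/
theorem stmt_19
    {Ω : Type*} [MeasureSpace Ω] [IsProbabilityMeasure (ℙ : Measure Ω)]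
    (α p : ℝ) (hα : 1 < α) (hp : 1 < p) (hcond : (α - 1) * (p - 1) < 1)
    (r d ε : ℝ) (hr : 0 < r) (hd0 : 0 < d) (hd1 : d < 1) (hε : 0 < ε)
    (ν : ℕ → ℝ)
    (hν : ∀ n : ℕ, ν n = d * ∑' j : ℕ, 1 / (r * ((n + 1 + j : ℕ) : ℝ) ^ p))
    (R : Ω → ℝ) (hRmeas : Measurable R) (hRnonneg : ∀ ω, 0 ≤ R ω)
    (htail : ∀ x : ℝ, 1 ≤ x → x ^ (-(α - 1)) ≤ (ℙ {ω | x ≤ R ω}).toReal) :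
    ∑' n : ℕ, ∫⁻ ω,
        ENNReal.ofReal (⨅ N : ℕ, ∏ j ∈ Finset.range N,
          R ω * ((j + 1 : ℕ) : ℝ) ^ p /
            (R ω * ((j + 1 : ℕ) : ℝ) ^ p + (1 + ε) * (ν (n + 2))⁻¹ * Real.log (n + 2)))
        ∂ℙ = ⊤ :=
  stmt_19_general α p hα hp hcond r d ε hr hd0 hε ν hν R hRmeas htail
end
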